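/- arXiv:1804.06355 — 9 statements merged into one kernel-verified Lean document; each statement's English description precedes it below -/
import Mathlib

section
/- Let f : 2^N → ℝ be a monotone submodular function, let S ⊆ N satisfy f(S) ≤ OPT, let ε ∈ (0,1), and let ρ ≤ r be positive integers. Let R_1, …, R_ρ be random subsets of N defined on a common finite probability space such that E[f_S(R_i)] < ((1−ε)/r)·(OPT − f(S)) for every i ∈ {1,…,ρ}. Then E[f_{S ∪ (R_1 ∪ ⋯ ∪ R_ρ)}(O)] ≥ (1 − ρ/r)·(OPT − f(S)). -/
open Finset

/-- The marginal contribution `f_S(X) = f(S ∪ X) - f(S)`. -/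
noncomputable def marg {α : Type*} [DecidableEq α] (f : Finset α → ℝ) (S X : Finset α) : ℝ :=
  f (S ∪ X) - f S

section Aux

variable {α : Type*} [DecidableEq α] (f : Finset α → ℝ)

lemma sub_insert (hmono : ∀ A B : Finset α, A ⊆ B → f A ≤ f B)
    (hsub : ∀ A B : Finset α, A ⊆ B → ∀ a ∉ B,
      f (insert a B) - f B ≤ f (insert a A) - f A)
    {A B : Finset α} (hAB : A ⊆ B) (a : α) :
    f (insert a B) - f B ≤ f (insert a A) - f A := by
  by_cases ha : a ∈ B
  · rw [Finset.insert_eq_self.mpr ha]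
    have := hmono A (insert a A) (Finset.subset_insert a A)
    linarith
  · exact hsub A B hAB a ha

lemma sub_union (hmono : ∀ A B : Finset α, A ⊆ B → f A ≤ f B)
    (hsub : ∀ A B : Finset α, A ⊆ B → ∀ a ∉ B,
      f (insert a B) - f B ≤ f (insert a A) - f A)
    {A B : Finset α} (hAB : A ⊆ B) (X : Finset α) :
    f (B ∪ X) - f B ≤ f (A ∪ X) - f A := by
  induction X using Finset.induction_on with
  | empty => simp
  | insert a X hx ih =>
    have h1 : f (insert a (B ∪ X)) - f (B ∪ X) ≤ f (insert a (A ∪ X)) - f (A ∪ X) :=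
      sub_insert f hmono hsub (Finset.union_subset_union hAB (Finset.Subset.refl X)) a
    rw [Finset.union_insert, Finset.union_insert]
    linarith

lemma marg_biUnion {Ω : Type*} (hmono : ∀ A B : Finset α, A ⊆ B → f A ≤ f B)
    (hsub : ∀ A B : Finset α, A ⊆ B → ∀ a ∉ B,
      f (insert a B) - f B ≤ f (insert a A) - f A)
    (S : Finset α) (R : ℕ → Ω → Finset α) (ω : Ω) (m : ℕ) :
    f (S ∪ (Finset.Icc 1 m).biUnion (fun i => R i ω)) - f S ≤
      ∑ i ∈ Finset.Icc 1 m, marg f S (R i ω) := by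
  induction m with
  | zero => simp
  | succ m ih =>
    have hnot : m + 1 ∉ Finset.Icc 1 m := by simp
    have hIcc : Finset.Icc 1 (m + 1) = insert (m + 1) (Finset.Icc 1 m) := by
      ext x; simp [Finset.mem_Icc]; omega
    rw [hIcc, Finset.sum_insert hnot, Finset.biUnion_insert]
    set U := (Finset.Icc 1 m).biUnion (fun i => R i ω) with hU
    have heq : S ∪ (R (m + 1) ω ∪ U) = (S ∪ U) ∪ R (m + 1) ω := by
      ext x; simp [or_comm, or_assoc, or_left_comm]
    rw [heq]
    have h1 : f ((S ∪ U) ∪ R (m + 1) ω) - f (S ∪ U) ≤ f (S ∪ R (m + 1) ω) - f S :=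
      sub_union f hmono hsub (Finset.subset_union_left) _
    have h2 : marg f S (R (m + 1) ω) = f (S ∪ R (m + 1) ω) - f S := rfl
    linarith

end Aux

/-- Lemma 1 of the paper: if `Filter` has not terminated after `ρ`
iterations, the expected marginal contribution of the optimal solution `O` to
`S ∪ R₁ ∪ ⋯ ∪ R_ρ` is at least `(1 - ρ/r)(OPT - f(S))`. -/
theorem stmt0 {α : Type*} [Fintype α] [DecidableEq α]
    (f : Finset α → ℝ)
    (hmono : ∀ A B : Finset α, A ⊆ B → f A ≤ f B)
    (hsub : ∀ A B : Finset α, A ⊆ B → ∀ a ∉ B,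
      f (insert a B) - f B ≤ f (insert a A) - f A)
    (k : ℕ) (hk1 : 1 ≤ k) (hkn : k ≤ Fintype.card α)
    (OPT : ℝ) (hOPTub : ∀ T : Finset α, T.card ≤ k → f T ≤ OPT)
    (O : Finset α) (hOcard : O.card ≤ k) (hOval : f O = OPT)
    (S : Finset α) (hS : f S ≤ OPT)
    (ε : ℝ) (hε0 : 0 < ε) (hε1 : ε < 1)
    (ρ r : ℕ) (hρ : 1 ≤ ρ) (hρr : ρ ≤ r)
    (Ω : Type*) [Fintype Ω] (p : Ω → ℝ) (hp : ∀ ω, 0 ≤ p ω) (hp1 : ∑ ω, p ω = 1)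
    (R : ℕ → Ω → Finset α)
    (hR : ∀ i, 1 ≤ i → i ≤ ρ →
      ∑ ω, p ω * marg f S (R i ω) < ((1 - ε) / r) * (OPT - f S)) :
    (1 - (ρ : ℝ) / r) * (OPT - f S) ≤
      ∑ ω, p ω * marg f (S ∪ (Finset.Icc 1 ρ).biUnion (fun i => R i ω)) O := by
  have hr0 : (0 : ℝ) < r := by exact_mod_cast Nat.lt_of_lt_of_le (by omega) hρr
  have hgap : 0 ≤ OPT - f S := by linarith
  -- pointwise bound
  have hpt : ∀ ω, (OPT - f S) - ∑ i ∈ Finset.Icc 1 ρ, marg f S (R i ω) ≤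
      marg f (S ∪ (Finset.Icc 1 ρ).biUnion (fun i => R i ω)) O := by
    intro ω
    set U := (Finset.Icc 1 ρ).biUnion (fun i => R i ω) with hU
    have h1 : f (S ∪ U) - f S ≤ ∑ i ∈ Finset.Icc 1 ρ, marg f S (R i ω) :=
      marg_biUnion f hmono hsub S R ω ρ
    have h2 : f O ≤ f ((S ∪ U) ∪ O) := hmono _ _ (Finset.subset_union_right)
    have h3 : marg f (S ∪ U) O = f ((S ∪ U) ∪ O) - f (S ∪ U) := rfl
    rw [h3]
    linarith [hOval]
  -- sum the pointwise bound
  have hsum : ∑ ω, p ω * ((OPT - f S) - ∑ i ∈ Finset.Icc 1 ρ, marg f S (R i ω)) ≤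
      ∑ ω, p ω * marg f (S ∪ (Finset.Icc 1 ρ).biUnion (fun i => R i ω)) O :=
    Finset.sum_le_sum (fun ω _ => mul_le_mul_of_nonneg_left (hpt ω) (hp ω))
  refine le_trans ?_ hsum
  have hsplit : ∑ ω, p ω * ((OPT - f S) - ∑ i ∈ Finset.Icc 1 ρ, marg f S (R i ω)) =
      (OPT - f S) - ∑ i ∈ Finset.Icc 1 ρ, ∑ ω, p ω * marg f S (R i ω) := by
    have h1 : ∑ ω, p ω * ((OPT - f S) - ∑ i ∈ Finset.Icc 1 ρ, marg f S (R i ω))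
        = ∑ ω, (p ω * (OPT - f S) - ∑ i ∈ Finset.Icc 1 ρ, p ω * marg f S (R i ω)) := by
      refine Finset.sum_congr rfl fun ω _ => ?_
      rw [mul_sub, Finset.mul_sum]
    rw [h1, Finset.sum_sub_distrib, ← Finset.sum_mul, hp1, one_mul, Finset.sum_comm]
  rw [hsplit]
  have hbound : ∑ i ∈ Finset.Icc 1 ρ, ∑ ω, p ω * marg f S (R i ω) ≤
      (ρ : ℝ) * (((1 - ε) / r) * (OPT - f S)) := by
    calc ∑ i ∈ Finset.Icc 1 ρ, ∑ ω, p ω * marg f S (R i ω)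
        ≤ ∑ _i ∈ Finset.Icc 1 ρ, ((1 - ε) / r) * (OPT - f S) :=
          Finset.sum_le_sum (fun i hi => by
            simp only [Finset.mem_Icc] at hi
            exact le_of_lt (hR i hi.1 hi.2))
      _ = (ρ : ℝ) * (((1 - ε) / r) * (OPT - f S)) := by
          rw [Finset.sum_const, Nat.card_Icc]
          simp [nsmul_eq_mul]
  have hfinal : (ρ : ℝ) * (((1 - ε) / r) * (OPT - f S)) ≤ ((ρ : ℝ) / r) * (OPT - f S) := by
    have hρpos : (0 : ℝ) ≤ ρ := by positivity
    have hnum : (ρ : ℝ) * (1 - ε) ≤ ρ := by nlinarith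
    have : (ρ : ℝ) * ((1 - ε) / r) ≤ (ρ : ℝ) / r := by
      calc (ρ : ℝ) * ((1 - ε) / r) = (ρ : ℝ) * (1 - ε) / r := by ring
        _ ≤ (ρ : ℝ) / r := by gcongr
    calc (ρ : ℝ) * (((1 - ε) / r) * (OPT - f S)) = ((ρ : ℝ) * ((1 - ε) / r)) * (OPT - f S) := by ring
      _ ≤ ((ρ : ℝ) / r) * (OPT - f S) := mul_le_mul_of_nonneg_right this hgap
  linarith
end

section
/- Let f : 2^N → ℝ be a monotone submodular function, let S ⊆ N satisfy f(S) ≤ OPT, let ε ∈ (0,1), and let ρ, r be positive integers with r ≥ 20ρ/ε and r dividing k. Let X_1 = N and let X_2, …, X_{ρ+1} ⊆ N satisfy, for every i ∈ {1,…,ρ}: (a) |X_i| ≥ k/r; (b) E_{R∼U(X_i)}[f_S(R)] < ((1−ε)/r)·(OPT − f(S)); and (c) {a ∈ X_i : E_{R∼U(X_i)}[f_{S∪(R\{a})}(a)] ≥ (1+ε/2)(1−ε)(OPT − f(S))/k} ⊆ X_{i+1} ⊆ X_i. Then f_S(X_{ρ+1}) ≥ (1/r)·(1−ε)·(OPT −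 f(S)). -/
open Finset

/-- The expectation of `g(R)` where `R` is a uniformly random subset of `X` of size `t`. -/
noncomputable def expUnif {α : Type*} [DecidableEq α] (X : Finset α) (t : ℕ)
    (g : Finset α → ℝ) : ℝ :=
  (∑ R ∈ Finset.powersetCard t X, g R) / (Finset.powersetCard t X).card

section auxlem
variable {α : Type*} [DecidableEq α] {f : Finset α → ℝ}

lemma aux_sub_union (hmono : ∀ A B : Finset α, A ⊆ B → f A ≤ f B)
    (hsub : ∀ A B : Finset α, A ⊆ B → ∀ a ∉ B,
      f (insert a B) - f B ≤ f (insert a A) - f A)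
    (R : Finset α) : ∀ A B : Finset α, A ⊆ B → f (B ∪ R) - f B ≤ f (A ∪ R) - f A := by
  induction R using Finset.induction_on with
  | empty => intro A B _; simp
  | @insert a R haR ih =>
      intro A B hAB
      have h1 : f (insert a (B ∪ R)) - f (B ∪ R) ≤ f (insert a (A ∪ R)) - f (A ∪ R) := by
        by_cases hm : a ∈ B ∪ R
        · rw [insert_eq_self.mpr hm]
          have := hmono (A ∪ R) (insert a (A ∪ R)) (subset_insert _ _)
          linarith
        · exact hsub (A ∪ R) (B ∪ R) (union_subset_union_left hAB) a hm
      have h2 := ih A B hAB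
      rw [union_insert, union_insert]
      linarith

lemma aux_tele (hmono : ∀ A B : Finset α, A ⊆ B → f A ≤ f B)
    (hsub : ∀ A B : Finset α, A ⊆ B → ∀ a ∉ B,
      f (insert a B) - f B ≤ f (insert a A) - f A)
    (S R : Finset α) :
    ∀ (D B : Finset α), S ∪ R ⊆ B →
      f (B ∪ D) - f B ≤ ∑ a ∈ D, (f (insert a (S ∪ R.erase a)) - f (S ∪ R.erase a)) := by
  intro D
  induction D using Finset.induction_on with
  | empty => intro B _; simp
  | @insert b D hbD ih =>
      intro B hB
      rw [sum_insert hbD, union_insert]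
      have h2 := ih B hB
      have h1 : f (insert b (B ∪ D)) - f (B ∪ D)
          ≤ f (insert b (S ∪ R.erase b)) - f (S ∪ R.erase b) := by
        by_cases hm : b ∈ B ∪ D
        · rw [insert_eq_self.mpr hm]
          have := hmono (S ∪ R.erase b) (insert b (S ∪ R.erase b)) (subset_insert _ _)
          linarith
        · refine hsub (S ∪ R.erase b) (B ∪ D) ?_ b hm
          refine union_subset ?_ ?_
          · exact (subset_union_left.trans hB).trans subset_union_left
          · exact ((erase_subset _ _).trans (subset_union_right.trans hB)).trans subset_union_left
      linarith

lemma aux_key (hmono : ∀ A B : Finset α, A ⊆ B → f A ≤ f B)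
    (hsub : ∀ A B : Finset α, A ⊆ B → ∀ a ∉ B,
      f (insert a B) - f B ≤ f (insert a A) - f A)
    (S R C D : Finset α) :
    f (S ∪ (C ∪ D)) - f (S ∪ C) ≤ (f (S ∪ R) - f S)
      + ∑ a ∈ D, (f (insert a (S ∪ R.erase a)) - f (S ∪ R.erase a)) := by
  have h1 : f (S ∪ (C ∪ D)) ≤ f ((S ∪ C ∪ R) ∪ D) := by
    apply hmono
    intro x hx
    simp only [mem_union] at hx ⊢
    tauto
  have h2 := aux_sub_union hmono hsub R S (S ∪ C) subset_union_left
  have h3 := aux_tele hmono hsub S R D (S ∪ C ∪ R) (by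
    intro x hx
    simp only [mem_union] at hx ⊢
    tauto)
  linarith

end auxlem

/-- Lemma 2 of the paper: the elements `X_{ρ+1}` surviving `ρ` iterations
of `Filter(N, S, r)` satisfy `f_S(X_{ρ+1}) ≥ (1/r)(1-ε)(OPT - f(S))`. -/
theorem stmt1 {α : Type*} [Fintype α] [DecidableEq α]
    (f : Finset α → ℝ)
    (hmono : ∀ A B : Finset α, A ⊆ B → f A ≤ f B)
    (hsub : ∀ A B : Finset α, A ⊆ B → ∀ a ∉ B,
      f (insert a B) - f B ≤ f (insert a A) - f A)
    (k r : ℕ) (hk1 : 1 ≤ k) (hkn : k ≤ Fintype.card α) (hr : 1 ≤ r) (hrk : r ∣ k)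
    (OPT : ℝ) (hOPTub : ∀ T : Finset α, T.card ≤ k → f T ≤ OPT)
    (hOPTmem : ∃ T : Finset α, T.card ≤ k ∧ f T = OPT)
    (S : Finset α) (hS : f S ≤ OPT)
    (ε : ℝ) (hε0 : 0 < ε) (hε1 : ε < 1)
    (ρ : ℕ) (hρ : 1 ≤ ρ) (hr20 : (20 : ℝ) * ρ / ε ≤ r)
    (X : ℕ → Finset α) (hX1 : X 1 = Finset.univ)
    (ha : ∀ i, 1 ≤ i → i ≤ ρ → k / r ≤ (X i).card)
    (hb : ∀ i, 1 ≤ i → i ≤ ρ →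
      expUnif (X i) (min (k / r) (X i).card) (fun R => marg f S R)
        < ((1 - ε) / r) * (OPT - f S))
    (hc1 : ∀ i, 1 ≤ i → i ≤ ρ → ∀ a ∈ X i,
      (1 + ε / 2) * (1 - ε) * (OPT - f S) / k ≤
        expUnif (X i) (min (k / r) (X i).card)
          (fun R => f (insert a (S ∪ R.erase a)) - f (S ∪ R.erase a)) →
      a ∈ X (i + 1))
    (hc2 : ∀ i, 1 ≤ i → i ≤ ρ → X (i + 1) ⊆ X i) :
    (1 / (r : ℝ)) * (1 - ε) * (OPT - f S) ≤ marg f S (X (ρ + 1)) := by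
  classical
  obtain ⟨O, hOk, hOval⟩ := hOPTmem
  have hrR : (0:ℝ) < r := by exact_mod_cast hr
  have hkR : (0:ℝ) < k := by exact_mod_cast hk1
  have hw0 : (0:ℝ) ≤ OPT - f S := by linarith
  have hτ0 : (0:ℝ) ≤ (1 + ε / 2) * (1 - ε) * (OPT - f S) / k := by
    apply div_nonneg _ hkR.le
    have h1 : (0:ℝ) ≤ 1 - ε := by linarith
    have h2 : (0:ℝ) ≤ 1 + ε / 2 := by linarith
    positivity
  -- per-iteration step
  have hstep : ∀ i, 1 ≤ i → i ≤ ρ →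
      marg f S (O ∩ X i) ≤ marg f S (O ∩ X (i + 1)) + ((1 - ε) / r) * (OPT - f S)
        + (((O ∩ X i).card : ℝ) - ((O ∩ X (i + 1)).card : ℝ))
            * ((1 + ε / 2) * (1 - ε) * (OPT - f S) / k) := by
    intro i hi1 hiρ
    have hminX : min (k / r) (X i).card = k / r := min_eq_left (ha i hi1 hiρ)
    have hPne : (Finset.powersetCard (k / r) (X i)).Nonempty :=
      powersetCard_nonempty.mpr (ha i hi1 hiρ)
    have hn : (0:ℝ) < (Finset.powersetCard (k / r) (X i)).card := by
      exact_mod_cast card_pos.mpr hPne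
    set D : Finset α := (O ∩ X i) \ X (i + 1) with hD
    have hXsub := hc2 i hi1 hiρ
    have hsubOi : O ∩ X (i + 1) ⊆ O ∩ X i :=
      inter_subset_inter (Finset.Subset.refl O) hXsub
    have hunion : (O ∩ X (i + 1)) ∪ D = O ∩ X i := by
      ext a
      simp only [hD, mem_union, mem_inter, mem_sdiff]
      have hia : a ∈ X (i + 1) → a ∈ X i := fun h => hXsub h
      tauto
    have hDeq : D = (O ∩ X i) \ (O ∩ X (i + 1)) := by
      ext a
      simp only [hD, mem_sdiff, mem_inter]
      tauto
    have hDcard : (D.card : ℝ) = ((O ∩ X i).card : ℝ) - ((O ∩ X (i + 1)).card : ℝ) := by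
      rw [hDeq, card_sdiff_of_subset hsubOi]
      have := card_le_card hsubOi
      push_cast [Nat.cast_sub this]
      ring
    have hkeyR : ∀ R : Finset α,
        marg f S (O ∩ X i) - marg f S (O ∩ X (i + 1)) ≤ (f (S ∪ R) - f S)
          + ∑ a ∈ D, (f (insert a (S ∪ R.erase a)) - f (S ∪ R.erase a)) := by
      intro R
      have := aux_key hmono hsub S R (O ∩ X (i + 1)) D
      rw [hunion] at this
      simp only [marg]
      linarith
    have havg : marg f S (O ∩ X i) - marg f S (O ∩ X (i + 1))
        ≤ expUnif (X i) (k / r) (fun R => marg f S R)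
          + ∑ a ∈ D, expUnif (X i) (k / r)
              (fun R => f (insert a (S ∪ R.erase a)) - f (S ∪ R.erase a)) := by
      have hrw : expUnif (X i) (k / r) (fun R => marg f S R)
          + ∑ a ∈ D, expUnif (X i) (k / r)
              (fun R => f (insert a (S ∪ R.erase a)) - f (S ∪ R.erase a))
          = (∑ R ∈ Finset.powersetCard (k / r) (X i), ((f (S ∪ R) - f S)
              + ∑ a ∈ D, (f (insert a (S ∪ R.erase a)) - f (S ∪ R.erase a))))
            / (Finset.powersetCard (k / r) (X i)).card := by
        simp only [expUnif, marg]
        rw [sum_add_distrib, add_div]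
        congr 1
        rw [← sum_div, sum_comm]
      rw [hrw, le_div_iff₀ hn]
      calc (marg f S (O ∩ X i) - marg f S (O ∩ X (i + 1)))
            * (Finset.powersetCard (k / r) (X i)).card
          = ∑ _R ∈ Finset.powersetCard (k / r) (X i),
              (marg f S (O ∩ X i) - marg f S (O ∩ X (i + 1))) := by
            rw [sum_const, nsmul_eq_mul, mul_comm]
        _ ≤ _ := sum_le_sum fun R _ => hkeyR R
    have hexp1 : expUnif (X i) (k / r) (fun R => marg f S R)
        < ((1 - ε) / r) * (OPT - f S) := by
      have := hb i hi1 hiρ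
      rwa [hminX] at this
    have hexp2 : ∀ a ∈ D, expUnif (X i) (k / r)
        (fun R => f (insert a (S ∪ R.erase a)) - f (S ∪ R.erase a))
        ≤ (1 + ε / 2) * (1 - ε) * (OPT - f S) / k := by
      intro a haD
      rw [hDeq] at haD
      simp only [mem_sdiff, mem_inter] at haD
      by_contra hcon
      push_neg at hcon
      have := hc1 i hi1 hiρ a haD.1.2 (by rw [hminX]; exact hcon.le)
      exact haD.2 ⟨haD.1.1, this⟩
    have hsum2 : ∑ a ∈ D, expUnif (X i) (k / r)
        (fun R => f (insert a (S ∪ R.erase a)) - f (S ∪ R.erase a))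
        ≤ (D.card : ℝ) * ((1 + ε / 2) * (1 - ε) * (OPT - f S) / k) := by
      calc _ ≤ ∑ _a ∈ D, (1 + ε / 2) * (1 - ε) * (OPT - f S) / k :=
            sum_le_sum hexp2
        _ = _ := by rw [sum_const, nsmul_eq_mul]
    rw [hDcard] at hsum2
    linarith
  -- telescoping
  have hchain : ∀ j, j ≤ ρ →
      marg f S (O ∩ X 1) ≤ marg f S (O ∩ X (j + 1)) + (j : ℝ) * (((1 - ε) / r) * (OPT - f S))
        + (((O ∩ X 1).card : ℝ) - ((O ∩ X (j + 1)).card : ℝ))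
            * ((1 + ε / 2) * (1 - ε) * (OPT - f S) / k) := by
    intro j
    induction j with
    | zero => intro _; norm_num
    | succ j ih =>
        intro hj
        have h1 := ih (Nat.le_of_succ_le hj)
        have h2 := hstep (j + 1) (Nat.le_add_left 1 j) hj
        push_cast at h1 h2 ⊢
        linarith
  have hfin := hchain ρ le_rfl
  rw [hX1, inter_univ] at hfin
  have hOw : OPT - f S ≤ marg f S O := by
    have := hmono O (S ∪ O) subset_union_right
    simp only [marg]
    linarith
  have hmono2 : marg f S (O ∩ X (ρ + 1)) ≤ marg f S (X (ρ + 1)) := by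
    simp only [marg]
    have := hmono (S ∪ (O ∩ X (ρ + 1))) (S ∪ X (ρ + 1))
      (union_subset_union_right inter_subset_right)
    linarith
  have hcard : ((O.card : ℝ) - ((O ∩ X (ρ + 1)).card : ℝ))
      * ((1 + ε / 2) * (1 - ε) * (OPT - f S) / k)
      ≤ (k : ℝ) * ((1 + ε / 2) * (1 - ε) * (OPT - f S) / k) := by
    apply mul_le_mul_of_nonneg_right _ hτ0
    have h1 : (O.card : ℝ) ≤ k := by exact_mod_cast hOk
    have h2 : (0:ℝ) ≤ ((O ∩ X (ρ + 1)).card : ℝ) := Nat.cast_nonneg _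
    linarith
  have hkτ : (k : ℝ) * ((1 + ε / 2) * (1 - ε) * (OPT - f S) / k)
      = (1 + ε / 2) * (1 - ε) * (OPT - f S) := by
    field_simp
  have h20 : 20 * (ρ : ℝ) ≤ ε * r := by
    rw [div_le_iff₀ hε0] at hr20
    linarith
  have hρR : (1:ℝ) ≤ (ρ : ℝ) := by exact_mod_cast hρ
  have main2 : ((ρ : ℝ) + 1) * (1 - ε) * (OPT - f S) / r ≤ (ε / 2 + ε ^ 2 / 2) * (OPT - f S) := by
    rw [div_le_iff₀ hrR]
    nlinarith [mul_nonneg hw0 (by linarith : (0:ℝ) ≤ ε * r - 20 * ρ),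
      mul_nonneg (mul_nonneg hw0 (by linarith : (0:ℝ) ≤ ε * r - 20 * ρ)) hε0.le,
      mul_nonneg hw0 (by linarith : (0:ℝ) ≤ (ρ : ℝ) - 1),
      mul_nonneg (mul_nonneg hw0 (by linarith : (0:ℝ) ≤ (ρ : ℝ) - 1)) hε0.le,
      mul_nonneg hw0 hε0.le]
  have hdiv : ((ρ : ℝ) + 1) * (1 - ε) * (OPT - f S) / r
      = (ρ : ℝ) * (((1 - ε) / r) * (OPT - f S)) + (1 / (r : ℝ)) * (1 - ε) * (OPT - f S) := by
    field_simp
  rw [hdiv] at main2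
  linarith
end

section
/- Let f : 2^N → ℝ be a monotone submodular function, let S ⊆ N satisfy f(S) ≤ OPT, let ε ∈ (0,1), let ρ := ⌈log_{1+ε/2} n⌉, and let r be a positive integer dividing k with r ≥ 20ρ/ε. Let X_1 = N and, for each i ∈ {1,…,ρ}, let X_{i+1} := {a ∈ X_i : E_{R∼U(X_i)}[f_{S∪(R\{a})}(a)] ≥ (1+ε/2)(1−ε)(OPT − f(S))/k}. Then there exists i ∈ {1,…,ρ+1} such that E_{R∼U(X_i)}[f_S(R)] ≥ ((1−ε)/r)·(OPT − f(S)); that is, the Filter subroutine terminates after at most ⌈log_{1+ε/2} n⌉ + 1 iterations. -/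
open Finset

open Finset

section AuxLemmas
variable {α : Type*} [DecidableEq α]

/-- Marginals are antitone in the base set. -/
lemma aux_marg_antitone (f : Finset α → ℝ)
    (hmono : ∀ A B : Finset α, A ⊆ B → f A ≤ f B)
    (hsub : ∀ A B : Finset α, A ⊆ B → ∀ a ∉ B,
      f (insert a B) - f B ≤ f (insert a A) - f A)
    (B : Finset α) {S C : Finset α} (hSC : S ⊆ C) :
    f (C ∪ B) - f C ≤ f (S ∪ B) - f S := by
  induction B using Finset.induction_on with
  | empty => simp
  | insert b B hb =>
    rw [union_insert, union_insert]
    have h1 : f (insert b (C ∪ B)) - f (C ∪ B) ≤ f (insert b (S ∪ B)) - f (S ∪ B) := by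
      by_cases hbC : b ∈ C ∪ B
      · rw [insert_eq_self.2 hbC]
        have := hmono (S ∪ B) (insert b (S ∪ B)) (subset_insert _ _)
        linarith
      · exact hsub (S ∪ B) (C ∪ B) (union_subset_union hSC (Subset.refl B)) b hbC
    rename_i ih
    linarith

lemma aux_insert (f : Finset α → ℝ)
    (hmono : ∀ A B : Finset α, A ⊆ B → f A ≤ f B)
    (hsub : ∀ A B : Finset α, A ⊆ B → ∀ a ∉ B,
      f (insert a B) - f B ≤ f (insert a A) - f A)
    {S C : Finset α} (hSC : S ⊆ C) (a : α) :
    f (insert a C) - f C ≤ f (insert a S) - f S := by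
  have := aux_marg_antitone f hmono hsub {a} hSC
  rw [Finset.union_comm C {a}, Finset.union_comm S {a}, ← Finset.insert_eq, ← Finset.insert_eq] at this
  exact this

/-- Subadditivity over singleton marginals. -/
lemma aux_sum_insert (f : Finset α → ℝ)
    (hmono : ∀ A B : Finset α, A ⊆ B → f A ≤ f B)
    (hsub : ∀ A B : Finset α, A ⊆ B → ∀ a ∉ B,
      f (insert a B) - f B ≤ f (insert a A) - f A)
    (A B : Finset α) :
    f (B ∪ A) - f B ≤ ∑ a ∈ A, (f (insert a B) - f B) := by
  induction A using Finset.induction_on with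
  | empty => simp
  | @insert a A ha ih =>
    rw [union_insert, sum_insert ha]
    have h1 : f (insert a (B ∪ A)) - f (B ∪ A) ≤ f (insert a B) - f B :=
      aux_insert f hmono hsub subset_union_left a
    linarith

/-- Sum of last marginals lower bound. -/
lemma aux_lastmarg (f : Finset α → ℝ)
    (hmono : ∀ A B : Finset α, A ⊆ B → f A ≤ f B)
    (hsub : ∀ A B : Finset α, A ⊆ B → ∀ a ∉ B,
      f (insert a B) - f B ≤ f (insert a A) - f A)
    (S R : Finset α) :
    ∑ a ∈ R, (f (S ∪ R) - f (S ∪ R.erase a)) ≤ f (S ∪ R) - f S := by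
  induction R using Finset.induction_on with
  | empty => simp
  | @insert a R hane ih =>
    rw [sum_insert hane]
    have e1 : (insert a R).erase a = R := erase_insert hane
    have hterm : ∀ b ∈ R, f (S ∪ insert a R) - f (S ∪ (insert a R).erase b)
        ≤ f (S ∪ R) - f (S ∪ R.erase b) := by
      intro b hb
      have hba : b ≠ a := by rintro rfl; exact hane hb
      have e2 : (insert a R).erase b = insert a (R.erase b) := by
        rw [erase_insert_of_ne hba.symm]
      rw [e2]
      have h := aux_marg_antitone f hmono hsub {b} (show S ∪ R.erase b ⊆ S ∪ insert a (R.erase b) by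
        exact union_subset_union (Subset.refl S) ((subset_insert _ _)))
      have e3 : (S ∪ insert a (R.erase b)) ∪ {b} = S ∪ insert a R := by
        ext x
        simp only [mem_union, mem_insert, mem_erase, mem_singleton]
        constructor
        · rintro ((h|(h|⟨h1,h2⟩))|h) <;> subst_eqs <;> tauto
        · rintro (h|(h|h)) <;> by_cases hxb : x = b <;> tauto
      have e4 : (S ∪ R.erase b) ∪ {b} = S ∪ R := by
        ext x
        simp only [mem_union, mem_erase, mem_singleton]
        constructor
        · rintro ((h|⟨h1,h2⟩)|h) <;> subst_eqs <;> tauto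
        · rintro (h|h) <;> by_cases hxb : x = b <;> tauto
      rw [e3, e4] at h
      linarith
    have hsum : ∑ b ∈ R, (f (S ∪ insert a R) - f (S ∪ (insert a R).erase b))
        ≤ ∑ b ∈ R, (f (S ∪ R) - f (S ∪ R.erase b)) := sum_le_sum hterm
    rw [e1]
    have hmono1 : f (S ∪ R) ≤ f (S ∪ insert a R) :=
      hmono _ _ (union_subset_union (Subset.refl S) (subset_insert _ _))
    linarith

/-- `t`-subsets of `X` avoiding `a` are the `t`-subsets of `X.erase a`. -/
lemma aux_filter_not_mem (X : Finset α) (t : ℕ) (a : α) :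
    (powersetCard t X).filter (fun R => a ∉ R) = powersetCard t (X.erase a) := by
  ext Q
  simp only [mem_filter, mem_powersetCard, subset_erase]
  tauto

/-- Summing `F (R.erase a)` over `t+1`-subsets of `X` containing `a` equals summing `F`
over `t`-subsets of `X.erase a`. -/
lemma aux_bij_erase (X : Finset α) (t : ℕ) (a : α) (ha : a ∈ X) (F : Finset α → ℝ) :
    ∑ R ∈ (powersetCard (t+1) X).filter (fun R => a ∈ R), F (R.erase a)
      = ∑ Q ∈ powersetCard t (X.erase a), F Q := by
  apply Finset.sum_nbij' (fun R => R.erase a) (fun Q => insert a Q)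
  · intro R hR
    simp only [mem_filter, mem_powersetCard] at hR
    simp only [mem_powersetCard, subset_erase]
    refine ⟨⟨(erase_subset a R).trans hR.1.1, notMem_erase a R⟩, ?_⟩
    rw [card_erase_of_mem hR.2, hR.1.2]
    rfl
  · intro Q hQ
    simp only [mem_powersetCard, subset_erase] at hQ
    simp only [mem_filter, mem_powersetCard]
    refine ⟨⟨insert_subset ha hQ.1.1, ?_⟩, mem_insert_self a Q⟩
    rw [card_insert_of_notMem hQ.1.2, hQ.2]
  · intro R hR
    simp only [mem_filter] at hR
    exact insert_erase hR.2
  · intro Q hQ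
    simp only [mem_powersetCard, subset_erase] at hQ
    exact erase_insert hQ.1.2
  · intro R hR; rfl

/-- Double counting pairs `(Q, b ∈ Q)`. -/
lemma aux_double_count (X : Finset α) (t : ℕ) (F : Finset α → ℝ) :
    ∑ Q ∈ powersetCard (t+1) X, ∑ b ∈ Q, F (Q.erase b)
      = ∑ Q ∈ powersetCard t X, ((X.card - t : ℕ) : ℝ) * F Q := by
  have h1 : ∀ Q ∈ powersetCard t X, ((X.card - t : ℕ) : ℝ) * F Q
      = ∑ b ∈ X \ Q, F Q := by
    intro Q hQ
    rw [sum_const, nsmul_eq_mul]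
    congr 2
    rw [card_sdiff_of_subset (mem_powersetCard.1 hQ).1, (mem_powersetCard.1 hQ).2]
  rw [sum_congr rfl h1]
  rw [sum_sigma', sum_sigma']
  apply Finset.sum_nbij' (fun p => (⟨p.1.erase p.2, p.2⟩ : Σ _ : Finset α, α))
    (fun p => (⟨insert p.2 p.1, p.2⟩ : Σ _ : Finset α, α))
  · rintro ⟨Q, b⟩ hp
    simp only [mem_sigma, mem_powersetCard] at hp ⊢
    refine ⟨⟨(erase_subset b Q).trans hp.1.1, ?_⟩, ?_⟩
    · rw [card_erase_of_mem hp.2, hp.1.2]; rfl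
    · simp only [mem_sdiff]
      exact ⟨hp.1.1 hp.2, notMem_erase b Q⟩
  · rintro ⟨Q, b⟩ hp
    simp only [mem_sigma, mem_powersetCard, mem_sdiff] at hp ⊢
    refine ⟨⟨insert_subset (hp.2.1) hp.1.1, ?_⟩, mem_insert_self _ _⟩
    rw [card_insert_of_notMem hp.2.2, hp.1.2]
  · rintro ⟨Q, b⟩ hp
    simp only [mem_sigma] at hp
    simp only [Sigma.mk.inj_iff, heq_eq_eq]
    exact ⟨insert_erase hp.2, trivial⟩
  · rintro ⟨Q, b⟩ hp
    simp only [mem_sigma, mem_sdiff] at hp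
    simp only [Sigma.mk.inj_iff, heq_eq_eq]
    exact ⟨erase_insert hp.2.2, trivial⟩
  · rintro ⟨Q, b⟩ hp; rfl

/-- Key shrinking estimate. -/
lemma aux_shrink (f : Finset α → ℝ) (S : Finset α)
    (hmono : ∀ A B : Finset α, A ⊆ B → f A ≤ f B)
    (hsub : ∀ A B : Finset α, A ⊆ B → ∀ a ∉ B,
      f (insert a B) - f B ≤ f (insert a A) - f A)
    (X Y : Finset α) (hYX : Y ⊆ X) (t : ℕ) (ht1 : 1 ≤ t) (htm : t < X.card)
    (τ : ℝ) (hτ : 0 ≤ τ)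
    (hY : ∀ a ∈ Y, τ ≤ (∑ R ∈ powersetCard t X,
        (f (insert a (S ∪ R.erase a)) - f (S ∪ R.erase a))) / (powersetCard t X).card) :
    (t : ℝ) / X.card * (Y.card * τ) ≤
      (∑ R ∈ powersetCard t X, (f (S ∪ R) - f S)) / (powersetCard t X).card := by
  have ains := fun {S C : Finset α} (h : S ⊆ C) (a : α) => aux_insert f hmono hsub h a
  have lastmarg := fun (S R : Finset α) => aux_lastmarg f hmono hsub S R
  set P := powersetCard t X with hP
  set m := X.card with hm
  have hNpos : 0 < (P.card : ℝ) := by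
    have := Nat.choose_pos (le_of_lt htm)
    rw [hP, card_powersetCard]
    exact_mod_cast this
  have hmpos : 0 < (m : ℝ) := by
    have : 0 < m := lt_of_le_of_lt (Nat.zero_le t) htm
    exact_mod_cast this
  have step1 : ∑ a ∈ Y, ∑ R ∈ P.filter (fun R => a ∈ R), (f (S ∪ R) - f (S ∪ R.erase a))
      ≤ ∑ R ∈ P, (f (S ∪ R) - f S) := by
    have swap : ∑ R ∈ P, ∑ a ∈ R, (f (S ∪ R) - f (S ∪ R.erase a))
        = ∑ a ∈ X, ∑ R ∈ P.filter (fun R => a ∈ R), (f (S ∪ R) - f (S ∪ R.erase a)) := by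
      have e1 : ∀ R ∈ P, ∑ a ∈ R, (f (S ∪ R) - f (S ∪ R.erase a))
          = ∑ a ∈ X, if a ∈ R then (f (S ∪ R) - f (S ∪ R.erase a)) else 0 := by
        intro R hR
        rw [← sum_filter]
        congr 1
        rw [filter_mem_eq_inter, inter_comm]
        exact (inter_eq_left.2 (mem_powersetCard.1 hR).1).symm
      rw [sum_congr rfl e1, sum_comm]
      congr 1
      ext a
      rw [sum_filter]
    calc ∑ a ∈ Y, ∑ R ∈ P.filter (fun R => a ∈ R), (f (S ∪ R) - f (S ∪ R.erase a))
        ≤ ∑ a ∈ X, ∑ R ∈ P.filter (fun R => a ∈ R), (f (S ∪ R) - f (S ∪ R.erase a)) := by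
          apply sum_le_sum_of_subset_of_nonneg hYX
          intro a _ _
          apply sum_nonneg
          intro R _
          have := hmono (S ∪ R.erase a) (S ∪ R) (union_subset_union (Subset.refl S) (erase_subset a R))
          linarith
      _ = ∑ R ∈ P, ∑ a ∈ R, (f (S ∪ R) - f (S ∪ R.erase a)) := swap.symm
      _ ≤ ∑ R ∈ P, (f (S ∪ R) - f S) := sum_le_sum (fun R _ => lastmarg S R)
  have step2 : ∀ a ∈ Y, (t : ℝ) / m * (P.card * τ)
      ≤ ∑ R ∈ P.filter (fun R => a ∈ R), (f (S ∪ R) - f (S ∪ R.erase a)) := by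
    intro a ha
    have haX : a ∈ X := hYX ha
    set F : Finset α → ℝ := fun Q => f (insert a (S ∪ Q)) - f (S ∪ Q) with hF
    set X' := X.erase a with hX'
    have hcard' : X'.card = m - 1 := card_erase_of_mem haX
    obtain ⟨t', rfl⟩ : ∃ t', t = t' + 1 := ⟨t - 1, (Nat.succ_pred_eq_of_pos ht1).symm⟩
    have hS1 : ∑ R ∈ P.filter (fun R => a ∈ R), (f (S ∪ R) - f (S ∪ R.erase a))
        = ∑ Q ∈ powersetCard t' X', F Q := by
      rw [← aux_bij_erase X t' a haX F]
      apply sum_congr rfl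
      intro R hR
      simp only [mem_filter] at hR
      have : insert a (S ∪ R.erase a) = S ∪ R := by
        rw [← union_insert, insert_erase hR.2]
      rw [hF]
      simp only []
      rw [this]
    have hS0 : ∑ R ∈ P.filter (fun R => a ∉ R), (f (insert a (S ∪ R.erase a)) - f (S ∪ R.erase a))
        = ∑ Q ∈ powersetCard (t' + 1) X', F Q := by
      rw [hP, aux_filter_not_mem X (t' + 1) a]
      apply sum_congr rfl
      intro Q hQ
      have haQ : a ∉ Q := by
        rw [mem_powersetCard, subset_erase] at hQ
        exact hQ.1.2
      rw [erase_eq_of_notMem haQ]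
    set S1 := ∑ Q ∈ powersetCard t' X', F Q with hS1d
    set S0 := ∑ Q ∈ powersetCard (t' + 1) X', F Q with hS0d
    have hav : ((t' + 1 : ℕ) : ℝ) * S0 ≤ ((m - (t' + 1) : ℕ) : ℝ) * S1 := by
      have hpt : ∀ Q ∈ powersetCard (t' + 1) X', ((t' + 1 : ℕ) : ℝ) * F Q
          ≤ ∑ b ∈ Q, F (Q.erase b) := by
        intro Q hQ
        have hcQ : Q.card = t' + 1 := (mem_powersetCard.1 hQ).2
        have hb : ∀ b ∈ Q, F Q ≤ F (Q.erase b) := by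
          intro b hbQ
          exact ains (union_subset_union (Subset.refl S) (erase_subset b Q)) a
        calc ((t' + 1 : ℕ) : ℝ) * F Q = ∑ _b ∈ Q, F Q := by
              rw [sum_const, hcQ, nsmul_eq_mul]
          _ ≤ ∑ b ∈ Q, F (Q.erase b) := sum_le_sum hb
      calc ((t' + 1 : ℕ) : ℝ) * S0 = ∑ Q ∈ powersetCard (t' + 1) X', ((t' + 1 : ℕ) : ℝ) * F Q := by
            rw [hS0d, mul_sum]
        _ ≤ ∑ Q ∈ powersetCard (t' + 1) X', ∑ b ∈ Q, F (Q.erase b) := sum_le_sum hpt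
        _ = ∑ Q ∈ powersetCard t' X', ((X'.card - t' : ℕ) : ℝ) * F Q := aux_double_count X' t' F
        _ = ((m - (t' + 1) : ℕ) : ℝ) * S1 := by
            rw [hS1d, mul_sum]
            apply sum_congr rfl
            intro Q hQ
            congr 2
            rw [hcard']
            omega
    have hcomb : ((t' + 1 : ℕ) : ℝ) * (S1 + S0) ≤ (m : ℝ) * S1 := by
      have hsplit : ((m : ℕ) : ℝ) = ((t' + 1 : ℕ) : ℝ) + ((m - (t' + 1) : ℕ) : ℝ) := by
        have : t' + 1 ≤ m := le_of_lt htm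
        push_cast [Nat.cast_sub this]
        ring
      calc ((t' + 1 : ℕ) : ℝ) * (S1 + S0)
          = ((t' + 1 : ℕ) : ℝ) * S1 + ((t' + 1 : ℕ) : ℝ) * S0 := by ring
        _ ≤ ((t' + 1 : ℕ) : ℝ) * S1 + ((m - (t' + 1) : ℕ) : ℝ) * S1 := by linarith
        _ = (m : ℝ) * S1 := by rw [hsplit]; ring
    have hfull : ∑ R ∈ P, (f (insert a (S ∪ R.erase a)) - f (S ∪ R.erase a)) = S1 + S0 := by
      rw [← sum_filter_add_sum_filter_not P (fun R => a ∈ R)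
        (fun R => f (insert a (S ∪ R.erase a)) - f (S ∪ R.erase a))]
      congr 1
      · rw [← hS1]
        apply sum_congr rfl
        intro R hR
        simp only [mem_filter] at hR
        rw [← union_insert, insert_erase hR.2]
    have hfullge : (P.card : ℝ) * τ ≤ S1 + S0 := by
      have h2 := hY a ha
      rw [le_div_iff₀ hNpos] at h2
      rw [hfull] at h2
      linarith
    rw [hS1]
    have h1 : ((t' + 1 : ℕ) : ℝ) * ((P.card : ℝ) * τ) ≤ (m : ℝ) * S1 := by
      calc ((t' + 1 : ℕ) : ℝ) * ((P.card : ℝ) * τ) ≤ ((t' + 1 : ℕ) : ℝ) * (S1 + S0) := by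
            apply mul_le_mul_of_nonneg_left hfullge (by positivity)
        _ ≤ (m : ℝ) * S1 := hcomb
    rw [div_mul_eq_mul_div, div_le_iff₀ hmpos]
    push_cast at h1 ⊢
    linarith [mul_comm (m : ℝ) S1]
  have total : (Y.card : ℝ) * ((t : ℝ) / m * (P.card * τ)) ≤ ∑ R ∈ P, (f (S ∪ R) - f S) := by
    calc (Y.card : ℝ) * ((t : ℝ) / m * (P.card * τ))
        = ∑ _a ∈ Y, (t : ℝ) / m * (P.card * τ) := by rw [sum_const, nsmul_eq_mul]
      _ ≤ ∑ a ∈ Y, ∑ R ∈ P.filter (fun R => a ∈ R), (f (S ∪ R) - f (S ∪ R.erase a)) :=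
          sum_le_sum step2
      _ ≤ ∑ R ∈ P, (f (S ∪ R) - f S) := step1
  rw [le_div_iff₀ hNpos]
  calc (t : ℝ) / m * (Y.card * τ) * P.card = (Y.card : ℝ) * ((t : ℝ) / m * (P.card * τ)) := by ring
    _ ≤ _ := total

/-- Loss estimate for filtered elements. -/
lemma aux_loss (f : Finset α → ℝ) (S : Finset α)
    (hmono : ∀ A B : Finset α, A ⊆ B → f A ≤ f B)
    (hsub : ∀ A B : Finset α, A ⊆ B → ∀ a ∉ B,
      f (insert a B) - f B ≤ f (insert a A) - f A)
    (A X : Finset α) (t : ℕ) (ht : t ≤ X.card) :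
    f (S ∪ A) - f S ≤ (∑ R ∈ powersetCard t X, (f (S ∪ R) - f S)) / (powersetCard t X).card
      + ∑ a ∈ A, (∑ R ∈ powersetCard t X,
          (f (insert a (S ∪ R.erase a)) - f (S ∪ R.erase a))) / (powersetCard t X).card := by
  set P := powersetCard t X with hP
  have hNpos : 0 < (P.card : ℝ) := by
    have := Nat.choose_pos ht
    rw [hP, card_powersetCard]
    exact_mod_cast this
  have pointwise : ∀ R ∈ P, f (S ∪ A) - f S
      ≤ (f (S ∪ R) - f S) + ∑ a ∈ A, (f (insert a (S ∪ R.erase a)) - f (S ∪ R.erase a)) := by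
    intro R _
    have c1 : f (S ∪ A) ≤ f ((S ∪ R) ∪ A) := by
      apply hmono
      exact union_subset_union subset_union_left (Subset.refl A)
    have c2 : f ((S ∪ R) ∪ A) - f (S ∪ R) ≤ ∑ a ∈ A, (f (insert a (S ∪ R)) - f (S ∪ R)) :=
      aux_sum_insert f hmono hsub A (S ∪ R)
    have c3 : ∑ a ∈ A, (f (insert a (S ∪ R)) - f (S ∪ R))
        ≤ ∑ a ∈ A, (f (insert a (S ∪ R.erase a)) - f (S ∪ R.erase a)) := by
      apply sum_le_sum
      intro a _
      exact aux_insert f hmono hsub (union_subset_union (Subset.refl S) (erase_subset a R)) a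
    linarith
  have sum_bound : (P.card : ℝ) * (f (S ∪ A) - f S)
      ≤ ∑ R ∈ P, (f (S ∪ R) - f S)
        + ∑ a ∈ A, ∑ R ∈ P, (f (insert a (S ∪ R.erase a)) - f (S ∪ R.erase a)) := by
    have := sum_le_sum pointwise
    rw [sum_const, nsmul_eq_mul] at this
    rw [sum_add_distrib, sum_comm (s := P)] at this
    exact this
  rw [← sum_div, ← add_div, le_div_iff₀ hNpos]
  linarith [sum_bound]

end AuxLemmas
set_option maxHeartbeats 1000000 in
/-- Lemma 4 of the paper: the `Filter` subroutine terminates after at most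
`⌈log_{1+ε/2} n⌉ + 1` iterations, i.e. for some `i ∈ {1, …, ρ+1}` a random set from `X_i` has
expected marginal contribution at least `((1-ε)/r)(OPT - f(S))`. -/
theorem stmt3 {α : Type*} [Fintype α] [DecidableEq α]
    (f : Finset α → ℝ)
    (hmono : ∀ A B : Finset α, A ⊆ B → f A ≤ f B)
    (hsub : ∀ A B : Finset α, A ⊆ B → ∀ a ∉ B,
      f (insert a B) - f B ≤ f (insert a A) - f A)
    (k r : ℕ) (hk1 : 1 ≤ k) (hkn : k ≤ Fintype.card α) (hr : 1 ≤ r) (hrk : r ∣ k)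
    (OPT : ℝ) (hOPTub : ∀ T : Finset α, T.card ≤ k → f T ≤ OPT)
    (hOPTmem : ∃ T : Finset α, T.card ≤ k ∧ f T = OPT)
    (S : Finset α) (hS : f S ≤ OPT)
    (ε : ℝ) (hε0 : 0 < ε) (hε1 : ε < 1)
    (ρ : ℕ) (hρdef : ρ = ⌈Real.logb (1 + ε / 2) (Fintype.card α)⌉₊)
    (hr20 : (20 : ℝ) * ρ / ε ≤ r)
    (X : ℕ → Finset α) (hX1 : X 1 = Finset.univ)
    (hXrec : ∀ i, 1 ≤ i → i ≤ ρ → ∀ a : α,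
      a ∈ X (i + 1) ↔ a ∈ X i ∧
        (1 + ε / 2) * (1 - ε) * (OPT - f S) / k ≤
          expUnif (X i) (min (k / r) (X i).card)
            (fun R => f (insert a (S ∪ R.erase a)) - f (S ∪ R.erase a))) :
    ∃ i, 1 ≤ i ∧ i ≤ ρ + 1 ∧
      ((1 - ε) / r) * (OPT - f S) ≤
        expUnif (X i) (min (k / r) (X i).card) (fun R => marg f S R) := by
  classical
  obtain ⟨T, hTcard, hTopt⟩ := hOPTmem
  by_contra hcon
  push_neg at hcon
  simp only [expUnif, marg] at hcon
  simp only [expUnif] at hXrec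
  set K := k / r with hKdef
  set Δ := OPT - f S with hΔdef
  set τ := (1 + ε / 2) * (1 - ε) * Δ / (k : ℝ) with hτdef
  set B := (1 - ε) / (r : ℝ) * Δ with hBdef
  have hrR : (0:ℝ) < r := by exact_mod_cast hr
  have hr1R : (1:ℝ) ≤ r := by exact_mod_cast hr
  have hkR : (0:ℝ) < k := by exact_mod_cast hk1
  have hΔ0 : 0 ≤ Δ := by rw [hΔdef]; linarith
  have hrk' : r ≤ k := Nat.le_of_dvd (by omega) hrk
  have hKr : K * r = k := Nat.div_mul_cancel hrk
  have hK1 : 1 ≤ K := (Nat.one_le_div_iff (by omega)).2 hrk'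
  have hτ0 : 0 ≤ τ := by
    rw [hτdef]
    apply div_nonneg _ (le_of_lt hkR)
    have h1 : (0:ℝ) ≤ 1 + ε / 2 := by linarith
    have h2 : (0:ℝ) ≤ 1 - ε := by linarith
    have := mul_nonneg (mul_nonneg h1 h2) hΔ0
    linarith
  have hkτ : (k : ℝ) * τ = (1 + ε / 2) * (1 - ε) * Δ := by
    rw [hτdef]; field_simp
  have hb1 : (1:ℝ) < 1 + ε / 2 := by linarith
  have hn1 : 1 ≤ Fintype.card α := le_trans hk1 hkn
  have hBpos : 0 < B := by
    refine lt_of_le_of_lt ?_ (hcon 1 le_rfl (by omega))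
    apply div_nonneg _ (Nat.cast_nonneg _)
    apply sum_nonneg
    intro R hR
    have := hmono S (S ∪ R) subset_union_left
    linarith
  have hΔpos : 0 < Δ := by
    rcases lt_or_ge 0 Δ with h | h
    · exact h
    · exfalso
      have : B ≤ 0 := by
        rw [hBdef]
        apply mul_nonpos_of_nonneg_of_nonpos _ h
        apply div_nonneg (by linarith) (le_of_lt hrR)
      linarith
  -- case ρ = 0 : the ground set is a single element
  rcases Nat.eq_zero_or_pos ρ with hρ0 | hρpos
  · have hnle : Fintype.card α ≤ 1 := by
      by_contra hn2
      push_neg at hn2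
      have hlog : 0 < Real.logb (1 + ε / 2) (Fintype.card α) := by
        apply Real.logb_pos hb1
        exact_mod_cast hn2
      have : 0 < ρ := by rw [hρdef]; exact Nat.ceil_pos.2 hlog
      omega
    have hn : Fintype.card α = 1 := le_antisymm hnle hn1
    have hX1card : (X 1).card = 1 := by rw [hX1, card_univ, hn]
    have hEi := hcon 1 le_rfl (by omega)
    have hmin : min K (X 1).card = (X 1).card := min_eq_right (by omega)
    rw [hmin, powersetCard_self] at hEi
    simp only [sum_singleton, card_singleton, Nat.cast_one, div_one] at hEi
    have hfT : f T ≤ f (S ∪ X 1) := by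
      apply hmono
      rw [hX1]
      intro x hx
      simp
    have hBΔ : B ≤ Δ := by
      rw [hBdef]
      have h1 : (1 - ε) / (r:ℝ) ≤ 1 := by
        rw [div_le_one hrR]; linarith
      nlinarith
    have : Δ ≤ f (S ∪ X 1) - f S := by
      rw [hΔdef, ← hTopt]; linarith
    linarith
  -- main case : ρ ≥ 1
  have hρ1R : (1:ℝ) ≤ (ρ:ℝ) := by exact_mod_cast hρpos
  have h20 : 20 * (ρ:ℝ) ≤ ε * r := by
    rw [div_le_iff₀ hε0] at hr20
    linarith [hr20]
  have hXmono : ∀ i, 1 ≤ i → i ≤ ρ → X (i+1) ⊆ X i := by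
    intro i h1 h2 a ha
    exact ((hXrec i h1 h2 a).1 ha).1
  -- the value invariant
  have hInv : ∀ i, 1 ≤ i → i ≤ ρ + 1 →
      Δ ≤ (f (S ∪ (T ∩ X i)) - f S) + ((i:ℝ) - 1) * B
          + τ * ((T.card : ℝ) - ((T ∩ X i).card : ℝ)) := by
    intro i hi1
    induction i, hi1 using Nat.le_induction with
    | base =>
      intro _
      have hT1 : T ∩ X 1 = T := by rw [hX1, inter_univ]
      rw [hT1]
      have : f T ≤ f (S ∪ T) := hmono _ _ subset_union_right
      have : Δ ≤ f (S ∪ T) - f S := by rw [hΔdef, ← hTopt]; linarith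
      push_cast
      linarith
    | succ i hi ih =>
      intro hi2
      have hiρ : i ≤ ρ := by omega
      have ihh := ih (by omega)
      have hTsub : T ∩ X (i+1) ⊆ T ∩ X i :=
        inter_subset_inter (Subset.refl T) (hXmono i hi hiρ)
      set A := (T ∩ X i) \ (T ∩ X (i+1)) with hAdef
      have hsplit : (T ∩ X (i+1)) ∪ A = T ∩ X i := union_sdiff_of_subset hTsub
      have hsub2 : f (S ∪ (T ∩ X i)) - f S
          ≤ (f (S ∪ (T ∩ X (i+1))) - f S) + (f (S ∪ A) - f S) := by
        have h := aux_marg_antitone f hmono hsub A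
          (show S ⊆ S ∪ (T ∩ X (i+1)) from subset_union_left)
        have e : (S ∪ (T ∩ X (i+1))) ∪ A = S ∪ (T ∩ X i) := by
          rw [union_assoc, hsplit]
        rw [e] at h
        linarith
      have htle : min K (X i).card ≤ (X i).card := min_le_right _ _
      have hloss := aux_loss f S hmono hsub A (X i) (min K (X i).card) htle
      have hμ : ∀ a ∈ A,
          (∑ R ∈ powersetCard (min K (X i).card) (X i),
            (f (insert a (S ∪ R.erase a)) - f (S ∪ R.erase a)))
            / ((powersetCard (min K (X i).card) (X i)).card : ℝ) ≤ τ := by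
        intro a haA
        rw [hAdef, mem_sdiff, mem_inter] at haA
        obtain ⟨⟨haT, haXi⟩, haN⟩ := haA
        have haX1 : a ∉ X (i+1) := fun h => haN (mem_inter.2 ⟨haT, h⟩)
        have hiff := hXrec i hi hiρ a
        rw [hiff] at haX1
        push_neg at haX1
        exact le_of_lt (haX1 haXi)
      have hμsum : ∑ a ∈ A,
          (∑ R ∈ powersetCard (min K (X i).card) (X i),
            (f (insert a (S ∪ R.erase a)) - f (S ∪ R.erase a)))
            / ((powersetCard (min K (X i).card) (X i)).card : ℝ)
          ≤ (A.card : ℝ) * τ := by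
        calc _ ≤ ∑ _a ∈ A, τ := sum_le_sum hμ
          _ = (A.card : ℝ) * τ := by rw [sum_const, nsmul_eq_mul]
      have hEi := hcon i hi (by omega)
      have hAcard : (A.card : ℝ) = ((T ∩ X i).card : ℝ) - ((T ∩ X (i+1)).card : ℝ) := by
        rw [hAdef, card_sdiff_of_subset hTsub]
        push_cast [Nat.cast_sub (card_le_card hTsub)]
        ring
      have hc1 : ((T ∩ X (i+1)).card : ℝ) ≤ ((T ∩ X i).card : ℝ) := by
        exact_mod_cast card_le_card hTsub
      have hAτ : (A.card : ℝ) * τ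
          = (((T ∩ X i).card : ℝ) - ((T ∩ X (i+1)).card : ℝ)) * τ := by
        rw [hAcard]
      have hring : τ * ((T.card:ℝ) - ((T ∩ X i).card : ℝ))
          + ((((T ∩ X i).card : ℝ) - ((T ∩ X (i+1)).card : ℝ)) * τ)
          = τ * ((T.card:ℝ) - ((T ∩ X (i+1)).card : ℝ)) := by ring
      push_cast at ihh ⊢
      linarith [hloss, hμsum, hEi, hsub2]
  -- numeric bound from the invariant
  have hInvGe : ∀ i, 1 ≤ i → i ≤ ρ + 1 → B ≤ f (S ∪ (T ∩ X i)) - f S := by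
    intro i hi1 hi2
    have h := hInv i hi1 hi2
    have h1 : ((i:ℝ) - 1) * B ≤ (ρ:ℝ) * B := by
      have hi : ((i:ℝ) - 1) ≤ (ρ:ℝ) := by
        have : (i:ℝ) ≤ (ρ:ℝ) + 1 := by exact_mod_cast hi2
        linarith
      nlinarith [hBpos]
    have h2 : τ * ((T.card : ℝ) - ((T ∩ X i).card : ℝ)) ≤ τ * k := by
      apply mul_le_mul_of_nonneg_left _ hτ0
      have : (T.card : ℝ) ≤ (k : ℝ) := by exact_mod_cast hTcard
      have : (0:ℝ) ≤ ((T ∩ X i).card : ℝ) := Nat.cast_nonneg _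
      linarith
    have hnum : (ρ:ℝ) * B + (k:ℝ) * τ + B ≤ Δ := by
      rw [hkτ]
      have hBr : B * r = (1 - ε) * Δ := by
        rw [hBdef]; field_simp
      have key : ((ρ:ℝ) * B + (1 + ε / 2) * (1 - ε) * Δ + B) * r ≤ Δ * r := by
        have e1 : ((ρ:ℝ) * B + (1 + ε / 2) * (1 - ε) * Δ + B) * r
            = (ρ:ℝ) * (B * r) + (1 + ε / 2) * (1 - ε) * Δ * r + B * r := by ring
        rw [e1, hBr]
        have hA : 20 * (ρ:ℝ) * Δ ≤ ε * (r:ℝ) * Δ := by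
          have := mul_le_mul_of_nonneg_right h20 hΔ0
          linarith
        have hB2 : 0 ≤ ε^2 * (r:ℝ) * Δ := by positivity
        have hC : Δ ≤ (ρ:ℝ) * Δ := by nlinarith [hρ1R, hΔ0]
        have hD : 0 ≤ ε * (ρ:ℝ) * Δ := by positivity
        have hE2 : 0 ≤ ε * Δ := by positivity
        nlinarith [hA, hB2, hC, hD, hE2]
      have := le_of_mul_le_mul_right key hrR
      linarith
    linarith
  -- every X i must be large
  have hbig : ∀ i, 1 ≤ i → i ≤ ρ + 1 → K < (X i).card := by
    intro i hi1 hi2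
    by_contra hle
    push_neg at hle
    have hEi := hcon i hi1 hi2
    have hmin : min K (X i).card = (X i).card := min_eq_right hle
    rw [hmin, powersetCard_self] at hEi
    simp only [sum_singleton, card_singleton, Nat.cast_one, div_one] at hEi
    have hge : f (S ∪ (T ∩ X i)) ≤ f (S ∪ X i) :=
      hmono _ _ (union_subset_union (Subset.refl S) inter_subset_right)
    have := hInvGe i hi1 hi2
    linarith
  -- shrinking
  have hshrink : ∀ i, 1 ≤ i → i ≤ ρ → ((X (i+1)).card : ℝ) * (1 + ε/2) < ((X i).card : ℝ) := by
    intro i hi1 hi2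
    have hbigi := hbig i hi1 (by omega)
    have hmin : min K (X i).card = K := min_eq_left (le_of_lt hbigi)
    have hY : ∀ a ∈ X (i+1), τ ≤ (∑ R ∈ powersetCard K (X i),
        (f (insert a (S ∪ R.erase a)) - f (S ∪ R.erase a)))
          / ((powersetCard K (X i)).card : ℝ) := by
      intro a ha
      have h := ((hXrec i hi1 hi2 a).1 ha).2
      rw [hmin] at h
      exact h
    have hs := aux_shrink f S hmono hsub (X i) (X (i+1)) (hXmono i hi1 hi2)
      K hK1 hbigi τ hτ0 hY
    have hEi := hcon i hi1 (by omega)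
    rw [hmin] at hEi
    have hlt : (K:ℝ) / ((X i).card : ℝ) * (((X (i+1)).card : ℝ) * τ) < B :=
      lt_of_le_of_lt hs hEi
    have hcpos : (0:ℝ) < ((X i).card : ℝ) := by
      have : 0 < (X i).card := by omega
      exact_mod_cast this
    have hKRr : (K:ℝ) * r = (k:ℝ) := by exact_mod_cast hKr
    have hfac : (0:ℝ) < (1 - ε) * Δ / r := by
      apply div_pos _ hrR
      nlinarith
    have hKy : (K:ℝ) * (((X (i+1)).card : ℝ) * τ) <
        ((X i).card : ℝ) * B := by
      have h := mul_lt_mul_of_pos_right hlt hcpos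
      have e : (K:ℝ) / ((X i).card:ℝ) * (((X (i+1)).card:ℝ) * τ) * ((X i).card:ℝ)
          = (K:ℝ) * (((X (i+1)).card:ℝ) * τ) := by
        field_simp
      rw [e] at h
      linarith [mul_comm B ((X i).card : ℝ)]
    have hidd : (K:ℝ) * (((X (i+1)).card : ℝ) * τ)
        = ((X (i+1)).card : ℝ) * (1 + ε/2) * ((1 - ε) * Δ / r) := by
      rw [hτdef]
      rw [← hKRr]
      field_simp
    have hidd2 : ((X i).card : ℝ) * B = ((X i).card : ℝ) * ((1 - ε) * Δ / r) := by
      rw [hBdef]; ring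
    rw [hidd, hidd2] at hKy
    exact lt_of_mul_lt_mul_right hKy (le_of_lt hfac)
  -- counting
  have hcount : ∀ j, 1 ≤ j → j ≤ ρ →
      ((X (j+1)).card : ℝ) * (1 + ε/2)^j < (Fintype.card α : ℝ) := by
    intro j hj1
    induction j, hj1 using Nat.le_induction with
    | base =>
      intro _
      have h := hshrink 1 le_rfl hρpos
      rw [pow_one]
      rw [hX1, card_univ] at h
      exact h
    | succ j hj ih =>
      intro hj2
      have ihh := ih (by omega)
      have hs := hshrink (j+1) (by omega) hj2
      have hpow : (0:ℝ) < (1 + ε/2)^j := by positivity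
      calc ((X (j+2)).card : ℝ) * (1 + ε/2)^(j+1)
          = (((X (j+2)).card : ℝ) * (1 + ε/2)) * (1 + ε/2)^j := by ring
        _ < ((X (j+1)).card : ℝ) * (1 + ε/2)^j := by
            exact mul_lt_mul_of_pos_right hs hpow
        _ < (Fintype.card α : ℝ) := ihh
  have hfinal := hcount ρ hρpos le_rfl
  have hnpow : (Fintype.card α : ℝ) ≤ (1 + ε/2)^ρ := by
    have hx : Real.logb (1 + ε/2) (Fintype.card α) ≤ (ρ:ℝ) := by
      rw [hρdef]
      exact Nat.le_ceil _
    have hnpos : (0:ℝ) < (Fintype.card α : ℝ) := by exact_mod_cast hn1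
    calc (Fintype.card α : ℝ)
        = (1 + ε/2) ^ Real.logb (1 + ε/2) (Fintype.card α) :=
          (Real.rpow_logb (by linarith) (by linarith) hnpos).symm
      _ ≤ (1 + ε/2) ^ (ρ:ℝ) :=
          Real.rpow_le_rpow_of_exponent_le (le_of_lt hb1) hx
      _ = (1 + ε/2)^ρ := Real.rpow_natCast _ ρ
  have hlt1 : ((X (ρ+1)).card : ℝ) < 1 := by
    have hp : (0:ℝ) < (1 + ε/2)^ρ := by positivity
    nlinarith [lt_of_lt_of_le hfinal hnpow]
  have hzero : (X (ρ+1)).card = 0 := by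
    have : (X (ρ+1)).card < 1 := by exact_mod_cast hlt1
    omega
  have := hbig (ρ+1) (by omega) le_rfl
  omega
end

section
/- Let V ≥ 0 be a real number, let ε ∈ (0,1), let r ≥ 1 be an integer, and let x_0, x_1, …, x_r be real numbers with x_0 = 0 and x_i ≥ x_{i−1} + ((1−ε)/r)·(V − x_{i−1}) for every i ∈ {1,…,r}. Then x_r ≥ (1 − (1 − (1−ε)/r)^r)·V ≥ (1 − e^{−(1−ε)})·V ≥ (1 − 1/e − ε)·V. -/
/-- approximation analysis of Iterative-Filtering, Theorem 1 of the paper: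
if `x 0 = 0` and each iteration increases the value by at least `((1-ε)/r)(V - x_{i-1})`,
then `x r ≥ (1 - (1 - (1-ε)/r)^r)·V ≥ (1 - e^{-(1-ε)})·V ≥ (1 - 1/e - ε)·V`. -/
theorem stmt4 (V : ℝ) (hV : 0 ≤ V) (ε : ℝ) (hε0 : 0 < ε) (hε1 : ε < 1)
    (r : ℕ) (hr : 1 ≤ r) (x : ℕ → ℝ) (hx0 : x 0 = 0)
    (hx : ∀ i, 1 ≤ i → i ≤ r →
      x (i - 1) + ((1 - ε) / r) * (V - x (i - 1)) ≤ x i) :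
    (1 - (1 - (1 - ε) / r) ^ r) * V ≤ x r ∧
    (1 - Real.exp (-(1 - ε))) * V ≤ (1 - (1 - (1 - ε) / r) ^ r) * V ∧
    (1 - 1 / Real.exp 1 - ε) * V ≤ (1 - Real.exp (-(1 - ε))) * V := by
  have hrR : (0:ℝ) < (r:ℝ) := by exact_mod_cast Nat.lt_of_lt_of_le Nat.zero_lt_one hr
  have hrR1 : (1:ℝ) ≤ (r:ℝ) := by exact_mod_cast hr
  set c : ℝ := (1 - ε) / r with hc
  have hc0 : 0 < c := div_pos (by linarith) hrR
  have hc1 : c ≤ 1 := by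
    rw [hc, div_le_one hrR]; linarith
  have h1c0 : 0 ≤ 1 - c := by linarith
  -- main induction: V - x i ≤ (1-c)^i * V for i ≤ r
  have key : ∀ i, i ≤ r → V - x i ≤ (1 - c) ^ i * V := by
    intro i
    induction i with
    | zero => intro _; simp [hx0]
    | succ n ih =>
      intro hnr
      have hn : n ≤ r := Nat.le_of_succ_le hnr
      have ihn := ih hn
      have hstep := hx (n + 1) (Nat.le_add_left 1 n) hnr
      simp only [Nat.add_sub_cancel] at hstep
      have : V - x (n + 1) ≤ (1 - c) * (V - x n) := by linarith [hstep]
      calc V - x (n + 1) ≤ (1 - c) * (V - x n) := this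
        _ ≤ (1 - c) * ((1 - c) ^ n * V) := by
            exact mul_le_mul_of_nonneg_left ihn h1c0
        _ = (1 - c) ^ (n + 1) * V := by ring
  have h1 : (1 - (1 - c) ^ r) * V ≤ x r := by
    have := key r le_rfl
    nlinarith
  have h2 : (1 - c) ^ r ≤ Real.exp (-(1 - ε)) := by
    have hbase : 1 - c ≤ Real.exp (-c) := by
      have := Real.add_one_le_exp (-c); linarith
    calc (1 - c) ^ r ≤ (Real.exp (-c)) ^ r :=
          pow_le_pow_left₀ h1c0 hbase r
      _ = Real.exp ((-c) * r) := by
          rw [← Real.exp_nat_mul]; ring_nf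
      _ = Real.exp (-(1 - ε)) := by
          congr 1
          field_simp [hc]
          rw [hc, div_mul_cancel₀ _ hrR.ne']
  have h3 : Real.exp (-(1 - ε)) ≤ 1 / Real.exp 1 + ε := by
    have hconv := convexOn_exp.2 (Set.mem_univ (-1 : ℝ)) (Set.mem_univ (0 : ℝ))
      (by linarith : (0:ℝ) ≤ 1 - ε) (le_of_lt hε0) (by ring)
    simp only [smul_eq_mul, Real.exp_zero, mul_one, mul_zero, add_zero, mul_neg] at hconv
    have hexp1 : Real.exp (-1) = 1 / Real.exp 1 := by
      rw [Real.exp_neg]; ring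
    have hpos : 0 < Real.exp (-1) := Real.exp_pos _
    nlinarith [hconv, hexp1, hpos]
  refine ⟨h1, ?_, ?_⟩
  · apply mul_le_mul_of_nonneg_right _ hV
    linarith
  · apply mul_le_mul_of_nonneg_right _ hV
    linarith
end

section
/- Let f : 2^N → ℝ be a monotone submodular function, let ε ∈ (0,1), and let ρ ≤ r be positive integers. Let S ⊆ S_1 ⊆ S_2 ⊆ ⋯ ⊆ S_ρ ⊆ S⁺ be subsets of N with f(S) ≤ OPT and f(S⁺) − f(S) ≤ (ε/20)·(OPT − f(S)). Let R_1, …, R_ρ be random subsets of N defined on a common finite probability space such that E[f_{S_i}(R_i)] < ((1−ε)/r)·(OPT − f(S)) for every i ∈ {1,…,ρ}. Then E[f_{S⁺ ∪ (R_1 ∪ ⋯ ∪ R_ρ)}(O)] ≥ (1 − ρ/r − ε/20)·(OPT − f(S)). -/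
open Finset

lemma submod_sets {α : Type*} [DecidableEq α] (f : Finset α → ℝ)
    (hmono : ∀ A B : Finset α, A ⊆ B → f A ≤ f B)
    (hsub : ∀ A B : Finset α, A ⊆ B → ∀ a ∉ B,
      f (insert a B) - f B ≤ f (insert a A) - f A)
    (A B : Finset α) (hAB : A ⊆ B) (X : Finset α) :
    f (B ∪ X) - f B ≤ f (A ∪ X) - f A := by
  induction X using Finset.induction_on with
  | empty => simp
  | @insert a X ha ih =>
    rw [Finset.union_insert, Finset.union_insert]
    by_cases hB : a ∈ B ∪ X
    · rw [Finset.insert_eq_self.2 hB]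
      have h2 : f (A ∪ X) ≤ f (insert a (A ∪ X)) :=
        hmono _ _ (Finset.subset_insert _ _)
      linarith
    · have hA : a ∉ A ∪ X := fun h => hB (Finset.union_subset_union_left hAB h)
      have := hsub (A ∪ X) (B ∪ X) (Finset.union_subset_union_left hAB) a hB
      linarith

/-- Lemma 5 of the paper: the epoch variant of the bound on the expected
marginal contribution of the optimal solution `O` to `S⁺ ∪ R₁ ∪ ⋯ ∪ R_ρ`. -/
theorem stmt5 {α : Type*} [Fintype α] [DecidableEq α]
    (f : Finset α → ℝ)
    (hmono : ∀ A B : Finset α, A ⊆ B → f A ≤ f B)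
    (hsub : ∀ A B : Finset α, A ⊆ B → ∀ a ∉ B,
      f (insert a B) - f B ≤ f (insert a A) - f A)
    (k : ℕ) (hk1 : 1 ≤ k) (hkn : k ≤ Fintype.card α)
    (OPT : ℝ) (hOPTub : ∀ T : Finset α, T.card ≤ k → f T ≤ OPT)
    (O : Finset α) (hOcard : O.card ≤ k) (hOval : f O = OPT)
    (ε : ℝ) (hε0 : 0 < ε) (hε1 : ε < 1)
    (ρ r : ℕ) (hρ : 1 ≤ ρ) (hρr : ρ ≤ r)
    (S Splus : Finset α) (Sc : ℕ → Finset α)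
    (hSc0 : Sc 0 = S) (hSc1 : S ⊆ Sc 1)
    (hScchain : ∀ i, 1 ≤ i → i < ρ → Sc i ⊆ Sc (i + 1)) (hSclast : Sc ρ ⊆ Splus)
    (hS : f S ≤ OPT)
    (hepoch : f Splus - f S ≤ (ε / 20) * (OPT - f S))
    (Ω : Type*) [Fintype Ω] (p : Ω → ℝ) (hp : ∀ ω, 0 ≤ p ω) (hp1 : ∑ ω, p ω = 1)
    (R : ℕ → Ω → Finset α)
    (hR : ∀ i, 1 ≤ i → i ≤ ρ →
      ∑ ω, p ω * marg f (Sc i) (R i ω) < ((1 - ε) / r) * (OPT - f S)) :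
    (1 - (ρ : ℝ) / r - ε / 20) * (OPT - f S) ≤
      ∑ ω, p ω * marg f (Splus ∪ (Finset.Icc 1 ρ).biUnion (fun i => R i ω)) O := by
  have hr1 : 1 ≤ r := le_trans hρ hρr
  have hrpos : (0 : ℝ) < r := by exact_mod_cast hr1
  have hΔ : 0 ≤ OPT - f S := by linarith
  -- chain monotonicity
  have hchain : ∀ i j, 1 ≤ i → i ≤ j → j ≤ ρ → Sc i ⊆ Sc j := by
    intro i j h1 hij hj
    induction j with
    | zero => omega
    | succ j ih =>
      rcases Nat.eq_or_lt_of_le hij with h | h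
      · rw [h]
      · exact (ih (by omega) (by omega)).trans (hScchain j (by omega) (by omega))
  have hScSp : ∀ i, 1 ≤ i → i ≤ ρ → Sc i ⊆ Splus := fun i h1 h2 =>
    (hchain i ρ h1 h2 le_rfl).trans hSclast
  -- key inductive bound
  have key : ∀ ω, ∀ m, m ≤ ρ →
      f (Splus ∪ (Finset.Icc 1 m).biUnion (fun i => R i ω)) ≤
        f Splus + ∑ i ∈ Finset.Icc 1 m, marg f (Sc i) (R i ω) := by
    intro ω m
    induction m with
    | zero => intro _; simp
    | succ m ih =>
      intro hm
      have hIcc : Finset.Icc 1 (m + 1) = insert (m + 1) (Finset.Icc 1 m) := by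
        ext x; simp only [Finset.mem_Icc, Finset.mem_insert]; omega
      have hnm : (m + 1) ∉ Finset.Icc 1 m := by simp
      rw [hIcc, Finset.biUnion_insert, Finset.sum_insert hnm]
      set P := (Finset.Icc 1 m).biUnion (fun i => R i ω) with hP
      have hre : Splus ∪ (R (m + 1) ω ∪ P) = (Splus ∪ P) ∪ R (m + 1) ω := by
        ext x; simp; tauto
      rw [hre]
      have hsm := submod_sets f hmono hsub (Sc (m + 1)) (Splus ∪ P)
        ((hScSp (m + 1) (by omega) hm).trans Finset.subset_union_left) (R (m + 1) ω)
      have := ih (by omega)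
      simp only [marg] at *
      linarith
  -- pointwise lower bound on marg to O
  have hpt : ∀ ω, OPT - f Splus - ∑ i ∈ Finset.Icc 1 ρ, marg f (Sc i) (R i ω) ≤
      marg f (Splus ∪ (Finset.Icc 1 ρ).biUnion (fun i => R i ω)) O := by
    intro ω
    set U := Splus ∪ (Finset.Icc 1 ρ).biUnion (fun i => R i ω) with hU
    have h1 : f O ≤ f (U ∪ O) := hmono _ _ Finset.subset_union_right
    have h2 := key ω ρ le_rfl
    simp only [marg] at h2 ⊢
    linarith [hOval ▸ h1]
  -- expectation bound
  have hexp : ∑ ω, p ω * (OPT - f Splus - ∑ i ∈ Finset.Icc 1 ρ, marg f (Sc i) (R i ω)) ≤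
      ∑ ω, p ω * marg f (Splus ∪ (Finset.Icc 1 ρ).biUnion (fun i => R i ω)) O :=
    Finset.sum_le_sum fun ω _ => mul_le_mul_of_nonneg_left (hpt ω) (hp ω)
  have hsplit : ∑ ω, p ω * (OPT - f Splus - ∑ i ∈ Finset.Icc 1 ρ, marg f (Sc i) (R i ω)) =
      (OPT - f Splus) - ∑ i ∈ Finset.Icc 1 ρ, ∑ ω, p ω * marg f (Sc i) (R i ω) := by
    calc ∑ ω, p ω * (OPT - f Splus - ∑ i ∈ Finset.Icc 1 ρ, marg f (Sc i) (R i ω))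
        = ∑ ω, (p ω * (OPT - f Splus) -
            ∑ i ∈ Finset.Icc 1 ρ, p ω * marg f (Sc i) (R i ω)) := by
          refine Finset.sum_congr rfl fun ω _ => ?_
          rw [mul_sub, Finset.mul_sum]
      _ = (∑ ω, p ω * (OPT - f Splus)) -
            ∑ ω, ∑ i ∈ Finset.Icc 1 ρ, p ω * marg f (Sc i) (R i ω) :=
          Finset.sum_sub_distrib _ _
      _ = (OPT - f Splus) - ∑ i ∈ Finset.Icc 1 ρ, ∑ ω, p ω * marg f (Sc i) (R i ω) := by
          rw [← Finset.sum_mul, hp1, one_mul, Finset.sum_comm]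
  have hsum : ∑ i ∈ Finset.Icc 1 ρ, ∑ ω, p ω * marg f (Sc i) (R i ω) ≤
      (ρ : ℝ) * (((1 - ε) / r) * (OPT - f S)) := by
    calc ∑ i ∈ Finset.Icc 1 ρ, ∑ ω, p ω * marg f (Sc i) (R i ω)
        ≤ ∑ _i ∈ Finset.Icc 1 ρ, ((1 - ε) / r) * (OPT - f S) :=
          Finset.sum_le_sum fun i hi => by
            have := Finset.mem_Icc.1 hi
            exact le_of_lt (hR i this.1 this.2)
      _ = (ρ : ℝ) * (((1 - ε) / r) * (OPT - f S)) := by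
          rw [Finset.sum_const, Nat.card_Icc, nsmul_eq_mul]
          norm_num
  have hfrac : (ρ : ℝ) * (((1 - ε) / r) * (OPT - f S)) ≤ ((ρ : ℝ) / r) * (OPT - f S) := by
    have h1 : (ρ : ℝ) * ((1 - ε) / r) ≤ (ρ : ℝ) / r := by
      rw [mul_div_assoc']
      apply div_le_div_of_nonneg_right (c := (r : ℝ)) ?_ (le_of_lt hrpos)
      nlinarith [Nat.cast_nonneg (α := ℝ) ρ]
    calc (ρ : ℝ) * (((1 - ε) / r) * (OPT - f S)) = ((ρ : ℝ) * ((1 - ε) / r)) * (OPT - f S) := by ring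
      _ ≤ ((ρ : ℝ) / r) * (OPT - f S) := mul_le_mul_of_nonneg_right h1 hΔ
  have hring : (1 - (ρ : ℝ) / r - ε / 20) * (OPT - f S) =
      (OPT - f S) - ((ρ : ℝ) / r) * (OPT - f S) - (ε / 20) * (OPT - f S) := by ring
  linarith
end

section
/- Let f : 2^N → ℝ be a monotone submodular function, let ε ∈ (0,1), and let ρ, r be positive integers with r ≥ 20ρ/ε and r dividing k. Let S ⊆ S_1 ⊆ S_2 ⊆ ⋯ ⊆ S_ρ ⊆ S⁺ be subsets of N with f(S) ≤ OPT and f(S⁺) − f(S) ≤ (ε/20)·(OPT − f(S)). Let X_1 = N and let X_2, …, X_{ρ+1} ⊆ N satisfy, for every i ∈ {1,…,ρ}: (a) |X_i| ≥ k/r; (b) E_{R∼U(X_i)}[f_{S_i}(R)] < ((1−ε)/r)·(OPT − f(S)); and (c) {a ∈ X_i : E_{R∼U(X_i)}[f_{S_i∪(R\{a})}(a)] ≥ (1+ε/2)(1−ε)(OPT − f(S))/k} ⊆ X_{i+1} ⊆ X_i. Then f_{S⁺}(X_{ρ+1}) ≥ (ε/4)·(1−ε)·(OPT − f(S)). -/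
open Finset

section Aux

variable {α : Type*} [DecidableEq α] {f : Finset α → ℝ}

/-- Set-level submodularity: the marginal of `D` w.r.t. a larger base is smaller. -/
lemma marg_base_mono (hmono : ∀ A B : Finset α, A ⊆ B → f A ≤ f B)
    (hsub : ∀ A B : Finset α, A ⊆ B → ∀ a ∉ B,
      f (insert a B) - f B ≤ f (insert a A) - f A)
    (D A B : Finset α) (hAB : A ⊆ B) :
    f (B ∪ D) - f B ≤ f (A ∪ D) - f A := by
  induction D using Finset.induction_on with
  | empty => simp
  | @insert a D haD IH =>
    have h1 : f (insert a (B ∪ D)) - f (B ∪ D) ≤ f (insert a (A ∪ D)) - f (A ∪ D) := by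
      by_cases hB : a ∈ B ∪ D
      · rw [Finset.insert_eq_self.2 hB]
        have := hmono (A ∪ D) (insert a (A ∪ D)) (Finset.subset_insert _ _)
        linarith
      · exact hsub (A ∪ D) (B ∪ D) (Finset.union_subset_union hAB (subset_refl D)) a hB
    rw [Finset.union_insert, Finset.union_insert]
    linarith

/-- Subadditivity of marginals. -/
lemma marg_union_le (hmono : ∀ A B : Finset α, A ⊆ B → f A ≤ f B)
    (hsub : ∀ A B : Finset α, A ⊆ B → ∀ a ∉ B,
      f (insert a B) - f B ≤ f (insert a A) - f A)
    (B D E : Finset α) :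
    marg f B (D ∪ E) ≤ marg f B D + marg f B E := by
  have h := marg_base_mono hmono hsub E B (B ∪ D) Finset.subset_union_left
  simp only [marg]
  rw [Finset.union_assoc] at h
  linarith

/-- A marginal of a set is at most the sum of marginals of its singletons. -/
lemma marg_le_sum_singletons (hmono : ∀ A B : Finset α, A ⊆ B → f A ≤ f B)
    (hsub : ∀ A B : Finset α, A ⊆ B → ∀ a ∉ B,
      f (insert a B) - f B ≤ f (insert a A) - f A)
    (B D : Finset α) :
    marg f B D ≤ ∑ a ∈ D, (f (insert a B) - f B) := by
  induction D using Finset.induction_on with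
  | empty => simp [marg]
  | @insert a D haD IH =>
    have h1 : marg f B (insert a D) ≤ marg f B {a} + marg f B D := by
      rw [Finset.insert_eq]
      exact marg_union_le hmono hsub B {a} D
    have h2 : marg f B {a} = f (insert a B) - f B := by
      simp only [marg]; rw [Finset.union_comm, ← Finset.insert_eq]
    rw [Finset.sum_insert haD]
    linarith

lemma le_expUnif {X : Finset α} {t : ℕ} {g : Finset α → ℝ} {c : ℝ}
    (hne : (Finset.powersetCard t X).Nonempty)
    (h : ∀ R ∈ Finset.powersetCard t X, c ≤ g R) :
    c ≤ expUnif X t g := by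
  have hpos : (0 : ℝ) < (Finset.powersetCard t X).card :=
    Nat.cast_pos.2 (Finset.card_pos.2 hne)
  rw [expUnif, le_div_iff₀ hpos]
  have := Finset.card_nsmul_le_sum (Finset.powersetCard t X) g c h
  rw [nsmul_eq_mul] at this
  linarith

end Aux

/-- Lemma 6 of the paper: the elements `X_{ρ+1}` surviving `ρ` filtering
iterations during an epoch satisfy `f_{S⁺}(X_{ρ+1}) ≥ (ε/4)(1-ε)(OPT - f(S))`. -/
theorem stmt6 {α : Type*} [Fintype α] [DecidableEq α]
    (f : Finset α → ℝ)
    (hmono : ∀ A B : Finset α, A ⊆ B → f A ≤ f B)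
    (hsub : ∀ A B : Finset α, A ⊆ B → ∀ a ∉ B,
      f (insert a B) - f B ≤ f (insert a A) - f A)
    (k r : ℕ) (hk1 : 1 ≤ k) (hkn : k ≤ Fintype.card α) (hr : 1 ≤ r) (hrk : r ∣ k)
    (OPT : ℝ) (hOPTub : ∀ T : Finset α, T.card ≤ k → f T ≤ OPT)
    (hOPTmem : ∃ T : Finset α, T.card ≤ k ∧ f T = OPT)
    (ε : ℝ) (hε0 : 0 < ε) (hε1 : ε < 1)
    (ρ : ℕ) (hρ : 1 ≤ ρ) (hr20 : (20 : ℝ) * ρ / ε ≤ r)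
    (S Splus : Finset α) (Sc : ℕ → Finset α)
    (hSc0 : Sc 0 = S) (hSc1 : S ⊆ Sc 1)
    (hScchain : ∀ i, 1 ≤ i → i < ρ → Sc i ⊆ Sc (i + 1)) (hSclast : Sc ρ ⊆ Splus)
    (hS : f S ≤ OPT)
    (hepoch : f Splus - f S ≤ (ε / 20) * (OPT - f S))
    (X : ℕ → Finset α) (hX1 : X 1 = Finset.univ)
    (ha : ∀ i, 1 ≤ i → i ≤ ρ → k / r ≤ (X i).card)
    (hb : ∀ i, 1 ≤ i → i ≤ ρ →
      expUnif (X i) (min (k / r) (X i).card) (fun R => marg f (Sc i) R)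
        < ((1 - ε) / r) * (OPT - f S))
    (hc1 : ∀ i, 1 ≤ i → i ≤ ρ → ∀ a ∈ X i,
      (1 + ε / 2) * (1 - ε) * (OPT - f S) / k ≤
        expUnif (X i) (min (k / r) (X i).card)
          (fun R => f (insert a (Sc i ∪ R.erase a)) - f (Sc i ∪ R.erase a)) →
      a ∈ X (i + 1))
    (hc2 : ∀ i, 1 ≤ i → i ≤ ρ → X (i + 1) ⊆ X i) :
    (ε / 4) * (1 - ε) * (OPT - f S) ≤ marg f Splus (X (ρ + 1)) := by
  obtain ⟨O, hOcard, hOval⟩ := hOPTmem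
  set Δ : ℝ := OPT - f S with hΔdef
  have hΔ0 : 0 ≤ Δ := by simp [hΔdef]; linarith
  set tthr : ℝ := (1 + ε / 2) * (1 - ε) * Δ / k with htthr
  set c' : ℝ := ((1 - ε) / r) * Δ with hc'
  clear_value tthr c' Δ
  have hkpos : (0 : ℝ) < k := by exact_mod_cast hk1
  have hrpos : (0 : ℝ) < r := by exact_mod_cast hr
  have h1ε : (0:ℝ) ≤ 1 - ε := by linarith
  have h2ε : (0:ℝ) ≤ 1 + ε / 2 := by linarith
  have htthr0 : 0 ≤ tthr := by
    rw [htthr]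
    exact div_nonneg (mul_nonneg (mul_nonneg h2ε h1ε) hΔ0) hkpos.le
  have hc'0 : 0 ≤ c' := by
    rw [hc']
    exact mul_nonneg (div_nonneg h1ε hrpos.le) hΔ0
  -- the chain `Sc i ⊆ Splus`
  have hchain : ∀ j, j ≤ ρ → ∀ i, 1 ≤ i → i ≤ j → Sc i ⊆ Sc j := by
    intro j
    induction j with
    | zero => intro _ i h1 h2; omega
    | succ j IH =>
      intro hj i h1 hij
      rcases Nat.lt_or_ge i (j + 1) with h | h
      · have hij' : i ≤ j := by omega
        have h1j : 1 ≤ j := le_trans h1 hij'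
        exact (IH (by omega) i h1 hij').trans (hScchain j h1j (by omega))
      · have : i = j + 1 := by omega
        subst this; exact subset_refl _
  have hScSplus : ∀ i, 1 ≤ i → i ≤ ρ → Sc i ⊆ Splus := fun i h1 h2 =>
    (hchain ρ le_rfl i h1 h2).trans hSclast
  -- core per-iteration bound
  have key : ∀ i, 1 ≤ i → i ≤ ρ →
      marg f (Sc i) (O ∩ (X i \ X (i + 1))) ≤
        ((O ∩ (X i \ X (i + 1))).card : ℝ) * tthr + c' := by
    intro i h1 hiρ
    set D := O ∩ (X i \ X (i + 1)) with hD
    set t := min (k / r) (X i).card with ht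
    set g : α → Finset α → ℝ :=
      fun a R => f (insert a (Sc i ∪ R.erase a)) - f (Sc i ∪ R.erase a) with hg
    have hne : (Finset.powersetCard t (X i)).Nonempty :=
      Finset.powersetCard_nonempty.2 (min_le_right _ _)
    -- pointwise inequality
    have hpt : ∀ R ∈ Finset.powersetCard t (X i),
        marg f (Sc i) D ≤ (∑ a ∈ D, g a R) + marg f (Sc i) R := by
      intro R _
      set B := Sc i ∪ R with hB
      have h0 : ∀ a ∈ D, 0 ≤ g a R := by
        intro a _
        have := hmono (Sc i ∪ R.erase a) (insert a (Sc i ∪ R.erase a)) (Finset.subset_insert _ _)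
        simp only [hg]; linarith
      have h1' : ∑ a ∈ D \ R, g a R ≤ ∑ a ∈ D, g a R :=
        Finset.sum_le_sum_of_subset_of_nonneg (Finset.sdiff_subset)
          (fun a haD _ => h0 a haD)
      have h2 : ∀ a ∈ D \ R, g a R = f (insert a B) - f B := by
        intro a haDR
        have haR : a ∉ R := (Finset.mem_sdiff.1 haDR).2
        simp only [hg, hB, Finset.erase_eq_of_notMem haR]
      have h3 : marg f B (D \ R) ≤ ∑ a ∈ D \ R, g a R := by
        rw [Finset.sum_congr rfl h2]
        exact marg_le_sum_singletons hmono hsub B (D \ R)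
      have h4 : f (Sc i ∪ D) ≤ f (B ∪ (D \ R)) := by
        apply hmono
        intro x hx
        rcases Finset.mem_union.1 hx with h | h
        · exact Finset.mem_union_left _ (Finset.mem_union_left _ h)
        · by_cases hR : x ∈ R
          · exact Finset.mem_union_left _ (Finset.mem_union_right _ hR)
          · exact Finset.mem_union_right _ (Finset.mem_sdiff.2 ⟨h, hR⟩)
      simp only [marg, hB] at h3 h4 ⊢
      linarith
    -- averaging
    have havg : marg f (Sc i) D ≤
        expUnif (X i) t (fun R => (∑ a ∈ D, g a R) + marg f (Sc i) R) :=
      le_expUnif hne hpt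
    have hlin : expUnif (X i) t (fun R => (∑ a ∈ D, g a R) + marg f (Sc i) R) =
        (∑ a ∈ D, expUnif (X i) t (g a)) + expUnif (X i) t (fun R => marg f (Sc i) R) := by
      simp only [expUnif]
      rw [Finset.sum_add_distrib, add_div, Finset.sum_comm, Finset.sum_div]
    have hbound : ∀ a ∈ D, expUnif (X i) t (g a) ≤ tthr := by
      intro a haD
      have haXi : a ∈ X i := ((Finset.mem_sdiff.1 (Finset.mem_inter.1 haD).2)).1
      have haX1 : a ∉ X (i + 1) := ((Finset.mem_sdiff.1 (Finset.mem_inter.1 haD).2)).2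
      by_contra hcon
      push_neg at hcon
      exact haX1 (hc1 i h1 hiρ a haXi hcon.le)
    have hsum : ∑ a ∈ D, expUnif (X i) t (g a) ≤ (D.card : ℝ) * tthr := by
      have := Finset.sum_le_card_nsmul D (fun a => expUnif (X i) t (g a)) tthr hbound
      rwa [nsmul_eq_mul] at this
    have hbE : expUnif (X i) t (fun R => marg f (Sc i) R) ≤ c' := (hb i h1 hiρ).le
    rw [hlin] at havg
    linarith
  -- accumulated bound over the epoch
  have main : ∀ j, j ≤ ρ → marg f Splus (O \ X (j + 1)) ≤
      ((O \ X (j + 1)).card : ℝ) * tthr + (j : ℝ) * c' := by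
    intro j
    induction j with
    | zero =>
      intro _
      have h1 : O \ X 1 = ∅ := by rw [hX1]; simp
      rw [h1]
      simp [marg]
    | succ j IH =>
      intro hj
      have hj' : j ≤ ρ := by omega
      have h1j : 1 ≤ j + 1 := by omega
      set D := O ∩ (X (j + 1) \ X (j + 2)) with hD
      have hsubX : X (j + 2) ⊆ X (j + 1) := hc2 (j + 1) h1j hj
      have hsplit : O \ X (j + 2) = (O \ X (j + 1)) ∪ D := by
        ext x
        simp only [hD, Finset.mem_sdiff, Finset.mem_union, Finset.mem_inter]
        constructor
        · rintro ⟨hO, hx2⟩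
          by_cases hx1 : x ∈ X (j + 1)
          · exact Or.inr ⟨hO, hx1, hx2⟩
          · exact Or.inl ⟨hO, hx1⟩
        · rintro (⟨hO, hx1⟩ | ⟨hO, _, hx2⟩)
          · exact ⟨hO, fun h => hx1 (hsubX h)⟩
          · exact ⟨hO, hx2⟩
      have hdisj : Disjoint (O \ X (j + 1)) D := by
        rw [Finset.disjoint_left]
        intro x hx hxD
        exact (Finset.mem_sdiff.1 hx).2 (Finset.mem_sdiff.1 (Finset.mem_inter.1 hxD).2).1
      have hcard : ((O \ X (j + 2)).card : ℝ) = ((O \ X (j + 1)).card : ℝ) + (D.card : ℝ) := by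
        rw [hsplit, Finset.card_union_of_disjoint hdisj]
        push_cast; ring
      have hsubadd : marg f Splus (O \ X (j + 2)) ≤
          marg f Splus (O \ X (j + 1)) + marg f Splus D := by
        rw [hsplit]
        exact marg_union_le hmono hsub _ _ _
      have hDmarg : marg f Splus D ≤ marg f (Sc (j + 1)) D := by
        have := marg_base_mono hmono hsub D (Sc (j + 1)) Splus (hScSplus (j + 1) h1j hj)
        simpa [marg] using this
      have hkey := key (j + 1) h1j hj
      have hIH := IH hj'
      rw [hcard]
      push_cast
      simp only [hD] at hkey hDmarg ⊢
      linarith [hkey, hDmarg, hsubadd, hIH]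
  -- final assembly
  have hmain := main ρ le_rfl
  have hcardO : ((O \ X (ρ + 1)).card : ℝ) ≤ (k : ℝ) := by
    have h1 : (O \ X (ρ + 1)).card ≤ O.card := Finset.card_le_card Finset.sdiff_subset
    exact_mod_cast le_trans h1 hOcard
  have h8 : marg f Splus (O \ X (ρ + 1)) ≤ (k : ℝ) * tthr + (ρ : ℝ) * c' := by
    have := mul_le_mul_of_nonneg_right hcardO htthr0
    linarith
  have hktthr : (k : ℝ) * tthr = (1 + ε / 2) * (1 - ε) * Δ := by
    rw [htthr]; field_simp
  have hρc : (ρ : ℝ) * c' ≤ (ε / 20) * (1 - ε) * Δ := by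
    have h20 : 20 * (ρ : ℝ) ≤ ε * r := by
      have := (div_le_iff₀ hε0).1 hr20
      linarith
    have hu : (0:ℝ) ≤ (1 - ε) * Δ := mul_nonneg (by linarith) hΔ0
    have heq : (ρ : ℝ) * c' = ((ρ : ℝ) * ((1 - ε) * Δ)) / r := by
      rw [hc']; ring
    rw [heq, div_le_iff₀ hrpos]
    calc (ρ : ℝ) * ((1 - ε) * Δ) = (20 * (ρ : ℝ)) * ((1 - ε) * Δ) / 20 := by ring
      _ ≤ (ε * (r : ℝ)) * ((1 - ε) * Δ) / 20 := by
          have := mul_le_mul_of_nonneg_right h20 hu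
          linarith
      _ = ε / 20 * (1 - ε) * Δ * (r : ℝ) := by ring
  -- lower bounds via O
  have h5 : marg f Splus (O ∩ X (ρ + 1)) ≤ marg f Splus (X (ρ + 1)) := by
    simp only [marg]
    have := hmono (Splus ∪ (O ∩ X (ρ + 1))) (Splus ∪ X (ρ + 1))
      (Finset.union_subset_union (subset_refl _) Finset.inter_subset_right)
    linarith
  have h6 : marg f Splus O ≤
      marg f Splus (O ∩ X (ρ + 1)) + marg f Splus (O \ X (ρ + 1)) := by
    have h := marg_union_le hmono hsub Splus (O ∩ X (ρ + 1)) (O \ X (ρ + 1))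
    have hid : O ∩ X (ρ + 1) ∪ O \ X (ρ + 1) = O := by
      ext x
      simp only [Finset.mem_union, Finset.mem_inter, Finset.mem_sdiff]
      tauto
    rwa [hid] at h
  have h7 : OPT - f Splus ≤ marg f Splus O := by
    have := hmono O (Splus ∪ O) Finset.subset_union_right
    simp only [marg]; linarith
  -- arithmetic conclusion
  have hfin : (1 - ε / 20) * Δ ≤ OPT - f Splus := by
    rw [hΔdef] at hepoch ⊢; linarith
  have hM : (1 - ε / 20) * Δ - ((1 + ε / 2) * (1 - ε) * Δ + ε / 20 * (1 - ε) * Δ) ≤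
      marg f Splus (X (ρ + 1)) := by linarith
  have harith : (ε / 4) * (1 - ε) * Δ ≤
      (1 - ε / 20) * Δ - ((1 + ε / 2) * (1 - ε) * Δ + ε / 20 * (1 - ε) * Δ) := by
    nlinarith [mul_nonneg hΔ0 hε0.le, mul_nonneg (mul_nonneg hΔ0 hε0.le) hε0.le]
  linarith [harith, hM]
end

section
/- Let f : 2^N → ℝ be a monotone submodular function, let ε ∈ (0,1/2), let ρ := ⌈log_{1+ε/2} n⌉, and let r be a positive integer dividing k with r ≥ 20ρ/ε. Let S ⊆ N with f(S) ≤ OPT, let S ⊆ S_1 ⊆ ⋯ ⊆ S_ρ ⊆ N with f(S_i) − f(S) ≤ (ε/20)·(OPT − f(S)) for all i, let X_1 = N and suppose that for every i ∈ {1,…,ρ}: E_{R∼U(X_i)}[f_{S_i}(R)] < ((1−ε)/r)·(OPT − f(S_i)), and X_{i+1} = {a ∈ X_i : E_{R∼U(X_i)}[f_{S_i∪(R\{a})}(a)] ≥ (1+ε/2)(1−ε)(OPT − f(S_i))/k}. Then |X_{ρ+1}| ≤ k/r, E_{R∼U(X_{ρ+1})}[f_{S_ρ}(R)] ≥ ((1−ε)/r)·(OPT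 − f(S_ρ)) (the Filter subroutine terminates), and f_S((S_ρ \ S) ∪ X_{ρ+1}) ≥ (ε/20)·(OPT − f(S)) (the epoch ends). In particular, every epoch of Amortized-Filtering consists of at most ⌈log_{1+ε/2} n⌉ filtering iterations. -/
open Finset

namespace Stmt7Aux

section helpers
variable {α : Type*} [DecidableEq α] (f : Finset α → ℝ)
variable (hmono : ∀ A B : Finset α, A ⊆ B → f A ≤ f B)
variable (hsub : ∀ A B : Finset α, A ⊆ B → ∀ a ∉ B,
      f (insert a B) - f B ≤ f (insert a A) - f A)

include hmono hsub in
lemma gsub' : ∀ A B : Finset α, A ⊆ B → ∀ a,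
    f (insert a B) - f B ≤ f (insert a A) - f A := by
  intro A B hAB a
  by_cases hB : a ∈ B
  · rw [Finset.insert_eq_self.2 hB]
    have : f A ≤ f (insert a A) := hmono _ _ (Finset.subset_insert _ _)
    linarith
  · exact hsub A B hAB a hB

include hmono hsub in
lemma marg_anti : ∀ C A B : Finset α, A ⊆ B → f (B ∪ C) - f B ≤ f (A ∪ C) - f A := by
  intro C
  induction C using Finset.induction_on with
  | empty => intro A B h; simp
  | @insert c C hc ih =>
    intro A B hAB
    have h1 := ih A B hAB
    have h2 := gsub' f hmono hsub (A ∪ C) (B ∪ C)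
      (Finset.union_subset_union hAB (Finset.Subset.refl _)) c
    have e1 : B ∪ insert c C = insert c (B ∪ C) := by rw [Finset.union_insert]
    have e2 : A ∪ insert c C = insert c (A ∪ C) := by rw [Finset.union_insert]
    rw [e1, e2]; linarith

include hmono hsub in
/-- telescoping lower bound -/
lemma telescope_lower (S : Finset α) : ∀ R : Finset α,
    ∑ a ∈ R, (f (S ∪ R) - f (S ∪ R.erase a)) ≤ f (S ∪ R) - f S := by
  intro R
  induction R using Finset.induction_on with
  | empty => simp
  | @insert b R0 hb ih =>
    have key : ∀ a ∈ R0, f (S ∪ insert b R0) - f (S ∪ (insert b R0).erase a)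
        ≤ f (S ∪ R0) - f (S ∪ R0.erase a) := by
      intro a ha
      have hab : a ≠ b := fun h => hb (h ▸ ha)
      have e1 : S ∪ insert b R0 = insert a (S ∪ (insert b R0).erase a) := by
        rw [Finset.union_comm, Finset.union_comm S]
        rw [← Finset.insert_union]
        congr 1
        rw [Finset.insert_erase]
        exact Finset.mem_insert_of_mem ha
      have e2 : S ∪ R0 = insert a (S ∪ R0.erase a) := by
        rw [Finset.union_comm, Finset.union_comm S, ← Finset.insert_union]
        congr 1
        rw [Finset.insert_erase ha]
      rw [e1, e2]
      apply gsub' f hmono hsub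
      apply Finset.union_subset_union_right
      apply Finset.erase_subset_erase
      exact Finset.subset_insert _ _
    rw [Finset.sum_insert hb]
    have eb : (insert b R0).erase b = R0 := Finset.erase_insert hb
    have h2 : ∑ a ∈ R0, (f (S ∪ insert b R0) - f (S ∪ (insert b R0).erase a))
        ≤ ∑ a ∈ R0, (f (S ∪ R0) - f (S ∪ R0.erase a)) := Finset.sum_le_sum key
    rw [eb]
    linarith

include hmono hsub in
/-- subadditivity upper bound -/
lemma subadd (S : Finset α) : ∀ A : Finset α,
    f (S ∪ A) - f S ≤ ∑ a ∈ A, (f (insert a S) - f S) := by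
  intro A
  induction A using Finset.induction_on with
  | empty => simp
  | @insert b A0 hb ih =>
    rw [Finset.sum_insert hb]
    have e : S ∪ insert b A0 = insert b (S ∪ A0) := by
      rw [Finset.union_insert]
    have h2 : f (insert b (S ∪ A0)) - f (S ∪ A0) ≤ f (insert b S) - f S :=
      gsub' f hmono hsub S (S ∪ A0) Finset.subset_union_left b
    rw [e]; linarith

include hmono hsub in
lemma pointE (S A R : Finset α) :
    f (S ∪ A) - f S ≤ (f (S ∪ R) - f S)
      + ∑ a ∈ A, (f (insert a (S ∪ R.erase a)) - f (S ∪ R.erase a)) := by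
  have h1 : f (S ∪ A) ≤ f (S ∪ R ∪ A) :=
    hmono _ _ (Finset.union_subset_union Finset.subset_union_left (Finset.Subset.refl _))
  have h2 := subadd f hmono hsub (S ∪ R) A
  have h3 : ∑ a ∈ A, (f (insert a (S ∪ R)) - f (S ∪ R))
      ≤ ∑ a ∈ A, (f (insert a (S ∪ R.erase a)) - f (S ∪ R.erase a)) := by
    apply Finset.sum_le_sum
    intro a _
    exact gsub' f hmono hsub (S ∪ R.erase a) (S ∪ R)
      (Finset.union_subset_union_right (Finset.erase_subset _ _)) a
  linarith
end helpers

section comb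
variable {α : Type*} [DecidableEq α]

lemma swap_mem (A : Finset (Finset α)) (Y : Finset α) (F : α → Finset α → ℝ) :
    ∑ R ∈ A, ∑ a ∈ Y ∩ R, F a R = ∑ a ∈ Y, ∑ R ∈ A.filter (a ∈ ·), F a R := by
  have h1 : ∀ R ∈ A, ∑ a ∈ Y ∩ R, F a R = ∑ a ∈ Y, if a ∈ R then F a R else 0 := by
    intro R _
    rw [← Finset.filter_mem_eq_inter, Finset.sum_filter]
  rw [Finset.sum_congr rfl h1, Finset.sum_comm]
  apply Finset.sum_congr rfl
  intro a _
  rw [Finset.sum_filter]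

lemma B1 (X : Finset α) (a : α) (ha : a ∈ X) (t : ℕ) (F : Finset α → ℝ) :
    ∑ R ∈ (Finset.powersetCard (t+1) X).filter (a ∈ ·), F (R.erase a)
      = ∑ R' ∈ Finset.powersetCard t (X.erase a), F R' := by
  apply Finset.sum_bij'
    (fun (R : Finset α) (_ : R ∈ (Finset.powersetCard (t+1) X).filter (a ∈ ·)) => R.erase a)
    (fun (R' : Finset α) (_ : R' ∈ Finset.powersetCard t (X.erase a)) => insert a R')
  · intro R hR
    simp only [Finset.mem_filter, Finset.mem_powersetCard] at hR
    simp only [Finset.mem_powersetCard]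
    exact ⟨Finset.erase_subset_erase _ hR.1.1, by rw [Finset.card_erase_of_mem hR.2, hR.1.2]; rfl⟩
  · intro R' hR'
    simp only [Finset.mem_powersetCard, Finset.subset_erase] at hR'
    simp only [Finset.mem_filter, Finset.mem_powersetCard]
    exact ⟨⟨Finset.insert_subset ha hR'.1.1,
      by rw [Finset.card_insert_of_notMem hR'.1.2, hR'.2]⟩, Finset.mem_insert_self _ _⟩
  · intro R hR
    simp only [Finset.mem_filter] at hR
    exact Finset.insert_erase hR.2
  · intro R' hR'
    simp only [Finset.mem_powersetCard, Finset.subset_erase] at hR'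
    exact Finset.erase_insert hR'.1.2
  · intro R hR; rfl

lemma filter_not_mem (X : Finset α) (a : α) (t : ℕ) :
    (Finset.powersetCard t X).filter (¬ a ∈ ·) = Finset.powersetCard t (X.erase a) := by
  ext R
  simp only [Finset.mem_filter, Finset.mem_powersetCard, Finset.subset_erase]
  tauto

lemma avg_down (X : Finset α) (a : α) (ha : a ∈ X) (t : ℕ) (htX : t + 1 ≤ X.card)
    (h : Finset α → ℝ) (hanti : ∀ Q Q' : Finset α, Q ⊆ Q' → h Q' ≤ h Q) :
    ((t:ℝ)+1) * ∑ R ∈ Finset.powersetCard (t+1) X, h (R.erase a)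
      ≤ (X.card : ℝ) * ∑ R' ∈ Finset.powersetCard t (X.erase a), h R' := by
  classical
  set s1 : ℝ := ∑ R' ∈ Finset.powersetCard t (X.erase a), h R' with hs1
  set Q := Finset.powersetCard t (X.erase a) with hQ
  set P' := Finset.powersetCard (t+1) (X.erase a) with hP'
  have hsplit : ∑ R ∈ Finset.powersetCard (t+1) X, h (R.erase a)
      = (∑ R ∈ (Finset.powersetCard (t+1) X).filter (a ∈ ·), h (R.erase a))
        + ∑ R ∈ (Finset.powersetCard (t+1) X).filter (¬ a ∈ ·), h (R.erase a) :=
    (Finset.sum_filter_add_sum_filter_not _ _ _).symm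
  have h1 : ∑ R ∈ (Finset.powersetCard (t+1) X).filter (a ∈ ·), h (R.erase a) = s1 :=
    B1 X a ha t h
  have h2 : ∑ R ∈ (Finset.powersetCard (t+1) X).filter (¬ a ∈ ·), h (R.erase a)
      = ∑ R ∈ P', h R := by
    rw [filter_not_mem]
    apply Finset.sum_congr rfl
    intro R hR
    simp only [hP', Finset.mem_powersetCard, Finset.subset_erase] at hR
    rw [Finset.erase_eq_of_notMem hR.1.2]
  have key : ((t:ℝ)+1) * ∑ R ∈ P', h R ≤ ((X.card : ℝ) - 1 - t) * s1 := by
    have step1 : ((t:ℝ)+1) * ∑ R ∈ P', h R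
        ≤ ∑ R ∈ P', ∑ b ∈ (X.erase a) ∩ R, h (R.erase b) := by
      rw [Finset.mul_sum]
      apply Finset.sum_le_sum
      intro R hR
      simp only [hP', Finset.mem_powersetCard] at hR
      have hRX : (X.erase a) ∩ R = R := Finset.inter_eq_right.2 hR.1
      rw [hRX]
      have : ((t:ℝ)+1) * h R = ∑ _b ∈ R, h R := by
        rw [Finset.sum_const, hR.2, nsmul_eq_mul]; push_cast; ring
      rw [this]
      exact Finset.sum_le_sum fun b _ => hanti _ _ (Finset.erase_subset _ _)
    have step2 : ∑ R ∈ P', ∑ b ∈ (X.erase a) ∩ R, h (R.erase b)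
        = ∑ b ∈ X.erase a, ∑ R' ∈ Q.filter (¬ b ∈ ·), h R' := by
      rw [swap_mem]
      apply Finset.sum_congr rfl
      intro b hb
      rw [hP', B1 (X.erase a) b hb t h, filter_not_mem]
    have step3 : ∑ b ∈ X.erase a, ∑ R' ∈ Q.filter (¬ b ∈ ·), h R'
        = ((X.card:ℝ) - 1) * s1 - ∑ b ∈ X.erase a, ∑ R' ∈ Q.filter (b ∈ ·), h R' := by
      have : ∀ b ∈ X.erase a, ∑ R' ∈ Q.filter (¬ b ∈ ·), h R'
          = s1 - ∑ R' ∈ Q.filter (b ∈ ·), h R' := by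
        intro b _
        have := Finset.sum_filter_add_sum_filter_not Q (b ∈ ·) h
        rw [hs1]; linarith
      rw [Finset.sum_congr rfl this, Finset.sum_sub_distrib, Finset.sum_const,
        Finset.card_erase_of_mem ha, nsmul_eq_mul]
      have hc1 : 1 ≤ X.card := Finset.card_pos.2 ⟨a, ha⟩
      have : ((X.card - 1 : ℕ) : ℝ) = (X.card : ℝ) - 1 := by
        push_cast [hc1]; ring
      rw [this]
    have step4 : ∑ b ∈ X.erase a, ∑ R' ∈ Q.filter (b ∈ ·), h R' = (t:ℝ) * s1 := by
      rw [← swap_mem Q (X.erase a) (fun _ R' => h R'), hs1, Finset.mul_sum]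
      apply Finset.sum_congr rfl
      intro R' hR'
      simp only [hQ, Finset.mem_powersetCard] at hR'
      rw [Finset.inter_eq_right.2 hR'.1, Finset.sum_const, hR'.2, nsmul_eq_mul]
    rw [step2, step3, step4] at step1
    linarith
  rw [hsplit, h1, h2]
  have hcast : (t:ℝ) + 1 ≤ (X.card : ℝ) := by exact_mod_cast htX
  nlinarith [key]
end comb

section master
variable {α : Type*} [DecidableEq α] (f : Finset α → ℝ)
variable (hmono : ∀ A B : Finset α, A ⊆ B → f A ≤ f B)
variable (hsub : ∀ A B : Finset α, A ⊆ B → ∀ a ∉ B,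
      f (insert a B) - f B ≤ f (insert a A) - f A)

include hmono hsub in
lemma master (S X Y : Finset α) (τ : ℝ) (t : ℕ) (ht1 : 1 ≤ t) (htX : t ≤ X.card) (hYX : Y ⊆ X)
    (hthr : ∀ a ∈ Y, τ * ((Finset.powersetCard t X).card : ℝ)
      ≤ ∑ R ∈ Finset.powersetCard t X, (f (insert a (S ∪ R.erase a)) - f (S ∪ R.erase a))) :
    (Y.card : ℝ) * ((t : ℝ) * (τ * ((Finset.powersetCard t X).card : ℝ)))
      ≤ (X.card : ℝ) * ∑ R ∈ Finset.powersetCard t X, (f (S ∪ R) - f S) := by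
  classical
  obtain ⟨t', rfl⟩ : ∃ t', t = t' + 1 := ⟨t - 1, (Nat.succ_pred_eq_of_pos ht1).symm⟩
  set P := Finset.powersetCard (t'+1) X with hP
  set m : ℝ := (X.card : ℝ) with hm
  have hm0 : 0 < m := by
    rw [hm]; exact_mod_cast Nat.lt_of_lt_of_le (Nat.succ_pos t') htX
  have step1 : ∑ R ∈ P, ∑ a ∈ Y ∩ R, (f (S ∪ R) - f (S ∪ R.erase a))
      ≤ ∑ R ∈ P, (f (S ∪ R) - f S) := by
    apply Finset.sum_le_sum
    intro R _
    refine le_trans (Finset.sum_le_sum_of_subset_of_nonneg Finset.inter_subset_right ?_)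
      (telescope_lower f hmono hsub S R)
    intro a _ _
    have : f (S ∪ R.erase a) ≤ f (S ∪ R) :=
      hmono _ _ (Finset.union_subset_union_right (Finset.erase_subset _ _))
    linarith
  have step2 : ∀ a ∈ Y, ((t':ℝ)+1) * (τ * (P.card : ℝ))
      ≤ m * ∑ R ∈ P.filter (a ∈ ·), (f (S ∪ R) - f (S ∪ R.erase a)) := by
    intro a haY
    have haX : a ∈ X := hYX haY
    set h : Finset α → ℝ := fun Q => f (insert a (S ∪ Q)) - f (S ∪ Q) with hh
    have hanti : ∀ Q Q' : Finset α, Q ⊆ Q' → h Q' ≤ h Q := by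
      intro Q Q' hQQ
      exact gsub' f hmono hsub (S ∪ Q) (S ∪ Q') (Finset.union_subset_union_right hQQ) a
    have hrw : ∑ R ∈ P.filter (a ∈ ·), (f (S ∪ R) - f (S ∪ R.erase a))
        = ∑ R' ∈ Finset.powersetCard t' (X.erase a), h R' := by
      rw [← B1 X a haX t' h]
      apply Finset.sum_congr rfl
      intro R hR
      simp only [Finset.mem_filter] at hR
      have : S ∪ R = insert a (S ∪ R.erase a) := by
        rw [← Finset.union_insert, Finset.insert_erase hR.2]
      rw [hh]; simp only []
      rw [← this]
    have havg := avg_down X a haX t' htX h hanti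
    have hthr' := hthr a haY
    have hsame : ∑ R ∈ P, h (R.erase a)
        = ∑ R ∈ P, (f (insert a (S ∪ R.erase a)) - f (S ∪ R.erase a)) := rfl
    rw [hrw]
    calc ((t':ℝ)+1) * (τ * (P.card : ℝ)) ≤ ((t':ℝ)+1) * ∑ R ∈ P, h (R.erase a) := by
          apply mul_le_mul_of_nonneg_left _ (by positivity)
          rw [hsame]; exact hthr'
      _ ≤ m * ∑ R' ∈ Finset.powersetCard t' (X.erase a), h R' := havg
  have step3 : (Y.card : ℝ) * (((t':ℝ)+1) * (τ * (P.card : ℝ)))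
      ≤ m * ∑ a ∈ Y, ∑ R ∈ P.filter (a ∈ ·), (f (S ∪ R) - f (S ∪ R.erase a)) := by
    rw [Finset.mul_sum]
    calc (Y.card : ℝ) * (((t':ℝ)+1) * (τ * (P.card : ℝ)))
        = ∑ _a ∈ Y, ((t':ℝ)+1) * (τ * (P.card : ℝ)) := by
          rw [Finset.sum_const, nsmul_eq_mul]
      _ ≤ _ := Finset.sum_le_sum step2
  have hswap := swap_mem P Y (fun a R => f (S ∪ R) - f (S ∪ R.erase a))
  have final : (Y.card : ℝ) * (((t':ℝ)+1) * (τ * (P.card : ℝ)))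
      ≤ m * ∑ R ∈ P, (f (S ∪ R) - f S) := by
    refine le_trans step3 ?_
    rw [← hswap]
    exact mul_le_mul_of_nonneg_left step1 (le_of_lt hm0)
  convert final using 2
  push_cast; ring
end master

end Stmt7Aux
set_option maxHeartbeats 2000000 in
/-- Lemma 7 of the paper: every epoch of Amortized-Filtering consists of at
most `⌈log_{1+ε/2} n⌉` filtering iterations: after `ρ` iterations at most `k/r` elements
survive, the Filter subroutine terminates, and the epoch ends. -/
theorem stmt7 {α : Type*} [Fintype α] [DecidableEq α]
    (f : Finset α → ℝ)
    (hmono : ∀ A B : Finset α, A ⊆ B → f A ≤ f B)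
    (hsub : ∀ A B : Finset α, A ⊆ B → ∀ a ∉ B,
      f (insert a B) - f B ≤ f (insert a A) - f A)
    (k r : ℕ) (hk1 : 1 ≤ k) (hkn : k ≤ Fintype.card α) (hr : 1 ≤ r) (hrk : r ∣ k)
    (OPT : ℝ) (hOPTub : ∀ T : Finset α, T.card ≤ k → f T ≤ OPT)
    (hOPTmem : ∃ T : Finset α, T.card ≤ k ∧ f T = OPT)
    (ε : ℝ) (hε0 : 0 < ε) (hε1 : ε < 1 / 2)
    (ρ : ℕ) (hρdef : ρ = ⌈Real.logb (1 + ε / 2) (Fintype.card α)⌉₊)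
    (hr20 : (20 : ℝ) * ρ / ε ≤ r)
    (S : Finset α) (hS : f S ≤ OPT)
    (Sc : ℕ → Finset α) (hSc0 : Sc 0 = S) (hSc1 : S ⊆ Sc 1)
    (hScchain : ∀ i, 1 ≤ i → i < ρ → Sc i ⊆ Sc (i + 1))
    (hepoch : ∀ i, 1 ≤ i → i ≤ ρ → f (Sc i) - f S ≤ (ε / 20) * (OPT - f S))
    (X : ℕ → Finset α) (hX1 : X 1 = Finset.univ)
    (hlow : ∀ i, 1 ≤ i → i ≤ ρ →
      expUnif (X i) (min (k / r) (X i).card) (fun R => marg f (Sc i) R)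
        < ((1 - ε) / r) * (OPT - f (Sc i)))
    (hXrec : ∀ i, 1 ≤ i → i ≤ ρ → ∀ a : α,
      a ∈ X (i + 1) ↔ a ∈ X i ∧
        (1 + ε / 2) * (1 - ε) * (OPT - f (Sc i)) / k ≤
          expUnif (X i) (min (k / r) (X i).card)
            (fun R => f (insert a (Sc i ∪ R.erase a)) - f (Sc i ∪ R.erase a))) :
    (X (ρ + 1)).card ≤ k / r ∧
    ((1 - ε) / r) * (OPT - f (Sc ρ)) ≤
      expUnif (X (ρ + 1)) (min (k / r) (X (ρ + 1)).card) (fun R => marg f (Sc ρ) R) ∧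
    (ε / 20) * (OPT - f S) ≤ marg f S ((Sc ρ \ S) ∪ X (ρ + 1)) := by
  classical
  obtain ⟨O, hOk, hOf⟩ := hOPTmem
  have hb1 : (1:ℝ) < 1 + ε / 2 := by linarith
  have hrpos : (0:ℝ) < r := by exact_mod_cast hr
  have hkpos : (0:ℝ) < k := by exact_mod_cast hk1
  have hkr1 : 1 ≤ k / r :=
    (Nat.one_le_div_iff (Nat.lt_of_lt_of_le Nat.zero_lt_one hr)).2 (Nat.le_of_dvd hk1 hrk)
  by_cases hρ0 : ρ = 0
  · -- degenerate case: the ground set is a single element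
    subst hρ0
    have hn1 : Fintype.card α = 1 := by
      have h0 : ⌈Real.logb (1 + ε / 2) (Fintype.card α)⌉₊ = 0 := hρdef.symm
      have hn1' : 1 ≤ Fintype.card α := le_trans hk1 hkn
      by_contra hne
      have h2 : 2 ≤ Fintype.card α := by omega
      have : (1:ℝ) < (Fintype.card α : ℝ) := by exact_mod_cast h2
      have hpos := Real.logb_pos hb1 this
      have := Nat.ceil_pos.2 hpos
      omega
    have hk' : k = 1 := le_antisymm (le_trans hkn (le_of_eq hn1)) hk1
    have hr' : r = 1 := Nat.dvd_one.mp (hk' ▸ hrk)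
    have hucard : (Finset.univ : Finset α).card = 1 := by
      rw [Finset.card_univ, hn1]
    have hkr : k / r = 1 := by rw [hk', hr']
    have hmin : min (k / r) (X 1).card = 1 := by
      rw [hkr, hX1, hucard]; exact min_self 1
    have hpc : Finset.powersetCard 1 (X 1) = {X 1} := by
      have hc : (X 1).card = 1 := by rw [hX1, hucard]
      have h := Finset.powersetCard_self (X 1)
      rwa [hc] at h
    have hexp : expUnif (X 1) (min (k / r) (X 1).card) (fun R => marg f (Sc 0) R)
        = f (Finset.univ) - f S := by
      rw [hmin, expUnif, hpc]
      simp only [Finset.sum_singleton, Finset.card_singleton, Nat.cast_one, div_one, marg,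
        hSc0, hX1, Finset.union_eq_right.2 (Finset.subset_univ S)]
    have hfu : OPT ≤ f Finset.univ := by
      rw [← hOf]; exact hmono O Finset.univ (Finset.subset_univ O)
    have hd0 : 0 ≤ OPT - f S := by linarith
    refine ⟨?_, ?_, ?_⟩
    · rw [hX1, hucard, hkr]
    · rw [hexp, hr']
      push_cast
      rw [hSc0]
      nlinarith
    · rw [hSc0, marg]
      have : S ∪ ((S \ S) ∪ X 1) = Finset.univ := by
        rw [Finset.sdiff_self, hX1]
        simp
      rw [this]
      nlinarith
  -- main case
  have hρ1 : 1 ≤ ρ := Nat.one_le_iff_ne_zero.2 hρ0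
  have hε1' : ε < 1 := by linarith
  have hSsub : ∀ i, 1 ≤ i → i ≤ ρ → S ⊆ Sc i := by
    intro i hi
    induction i, hi using Nat.le_induction with
    | base => intro _; exact hSc1
    | succ m hm ih => intro hle; exact (ih (by omega)).trans (hScchain m hm (by omega))
  have hScle : ∀ i j, 1 ≤ i → i ≤ j → j ≤ ρ → Sc i ⊆ Sc j := by
    intro i j h1 hij
    induction j, hij using Nat.le_induction with
    | base => intro _; exact Finset.Subset.refl _
    | succ m hm ih => intro hle; exact (ih (by omega)).trans (hScchain m (by omega) (by omega))
  have hXdec : ∀ i, 1 ≤ i → i ≤ ρ → X (i+1) ⊆ X i :=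
    fun i h1 h2 a ha => ((hXrec i h1 h2 a).1 ha).1
  have hXle : ∀ i j, 1 ≤ i → i ≤ j → j ≤ ρ + 1 → X j ⊆ X i := by
    intro i j h1 hij
    induction j, hij using Nat.le_induction with
    | base => intro _; exact Finset.Subset.refl _
    | succ m hm ih => intro hle; exact (hXdec m (by omega) (by omega)).trans (ih (by omega))
  have hcpos : ∀ i : ℕ,
      (0:ℝ) < ((Finset.powersetCard (min (k/r) (X i).card) (X i)).card : ℝ) := by
    intro i
    have : 0 < (Finset.powersetCard (min (k/r) (X i).card) (X i)).card := by
      rw [Finset.card_powersetCard]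
      exact Nat.choose_pos (min_le_right _ _)
    exact_mod_cast this
  have hexp_nonneg : ∀ i : ℕ,
      0 ≤ expUnif (X i) (min (k/r) (X i).card) (fun R => marg f (Sc i) R) := by
    intro i
    rw [expUnif]
    apply div_nonneg _ (Nat.cast_nonneg _)
    apply Finset.sum_nonneg
    intro R _
    have := hmono (Sc i) (Sc i ∪ R) Finset.subset_union_left
    rw [marg]; linarith
  have hDpos : ∀ i, 1 ≤ i → i ≤ ρ → 0 < OPT - f (Sc i) := by
    intro i h1 h2
    have h := hlow i h1 h2
    have h0 := hexp_nonneg i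
    have hfrac : 0 < (1 - ε) / r := div_pos (by linarith) hrpos
    nlinarith
  have hDD : ∀ i, 1 ≤ i → i ≤ ρ → OPT - f (Sc i) ≤ OPT - f S := by
    intro i h1 h2
    have := hmono S (Sc i) (hSsub i h1 h2); linarith
  have hDpos0 : 0 < OPT - f S := lt_of_lt_of_le (hDpos 1 le_rfl hρ1) (hDD 1 le_rfl hρ1)
  -- sums versions of hlow / hXrec
  have hsumub : ∀ i, 1 ≤ i → i ≤ ρ →
      ∑ R ∈ Finset.powersetCard (min (k/r) (X i).card) (X i), (f (Sc i ∪ R) - f (Sc i))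
        < ((Finset.powersetCard (min (k/r) (X i).card) (X i)).card : ℝ)
          * ((1-ε)/r * (OPT - f (Sc i))) := by
    intro i h1 h2
    have h := hlow i h1 h2
    rw [expUnif, div_lt_iff₀ (hcpos i)] at h
    simp only [marg] at h
    linarith [h]
  have hthr_sum : ∀ i, 1 ≤ i → i ≤ ρ → ∀ a ∈ X (i+1),
      ((1 + ε/2) * (1-ε) * (OPT - f (Sc i)) / k)
          * ((Finset.powersetCard (min (k/r) (X i).card) (X i)).card : ℝ)
        ≤ ∑ R ∈ Finset.powersetCard (min (k/r) (X i).card) (X i),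
            (f (insert a (Sc i ∪ R.erase a)) - f (Sc i ∪ R.erase a)) := by
    intro i h1 h2 a ha
    have h := ((hXrec i h1 h2 a).1 ha).2
    rw [expUnif, le_div_iff₀ (hcpos i)] at h
    linarith [h]
  have hneg_sum : ∀ i, 1 ≤ i → i ≤ ρ → ∀ a, a ∈ X i → a ∉ X (i+1) →
      ∑ R ∈ Finset.powersetCard (min (k/r) (X i).card) (X i),
          (f (insert a (Sc i ∪ R.erase a)) - f (Sc i ∪ R.erase a))
        ≤ ((1 + ε/2) * (1-ε) * (OPT - f (Sc i)) / k)
          * ((Finset.powersetCard (min (k/r) (X i).card) (X i)).card : ℝ) := by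
    intro i h1 h2 a haX haX'
    have h : ¬ ((1 + ε/2) * (1-ε) * (OPT - f (Sc i)) / k ≤
        expUnif (X i) (min (k/r) (X i).card)
          (fun R => f (insert a (Sc i ∪ R.erase a)) - f (Sc i ∪ R.erase a))) := by
      intro hcon
      exact haX' ((hXrec i h1 h2 a).2 ⟨haX, hcon⟩)
    push_neg at h
    rw [expUnif, div_lt_iff₀ (hcpos i)] at h
    linarith [h]
  -- shrink lemma
  have shrink : ∀ i, 1 ≤ i → i ≤ ρ → k/r < (X i).card →
      ((X (i+1)).card : ℝ) * (1 + ε/2) ≤ ((X i).card : ℝ) := by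
    intro i h1 h2 hbig
    have htmin : min (k/r) (X i).card = k / r := min_eq_left (le_of_lt hbig)
    set d : ℝ := OPT - f (Sc i) with hd
    set τ : ℝ := (1 + ε/2) * (1-ε) * d / k with hτ
    have hdpos : 0 < d := hDpos i h1 h2
    have hM := Stmt7Aux.master f hmono hsub (Sc i) (X i) (X (i+1)) τ (k/r) hkr1
      (le_of_lt hbig) (hXdec i h1 h2) ?thr
    case thr =>
      intro a ha
      have := hthr_sum i h1 h2 a ha
      rw [htmin] at this
      exact this
    set c : ℝ := ((Finset.powersetCard (k/r) (X i)).card : ℝ) with hc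
    have hcpos' : 0 < c := by
      have := hcpos i; rw [htmin] at this; exact this
    have hsum := hsumub i h1 h2
    rw [htmin] at hsum
    have hm0 : (0:ℝ) < ((X i).card : ℝ) := by
      have : 0 < (X i).card := by omega
      exact_mod_cast this
    have hkrcast : ((k/r : ℕ) : ℝ) = (k:ℝ)/(r:ℝ) := by
      rw [Nat.cast_div hrk]; exact ne_of_gt hrpos
    have hknez : (k:ℝ) ≠ 0 := ne_of_gt hkpos
    set u : ℝ := (1-ε) * d * c / r with hu
    have hupos : 0 < u := by
      rw [hu]
      have h1ε : 0 < 1 - ε := by linarith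
      positivity
    have hkk : ((k/r : ℕ):ℝ) * τ = (1+ε/2) * ((1-ε) * d / r) := by
      rw [hkrcast, hτ]
      field_simp
    have e1 : ((X (i+1)).card:ℝ) * (((k/r : ℕ):ℝ) * (τ * c))
        = (((X (i+1)).card:ℝ) * (1+ε/2)) * u := by
      calc ((X (i+1)).card:ℝ) * (((k/r : ℕ):ℝ) * (τ * c))
          = (((k/r : ℕ):ℝ) * τ) * (((X (i+1)).card:ℝ) * c) := by ring
        _ = ((1+ε/2) * ((1-ε) * d / r)) * (((X (i+1)).card:ℝ) * c) := by rw [hkk]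
        _ = (((X (i+1)).card:ℝ) * (1+ε/2)) * u := by rw [hu]; ring
    have e2 : ((X i).card : ℝ) * (c * ((1-ε)/r * d)) = ((X i).card : ℝ) * u := by
      rw [hu]; ring
    have h3 : (((X (i+1)).card:ℝ) * (1+ε/2)) * u < ((X i).card : ℝ) * u := by
      calc (((X (i+1)).card:ℝ) * (1+ε/2)) * u
          = ((X (i+1)).card:ℝ) * (((k/r : ℕ):ℝ) * (τ * c)) := e1.symm
        _ ≤ ((X i).card : ℝ) * ∑ R ∈ Finset.powersetCard (k/r) (X i),
              (f (Sc i ∪ R) - f (Sc i)) := hM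
        _ < ((X i).card : ℝ) * (c * ((1-ε)/r * d)) := by
              exact mul_lt_mul_of_pos_left hsum hm0
        _ = ((X i).card : ℝ) * u := e2
    exact le_of_lt (lt_of_mul_lt_mul_right h3 hupos.le)
  -- geometric decay induction
  have hind : ∀ j, 1 ≤ j → j ≤ ρ + 1 →
      ((X j).card ≤ k / r ∨ ((1+ε/2:ℝ)^(j-1) * ((X j).card:ℝ) ≤ (Fintype.card α : ℝ))) := by
    intro j hj
    induction j, hj using Nat.le_induction with
    | base =>
      intro _
      right
      simp only [Nat.sub_self, pow_zero, one_mul, hX1, Finset.card_univ, le_refl]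
    | succ m hm ih =>
      intro hle
      have hmρ : m ≤ ρ := by omega
      rcases ih (by omega) with hc | hc
      · exact Or.inl (le_trans (Finset.card_le_card (hXdec m hm hmρ)) hc)
      · by_cases hbig : k/r < (X m).card
        · right
          have hs := shrink m hm hmρ hbig
          have hee : (m+1-1) = (m-1)+1 := by omega
          rw [hee, pow_succ]
          have hpnn : (0:ℝ) ≤ (1+ε/2:ℝ)^(m-1) := by positivity
          calc (1+ε/2:ℝ)^(m-1) * (1+ε/2) * ((X (m+1)).card:ℝ)
              = (1+ε/2:ℝ)^(m-1) * (((X (m+1)).card:ℝ) * (1+ε/2)) := by ring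
            _ ≤ (1+ε/2:ℝ)^(m-1) * ((X m).card:ℝ) := mul_le_mul_of_nonneg_left hs hpnn
            _ ≤ (Fintype.card α : ℝ) := hc
        · exact Or.inl (le_trans (Finset.card_le_card (hXdec m hm hmρ)) (not_lt.1 hbig))
  -- (1+ε/2)^ρ ≥ n
  have hbρ : (Fintype.card α : ℝ) ≤ (1+ε/2:ℝ)^ρ := by
    have hn0 : (0:ℝ) < (Fintype.card α : ℝ) := by
      have : 0 < Fintype.card α := lt_of_lt_of_le hk1 hkn
      exact_mod_cast this
    have hlogb : Real.logb (1+ε/2) (Fintype.card α) ≤ (ρ:ℝ) := by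
      rw [hρdef]; exact_mod_cast Nat.le_ceil _
    have heq := Real.rpow_logb (by linarith : (0:ℝ) < 1+ε/2)
      (by intro h; linarith : (1+ε/2:ℝ) ≠ 1) hn0
    have h2 : (1+ε/2:ℝ) ^ (Real.logb (1+ε/2) (Fintype.card α))
        ≤ (1+ε/2:ℝ) ^ (ρ:ℝ) := Real.rpow_le_rpow_of_exponent_le (le_of_lt hb1) hlogb
    rw [heq, Real.rpow_natCast] at h2
    exact h2
  -- Goal 1
  have goal1 : (X (ρ+1)).card ≤ k / r := by
    rcases hind (ρ+1) (by omega) le_rfl with h | h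
    · exact h
    · have he : ρ + 1 - 1 = ρ := by omega
      rw [he] at h
      have hn1 : (1:ℝ) ≤ (Fintype.card α : ℝ) := by
        have : 1 ≤ Fintype.card α := le_trans hk1 hkn
        exact_mod_cast this
      have hcnn : (0:ℝ) ≤ ((X (ρ+1)).card : ℝ) := Nat.cast_nonneg _
      have hn0' : (0:ℝ) < (Fintype.card α : ℝ) := lt_of_lt_of_le one_pos hn1
      have hcard1 : ((X (ρ+1)).card : ℝ) ≤ 1 := by
        have h4 : (Fintype.card α : ℝ) * ((X (ρ+1)).card : ℝ)
            ≤ (1+ε/2:ℝ)^ρ * ((X (ρ+1)).card : ℝ) := mul_le_mul_of_nonneg_right hbρ hcnn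
        have h5 : (Fintype.card α : ℝ) * ((X (ρ+1)).card : ℝ)
            ≤ (Fintype.card α : ℝ) * 1 := by rw [mul_one]; exact le_trans h4 h
        exact le_of_mul_le_mul_left h5 hn0'
      have : (X (ρ+1)).card ≤ 1 := by exact_mod_cast hcard1
      exact le_trans this hkr1
  -- the surviving-set value argument via the optimal solution O
  set A : ℕ → Finset α := fun i => (O ∩ X i) \ X (i+1) with hA
  set D : ℝ := OPT - f S with hD
  have stepE' : ∀ i, 1 ≤ i → i ≤ ρ →
      f (Sc i ∪ A i) - f (Sc i)
        ≤ (1-ε)/r * D + ((A i).card : ℝ) * ((1+ε/2)*(1-ε)*D/k) := by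
    intro i h1 h2
    set d : ℝ := OPT - f (Sc i) with hd
    set t := min (k/r) (X i).card with ht
    set P := Finset.powersetCard t (X i) with hP
    have hc : (0:ℝ) < (P.card : ℝ) := hcpos i
    have hpt : ∀ R ∈ P, f (Sc i ∪ A i) - f (Sc i)
        ≤ (f (Sc i ∪ R) - f (Sc i))
          + ∑ a ∈ A i, (f (insert a (Sc i ∪ R.erase a)) - f (Sc i ∪ R.erase a)) :=
      fun R _ => Stmt7Aux.pointE f hmono hsub (Sc i) (A i) R
    have hsum1 : (P.card : ℝ) * (f (Sc i ∪ A i) - f (Sc i))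
        ≤ ∑ R ∈ P, ((f (Sc i ∪ R) - f (Sc i))
          + ∑ a ∈ A i, (f (insert a (Sc i ∪ R.erase a)) - f (Sc i ∪ R.erase a))) := by
      calc (P.card : ℝ) * (f (Sc i ∪ A i) - f (Sc i))
          = ∑ _R ∈ P, (f (Sc i ∪ A i) - f (Sc i)) := by rw [Finset.sum_const, nsmul_eq_mul]
        _ ≤ _ := Finset.sum_le_sum hpt
    rw [Finset.sum_add_distrib, Finset.sum_comm] at hsum1
    have hinner : ∀ a ∈ A i,
        ∑ R ∈ P, (f (insert a (Sc i ∪ R.erase a)) - f (Sc i ∪ R.erase a))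
          ≤ ((1 + ε/2) * (1-ε) * d / k) * (P.card : ℝ) := by
      intro a ha
      have haXi : a ∈ X i := (Finset.mem_inter.1 (Finset.mem_sdiff.1 ha).1).2
      have haX' : a ∉ X (i+1) := (Finset.mem_sdiff.1 ha).2
      exact hneg_sum i h1 h2 a haXi haX'
    have hsum2 : ∑ a ∈ A i, ∑ R ∈ P,
        (f (insert a (Sc i ∪ R.erase a)) - f (Sc i ∪ R.erase a))
          ≤ ((A i).card : ℝ) * (((1 + ε/2) * (1-ε) * d / k) * (P.card : ℝ)) := by
      calc ∑ a ∈ A i, ∑ R ∈ P, (f (insert a (Sc i ∪ R.erase a)) - f (Sc i ∪ R.erase a))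
          ≤ ∑ _a ∈ A i, ((1 + ε/2) * (1-ε) * d / k) * (P.card : ℝ) :=
            Finset.sum_le_sum hinner
        _ = _ := by rw [Finset.sum_const, nsmul_eq_mul]
    have hsum3 := hsumub i h1 h2
    have hstep : f (Sc i ∪ A i) - f (Sc i)
        ≤ (1-ε)/r * d + ((A i).card : ℝ) * ((1+ε/2)*(1-ε)*d/k) := by
      have hmul : (P.card : ℝ) * (f (Sc i ∪ A i) - f (Sc i))
          ≤ (P.card : ℝ) * ((1-ε)/r * d + ((A i).card : ℝ) * ((1+ε/2)*(1-ε)*d/k)) := by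
        have e : (P.card : ℝ) * ((1-ε)/r * d + ((A i).card : ℝ) * ((1+ε/2)*(1-ε)*d/k))
            = (P.card : ℝ) * ((1-ε)/r * d)
              + ((A i).card : ℝ) * (((1 + ε/2) * (1-ε) * d / k) * (P.card : ℝ)) := by ring
        rw [e]
        linarith [hsum1, hsum2, hsum3]
      exact le_of_mul_le_mul_left hmul hc
    have hdD : d ≤ D := hDD i h1 h2
    have h1e : (0:ℝ) ≤ (1-ε)/r := le_of_lt (div_pos (by linarith) hrpos)
    have h2e : (0:ℝ) ≤ (1+ε/2)*(1-ε)/k :=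
      le_of_lt (div_pos (mul_pos (by linarith) (by linarith)) hkpos)
    have hx1 : (1-ε)/r * d ≤ (1-ε)/r * D := mul_le_mul_of_nonneg_left hdD h1e
    have hx2 : ((A i).card : ℝ) * ((1+ε/2)*(1-ε)*d/k)
        ≤ ((A i).card : ℝ) * ((1+ε/2)*(1-ε)*D/k) := by
      apply mul_le_mul_of_nonneg_left _ (Nat.cast_nonneg _)
      have e1 : (1+ε/2)*(1-ε)*d/k = ((1+ε/2)*(1-ε)/k) * d := by ring
      have e2 : (1+ε/2)*(1-ε)*D/k = ((1+ε/2)*(1-ε)/k) * D := by ring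
      rw [e1, e2]
      exact mul_le_mul_of_nonneg_left hdD h2e
    linarith
  -- chain over the filtered-out elements of O
  have chain : ∀ j, j ≤ ρ → f (Sc ρ ∪ (O \ X (j+1))) - f (Sc ρ)
      ≤ ∑ i ∈ Finset.Icc 1 j, (f (Sc ρ ∪ A i) - f (Sc ρ)) := by
    intro j
    induction j with
    | zero =>
      intro _
      have e : O \ X 1 = ∅ := by rw [hX1]; simp
      rw [e, Finset.union_empty]
      have e2 : Finset.Icc 1 0 = (∅ : Finset ℕ) := by decide
      rw [e2, Finset.sum_empty]
      linarith
    | succ m ih =>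
      intro hm1
      have hsubset : O \ X (m+1+1) ⊆ (O \ X (m+1)) ∪ A (m+1) := by
        intro a ha
        rw [Finset.mem_sdiff] at ha
        rw [Finset.mem_union, Finset.mem_sdiff]
        by_cases hx : a ∈ X (m+1)
        · right
          simp only [hA, Finset.mem_sdiff, Finset.mem_inter]
          exact ⟨⟨ha.1, hx⟩, ha.2⟩
        · left; exact ⟨ha.1, hx⟩
      have h1 : f (Sc ρ ∪ (O \ X (m+1+1))) ≤ f (Sc ρ ∪ ((O \ X (m+1)) ∪ A (m+1))) :=
        hmono _ _ (Finset.union_subset_union_right hsubset)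
      have h2 : f (Sc ρ ∪ ((O \ X (m+1)) ∪ A (m+1))) - f (Sc ρ ∪ (O \ X (m+1)))
          ≤ f (Sc ρ ∪ A (m+1)) - f (Sc ρ) := by
        have hma := Stmt7Aux.marg_anti f hmono hsub (A (m+1)) (Sc ρ) (Sc ρ ∪ (O \ X (m+1)))
          Finset.subset_union_left
        rw [← Finset.union_assoc]
        exact hma
      have h3 := ih (by omega)
      rw [Finset.sum_Icc_succ_top (by omega : 1 ≤ m+1)]
      linarith
  -- total removed cardinality is at most k
  have cards : ∀ j, j ≤ ρ → ∑ i ∈ Finset.Icc 1 j, (A i).card ≤ (O \ X (j+1)).card := by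
    intro j
    induction j with
    | zero =>
      intro _
      have e2 : Finset.Icc 1 0 = (∅ : Finset ℕ) := by decide
      rw [e2, Finset.sum_empty]
      exact Nat.zero_le _
    | succ m ih =>
      intro hm1
      rw [Finset.sum_Icc_succ_top (by omega : 1 ≤ m+1)]
      have hdisj : Disjoint (O \ X (m+1)) (A (m+1)) := by
        rw [Finset.disjoint_left]
        intro a ha haA
        rw [Finset.mem_sdiff] at ha
        simp only [hA, Finset.mem_sdiff, Finset.mem_inter] at haA
        exact ha.2 haA.1.2
      have hsub2 : (O \ X (m+1)) ∪ A (m+1) ⊆ O \ X (m+1+1) := by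
        intro a ha
        rw [Finset.mem_union] at ha
        rw [Finset.mem_sdiff]
        rcases ha with h | h
        · rw [Finset.mem_sdiff] at h
          have hXsub := hXdec (m+1) (by omega) (by omega)
          exact ⟨h.1, fun hc => h.2 (hXsub hc)⟩
        · simp only [hA, Finset.mem_sdiff, Finset.mem_inter] at h
          exact ⟨h.1.1, h.2⟩
      calc ∑ i ∈ Finset.Icc 1 m, (A i).card + (A (m+1)).card
          ≤ (O \ X (m+1)).card + (A (m+1)).card := by
            have := ih (by omega); omega
        _ = ((O \ X (m+1)) ∪ A (m+1)).card := (Finset.card_union_of_disjoint hdisj).symm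
        _ ≤ (O \ X (m+1+1)).card := Finset.card_le_card hsub2
  have hcardsk : ((∑ i ∈ Finset.Icc 1 ρ, (A i).card : ℕ) : ℝ) ≤ (k : ℝ) := by
    have h1 : ∑ i ∈ Finset.Icc 1 ρ, (A i).card ≤ (O \ X (ρ+1)).card := cards ρ le_rfl
    have h2 : (O \ X (ρ+1)).card ≤ O.card := Finset.card_le_card (Finset.sdiff_subset)
    exact_mod_cast le_trans h1 (le_trans h2 hOk)
  -- assemble the lower bound on the value of the surviving set
  have hB : OPT - f (Sc ρ) ≤ (f (Sc ρ ∪ (O ∩ X (ρ+1))) - f (Sc ρ))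
      + (f (Sc ρ ∪ (O \ X (ρ+1))) - f (Sc ρ)) := by
    have e : (Sc ρ ∪ (O ∩ X (ρ+1))) ∪ (O \ X (ρ+1)) = Sc ρ ∪ O := by
      rw [Finset.union_assoc]
      congr 1
      ext a
      simp only [Finset.mem_union, Finset.mem_inter, Finset.mem_sdiff]
      tauto
    have h1 : OPT ≤ f (Sc ρ ∪ O) := by
      rw [← hOf]; exact hmono O _ Finset.subset_union_right
    have h2 := Stmt7Aux.marg_anti f hmono hsub (O \ X (ρ+1)) (Sc ρ)
      (Sc ρ ∪ (O ∩ X (ρ+1))) Finset.subset_union_left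
    rw [e] at h2
    linarith
  have hAmono : f (Sc ρ ∪ (O ∩ X (ρ+1))) ≤ f (Sc ρ ∪ X (ρ+1)) :=
    hmono _ _ (Finset.union_subset_union_right Finset.inter_subset_right)
  have hsumE : ∑ i ∈ Finset.Icc 1 ρ, (f (Sc ρ ∪ A i) - f (Sc ρ))
      ≤ (ρ:ℝ) * ((1-ε)/r * D) + (k:ℝ) * ((1+ε/2)*(1-ε)*D/k) := by
    have hterm : ∀ i ∈ Finset.Icc 1 ρ, f (Sc ρ ∪ A i) - f (Sc ρ)
        ≤ (1-ε)/r * D + ((A i).card : ℝ) * ((1+ε/2)*(1-ε)*D/k) := by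
      intro i hi
      rw [Finset.mem_Icc] at hi
      have hdrop : f (Sc ρ ∪ A i) - f (Sc ρ) ≤ f (Sc i ∪ A i) - f (Sc i) :=
        Stmt7Aux.marg_anti f hmono hsub (A i) (Sc i) (Sc ρ) (hScle i ρ hi.1 hi.2 le_rfl)
      exact le_trans hdrop (stepE' i hi.1 hi.2)
    have h2e : (0:ℝ) ≤ (1+ε/2)*(1-ε)*D/k := by
      apply div_nonneg _ hkpos.le
      have : (0:ℝ) < (1+ε/2)*(1-ε) := mul_pos (by linarith) (by linarith)
      nlinarith [hDpos0]
    calc ∑ i ∈ Finset.Icc 1 ρ, (f (Sc ρ ∪ A i) - f (Sc ρ))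
        ≤ ∑ i ∈ Finset.Icc 1 ρ, ((1-ε)/r * D + ((A i).card : ℝ) * ((1+ε/2)*(1-ε)*D/k)) :=
          Finset.sum_le_sum hterm
      _ = (ρ:ℝ) * ((1-ε)/r * D)
            + ((∑ i ∈ Finset.Icc 1 ρ, (A i).card : ℕ) : ℝ) * ((1+ε/2)*(1-ε)*D/k) := by
          rw [Finset.sum_add_distrib, Finset.sum_const, Nat.card_Icc, nsmul_eq_mul]
          push_cast
          rw [Finset.sum_mul]
      _ ≤ (ρ:ℝ) * ((1-ε)/r * D) + (k:ℝ) * ((1+ε/2)*(1-ε)*D/k) := by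
          have := mul_le_mul_of_nonneg_right hcardsk h2e
          linarith
  have hρr : (ρ:ℝ) * ((1-ε)/r * D) ≤ ε/20 * D := by
    have h20 : 20 * (ρ:ℝ) ≤ (r:ℝ) * ε := by
      have := (div_le_iff₀ hε0).1 hr20
      linarith
    have hfrac : (ρ:ℝ) * (1-ε) / r ≤ ε/20 := by
      rw [div_le_iff₀ hrpos]
      nlinarith [mul_nonneg (Nat.cast_nonneg ρ : (0:ℝ) ≤ (ρ:ℝ)) hε0.le]
    have e : (ρ:ℝ) * ((1-ε)/r * D) = ((ρ:ℝ) * (1-ε) / r) * D := by ring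
    rw [e]
    exact mul_le_mul_of_nonneg_right hfrac hDpos0.le
  have hkq : (k:ℝ) * ((1+ε/2)*(1-ε)*D/k) = (1+ε/2)*(1-ε)*D := by
    rw [mul_comm]
    exact div_mul_cancel₀ _ (ne_of_gt hkpos)
  have hDρ : (1 - ε/20) * D ≤ OPT - f (Sc ρ) := by
    have := hepoch ρ hρ1 le_rfl
    rw [hD]; linarith
  have keyF : 2*ε/5 * D ≤ f (Sc ρ ∪ X (ρ+1)) - f (Sc ρ) := by
    have hnum : 2*ε/5 * D ≤ (1 - ε/20) * D - ε/20 * D - (1+ε/2)*(1-ε)*D := by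
      nlinarith [mul_nonneg (mul_self_nonneg ε) hDpos0.le]
    linarith [hB, hAmono, chain ρ le_rfl, hsumE, hρr, hkq, hDρ]
  -- final conclusions
  have hDρpos : 0 < OPT - f (Sc ρ) := hDpos ρ hρ1 le_rfl
  have hDρD : OPT - f (Sc ρ) ≤ D := hDD ρ hρ1 le_rfl
  have hr20' : (20:ℝ) ≤ ε * r := by
    have h20 : 20 * (ρ:ℝ) ≤ (r:ℝ) * ε := by
      have := (div_le_iff₀ hε0).1 hr20
      linarith
    have : (1:ℝ) ≤ (ρ:ℝ) := by exact_mod_cast hρ1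
    nlinarith
  refine ⟨goal1, ?_, ?_⟩
  · -- Filter terminates
    have hmin : min (k/r) (X (ρ+1)).card = (X (ρ+1)).card := min_eq_right goal1
    have hpc : Finset.powersetCard (X (ρ+1)).card (X (ρ+1)) = {X (ρ+1)} :=
      Finset.powersetCard_self _
    have hexp : expUnif (X (ρ+1)) (min (k/r) (X (ρ+1)).card) (fun R => marg f (Sc ρ) R)
        = f (Sc ρ ∪ X (ρ+1)) - f (Sc ρ) := by
      rw [hmin, expUnif, hpc]
      simp [marg]
    rw [hexp]
    have h1 : (1-ε)/r * (OPT - f (Sc ρ)) ≤ ε/20 * (OPT - f (Sc ρ)) := by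
      apply mul_le_mul_of_nonneg_right _ hDρpos.le
      rw [div_le_iff₀ hrpos]
      nlinarith
    have h2 : ε/20 * (OPT - f (Sc ρ)) ≤ 2*ε/5 * D := by
      nlinarith [hDρpos, hε0]
    linarith [keyF]
  · -- epoch ends
    have hSρ : S ⊆ Sc ρ := hSsub ρ hρ1 le_rfl
    have e : S ∪ ((Sc ρ \ S) ∪ X (ρ+1)) = Sc ρ ∪ X (ρ+1) := by
      rw [← Finset.union_assoc, Finset.union_sdiff_of_subset hSρ]
    rw [marg, e]
    have hfS : f S ≤ f (Sc ρ) := hmono _ _ hSρ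
    have : ε/20 * D ≤ 2*ε/5 * D := by nlinarith [hDpos0, hε0]
    rw [hD] at keyF ⊢
    linarith
end

section
/- Let f : 2^N → ℝ be a monotone submodular function, let ε ∈ (0,1/2), let r be a positive integer dividing k, and let v* be a real number with (1 − ε/20)·OPT ≤ v* ≤ OPT. Let S ⊆ N with f(S) < v* and let X ⊆ N with |X| ≥ k/r. Suppose that for each a ∈ X there is a real number v(a) with |v(a) − E_{R∼U(X)}[f_{S∪(R\{a})}(a)]| ≤ (ε/(20k))·(1+ε/2)(1−ε)·(v* − f(S)), and there is a real number v_X with |v_X − E_{R∼U(X)}[f_S(R)]| ≤ (ε/(20r))·(1−ε)·(v* − f(S)) and v_X < ((1−ε)/r)·(v* − f(S)). Define X' := {a ∈ X : v(a) ≥ (1+ε/2)(1−ε)(v* − f(S))/k}. Then |X'| < |X|/(1+ε/3). -/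
open Finset

section Aux

variable {α : Type*} [DecidableEq α]

lemma count_sum_aux (Y : Finset α) (s : ℕ) (g : Finset α → ℝ) :
    ∑ R ∈ Y.powersetCard (s+1), ∑ a ∈ R, g (R.erase a)
      = ∑ R ∈ Y.powersetCard s, ∑ a ∈ Y \ R, g R := by
  rw [Finset.sum_sigma', Finset.sum_sigma']
  refine Finset.sum_bij' (fun p _ => (⟨p.1.erase p.2, p.2⟩ : Σ _ : Finset α, α))
    (fun p _ => (⟨insert p.2 p.1, p.2⟩ : Σ _ : Finset α, α)) ?_ ?_ ?_ ?_ ?_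
  · intro p hp
    simp only [mem_sigma, mem_powersetCard] at hp ⊢
    obtain ⟨⟨hsub, hcard⟩, hmem⟩ := hp
    refine ⟨⟨(erase_subset _ _).trans hsub, ?_⟩, ?_⟩
    · rw [card_erase_of_mem hmem, hcard]; omega
    · exact mem_sdiff.2 ⟨hsub hmem, notMem_erase _ _⟩
  · intro p hp
    simp only [mem_sigma, mem_powersetCard, mem_sdiff] at hp ⊢
    obtain ⟨⟨hsub, hcard⟩, hY, hR⟩ := hp
    exact ⟨⟨insert_subset hY hsub, by rw [card_insert_of_notMem hR, hcard]⟩,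
      mem_insert_self _ _⟩
  · intro p hp
    simp only [mem_sigma, mem_powersetCard] at hp
    exact Sigma.ext (insert_erase hp.2) (by simp)
  · intro p hp
    simp only [mem_sigma, mem_powersetCard, mem_sdiff] at hp
    exact Sigma.ext (erase_insert hp.2.2) (by simp)
  · intro p hp
    simp only [mem_sigma, mem_powersetCard, mem_sdiff] at hp
    rw [show (⟨p.1.erase p.2, p.2⟩ : Σ _ : Finset α, α).1 = p.1.erase p.2 from rfl]

lemma swap_sum_aux (X X' : Finset α) (hX'X : X' ⊆ X) (s : ℕ) (G : α → Finset α → ℝ) :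
    ∑ a ∈ X', ∑ R ∈ (X.erase a).powersetCard s, G a R
      = ∑ R ∈ X.powersetCard (s+1), ∑ a ∈ R ∩ X', G a (R.erase a) := by
  rw [Finset.sum_sigma', Finset.sum_sigma']
  refine Finset.sum_bij' (fun p _ => (⟨insert p.1 p.2, p.1⟩ : Σ _ : Finset α, α))
    (fun p _ => (⟨p.2, p.1.erase p.2⟩ : Σ _ : α, Finset α)) ?_ ?_ ?_ ?_ ?_
  · intro p hp
    simp only [mem_sigma, mem_powersetCard] at hp ⊢
    obtain ⟨hmem, hsub, hcard⟩ := hp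
    have ha : p.1 ∉ p.2 := fun h => (mem_erase.1 (hsub h)).1 rfl
    refine ⟨⟨insert_subset (hX'X hmem) (hsub.trans (erase_subset _ _)), ?_⟩, ?_⟩
    · rw [card_insert_of_notMem ha, hcard]
    · exact mem_inter.2 ⟨mem_insert_self _ _, hmem⟩
  · intro p hp
    simp only [mem_sigma, mem_powersetCard, mem_inter] at hp ⊢
    obtain ⟨⟨hsub, hcard⟩, hR, hX'⟩ := hp
    refine ⟨hX', ?_, ?_⟩
    · intro x hx
      exact mem_erase.2 ⟨(mem_erase.1 hx).1, hsub (erase_subset _ _ hx)⟩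
    · rw [card_erase_of_mem hR, hcard]; omega
  · intro p hp
    simp only [mem_sigma, mem_powersetCard] at hp
    have ha : p.1 ∉ p.2 := fun h => (mem_erase.1 (hp.2.1 h)).1 rfl
    exact Sigma.ext rfl (by simp [erase_insert ha])
  · intro p hp
    simp only [mem_sigma, mem_powersetCard, mem_inter] at hp
    exact Sigma.ext (insert_erase hp.2.1) (by simp)
  · intro p hp
    simp only [mem_sigma, mem_powersetCard] at hp
    have ha : p.1 ∉ p.2 := fun h => (mem_erase.1 (hp.2.1 h)).1 rfl
    rw [show (⟨insert p.1 p.2, p.1⟩ : Σ _ : Finset α, α).1.erase p.1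
        = (insert p.1 p.2).erase p.1 from rfl, erase_insert ha]

variable {f : Finset α → ℝ} {S : Finset α}
variable (hmono : ∀ A B : Finset α, A ⊆ B → f A ≤ f B)
variable (hsub : ∀ A B : Finset α, A ⊆ B → ∀ a ∉ B,
      f (insert a B) - f B ≤ f (insert a A) - f A)

include hmono in
lemma G_nonneg_aux (a : α) (R : Finset α) : 0 ≤ f (insert a (S ∪ R)) - f (S ∪ R) := by
  have := hmono (S ∪ R) (insert a (S ∪ R)) (subset_insert _ _); linarith

include hmono hsub in
lemma G_anti_aux {R' R : Finset α} (a : α) (h : R' ⊆ R) :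
    f (insert a (S ∪ R)) - f (S ∪ R) ≤ f (insert a (S ∪ R')) - f (S ∪ R') := by
  by_cases ha : a ∈ S ∪ R
  · rw [insert_eq_self.2 ha]
    simpa using G_nonneg_aux hmono a R'
  · exact hsub (S ∪ R') (S ∪ R) (union_subset_union_right h) a ha

include hmono hsub in
lemma telescope_aux (R : Finset α) :
    ∑ a ∈ R, (f (insert a (S ∪ R.erase a)) - f (S ∪ R.erase a)) ≤ f (S ∪ R) - f S := by
  classical
  induction R using Finset.induction with
  | empty => simp
  | insert _ _ hx =>
    rename_i x R ih
    rw [Finset.sum_insert hx, erase_insert hx]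
    have h1 : ∀ a ∈ R, f (insert a (S ∪ (insert x R).erase a)) - f (S ∪ (insert x R).erase a)
        ≤ f (insert a (S ∪ R.erase a)) - f (S ∪ R.erase a) := by
      intro a ha
      have hax : a ≠ x := fun h => hx (h ▸ ha)
      rw [erase_insert_of_ne hax.symm]
      exact G_anti_aux hmono hsub a (subset_insert _ _)
    have h2 : ∑ a ∈ R, (f (insert a (S ∪ (insert x R).erase a)) - f (S ∪ (insert x R).erase a))
        ≤ ∑ a ∈ R, (f (insert a (S ∪ R.erase a)) - f (S ∪ R.erase a)) :=
      Finset.sum_le_sum h1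
    have h3 : S ∪ insert x R = insert x (S ∪ R) := by rw [union_insert]
    rw [h3]
    have := hmono (S ∪ R) (insert x (S ∪ R)) (subset_insert _ _)
    linarith

include hmono hsub in
lemma per_a_aux {X : Finset α} {a : α} (ha : a ∈ X) {s : ℕ} (hst : s + 1 ≤ X.card) :
    ((s+1 : ℕ) : ℝ) * ∑ R ∈ X.powersetCard (s+1),
        (f (insert a (S ∪ R.erase a)) - f (S ∪ R.erase a))
      ≤ (X.card : ℝ) * ∑ R ∈ (X.erase a).powersetCard s,
          (f (insert a (S ∪ R)) - f (S ∪ R)) := by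
  set Y := X.erase a with hY
  have haY : a ∉ Y := notMem_erase _ _
  have hYcard : Y.card = X.card - 1 := card_erase_of_mem ha
  have hXins : X = insert a Y := (insert_erase ha).symm
  have hsplit : ∑ R ∈ X.powersetCard (s+1),
      (f (insert a (S ∪ R.erase a)) - f (S ∪ R.erase a))
      = (∑ R ∈ Y.powersetCard (s+1), (f (insert a (S ∪ R)) - f (S ∪ R)))
        + ∑ R ∈ Y.powersetCard s, (f (insert a (S ∪ R)) - f (S ∪ R)) := by
    rw [hXins, powersetCard_succ_insert haY, sum_union, sum_image]
    · congr 1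
      · apply Finset.sum_congr rfl
        intro R hR
        have : a ∉ R := fun h => haY ((mem_powersetCard.1 hR).1 h)
        rw [erase_eq_of_notMem this]
      · apply Finset.sum_congr rfl
        intro R hR
        have : a ∉ R := fun h => haY ((mem_powersetCard.1 hR).1 h)
        rw [erase_insert this]
    · intro R1 h1 R2 h2 he
      have m1 : a ∉ R1 := fun h => haY ((mem_powersetCard.1 h1).1 h)
      have m2 : a ∉ R2 := fun h => haY ((mem_powersetCard.1 h2).1 h)
      rw [← erase_insert m1, ← erase_insert m2, he]
    · rw [disjoint_left]
      intro R hR1 hR2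
      obtain ⟨R', _, rfl⟩ := mem_image.1 hR2
      exact haY ((mem_powersetCard.1 hR1).1 (mem_insert_self _ _))
  have hGanti : ∀ R ∈ Y.powersetCard (s+1),
      ((s+1 : ℕ) : ℝ) * (f (insert a (S ∪ R)) - f (S ∪ R))
        ≤ ∑ x ∈ R, (f (insert a (S ∪ R.erase x)) - f (S ∪ R.erase x)) := by
    intro R hR
    have hcard : R.card = s + 1 := (mem_powersetCard.1 hR).2
    calc ((s+1 : ℕ) : ℝ) * (f (insert a (S ∪ R)) - f (S ∪ R))
        = R.card • (f (insert a (S ∪ R)) - f (S ∪ R)) := by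
          rw [hcard, nsmul_eq_mul]
      _ ≤ ∑ x ∈ R, (f (insert a (S ∪ R.erase x)) - f (S ∪ R.erase x)) :=
          Finset.card_nsmul_le_sum _ _ _
            (fun x _ => G_anti_aux hmono hsub a (erase_subset _ _))
  have hcount : ((s+1 : ℕ) : ℝ) * ∑ R ∈ Y.powersetCard (s+1), (f (insert a (S ∪ R)) - f (S ∪ R))
      ≤ ((Y.card - s : ℕ) : ℝ) * ∑ R ∈ Y.powersetCard s, (f (insert a (S ∪ R)) - f (S ∪ R)) := by
    rw [Finset.mul_sum, Finset.mul_sum]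
    calc ∑ R ∈ Y.powersetCard (s+1), ((s+1 : ℕ) : ℝ) * (f (insert a (S ∪ R)) - f (S ∪ R))
        ≤ ∑ R ∈ Y.powersetCard (s+1), ∑ x ∈ R,
            (f (insert a (S ∪ R.erase x)) - f (S ∪ R.erase x)) :=
          Finset.sum_le_sum hGanti
      _ = ∑ R ∈ Y.powersetCard s, ∑ x ∈ Y \ R, (f (insert a (S ∪ R)) - f (S ∪ R)) :=
          count_sum_aux Y s (fun T => f (insert a (S ∪ T)) - f (S ∪ T))
      _ = ∑ R ∈ Y.powersetCard s, ((Y.card - s : ℕ) : ℝ) * (f (insert a (S ∪ R)) - f (S ∪ R)) := by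
          apply Finset.sum_congr rfl
          intro R hR
          obtain ⟨hsub', hcard'⟩ := mem_powersetCard.1 hR
          rw [Finset.sum_const, card_sdiff_of_subset hsub', hcard', nsmul_eq_mul]
  have hSs : (0:ℝ) ≤ ∑ R ∈ Y.powersetCard s, (f (insert a (S ∪ R)) - f (S ∪ R)) :=
    Finset.sum_nonneg (fun R _ => G_nonneg_aux hmono a R)
  have hcast : ((Y.card - s : ℕ) : ℝ) + ((s+1 : ℕ) : ℝ) = (X.card : ℝ) := by
    have h1 : s ≤ Y.card := by omega
    push_cast [Nat.cast_sub h1]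
    rw [hYcard]
    push_cast [Nat.cast_sub (show 1 ≤ X.card by omega)]
    ring
  rw [hsplit]
  set A := ∑ R ∈ Y.powersetCard (s+1), (f (insert a (S ∪ R)) - f (S ∪ R)) with hA
  set B := ∑ R ∈ Y.powersetCard s, (f (insert a (S ∪ R)) - f (S ∪ R)) with hB
  calc ((s+1 : ℕ) : ℝ) * (A + B) = ((s+1 : ℕ) : ℝ) * A + ((s+1 : ℕ) : ℝ) * B := by ring
    _ ≤ ((Y.card - s : ℕ) : ℝ) * B + ((s+1 : ℕ) : ℝ) * B := by linarith
    _ = (((Y.card - s : ℕ) : ℝ) + ((s+1 : ℕ) : ℝ)) * B := by ring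
    _ = (X.card : ℝ) * B := by rw [hcast]

include hmono hsub in
lemma main_sum_aux {X X' : Finset α} (hX'X : X' ⊆ X) {s : ℕ} (hst : s + 1 ≤ X.card) :
    ((s+1 : ℕ) : ℝ) * ∑ a ∈ X', ∑ R ∈ X.powersetCard (s+1),
        (f (insert a (S ∪ R.erase a)) - f (S ∪ R.erase a))
      ≤ (X.card : ℝ) * ∑ R ∈ X.powersetCard (s+1), (f (S ∪ R) - f S) := by
  rw [Finset.mul_sum]
  calc ∑ a ∈ X', ((s+1 : ℕ) : ℝ) * ∑ R ∈ X.powersetCard (s+1),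
        (f (insert a (S ∪ R.erase a)) - f (S ∪ R.erase a))
      ≤ ∑ a ∈ X', (X.card : ℝ) * ∑ R ∈ (X.erase a).powersetCard s,
          (f (insert a (S ∪ R)) - f (S ∪ R)) :=
        Finset.sum_le_sum (fun a ha => per_a_aux hmono hsub (hX'X ha) hst)
    _ = (X.card : ℝ) * ∑ a ∈ X', ∑ R ∈ (X.erase a).powersetCard s,
          (f (insert a (S ∪ R)) - f (S ∪ R)) := by rw [Finset.mul_sum]
    _ = (X.card : ℝ) * ∑ R ∈ X.powersetCard (s+1), ∑ a ∈ R ∩ X',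
          (f (insert a (S ∪ R.erase a)) - f (S ∪ R.erase a)) := by
        rw [swap_sum_aux X X' hX'X s (fun a T => f (insert a (S ∪ T)) - f (S ∪ T))]
    _ ≤ (X.card : ℝ) * ∑ R ∈ X.powersetCard (s+1), (f (S ∪ R) - f S) := by
        apply mul_le_mul_of_nonneg_left _ (Nat.cast_nonneg _)
        apply Finset.sum_le_sum
        intro R hR
        calc ∑ a ∈ R ∩ X', (f (insert a (S ∪ R.erase a)) - f (S ∪ R.erase a))
            ≤ ∑ a ∈ R, (f (insert a (S ∪ R.erase a)) - f (S ∪ R.erase a)) := by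
              apply Finset.sum_le_sum_of_subset_of_nonneg inter_subset_left
              intro a _ _
              exact G_nonneg_aux hmono a _
          _ ≤ f (S ∪ R) - f S := telescope_aux hmono hsub R

lemma arith_final_aux {A m ε : ℝ} (hA : 0 ≤ A) (hε0 : 0 < ε) (hε1 : ε < 1/2)
    (hkey : A * ((1 + ε/2) * (1 - ε/20)) < m * (1 + ε/20)) : A * (1 + ε/3) < m := by
  have hbr : (0:ℝ) ≤ (1 + ε/2) * (1 - ε/20) - (1 + ε/3) * (1 + ε/20) := by
    nlinarith [mul_nonneg (by linarith : (0:ℝ) ≤ 1/2 - ε) hε0.le]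
  have e1 : (A * (1 + ε/3)) * (1 + ε/20) ≤ A * ((1 + ε/2) * (1 - ε/20)) := by
    nlinarith [mul_nonneg hA hbr]
  exact lt_of_mul_lt_mul_right (lt_of_le_of_lt e1 hkey) (by linarith : (0:ℝ) ≤ 1 + ε/20)

end Aux

/-- Lemma 8 of the paper: the filtering step of the full (sampled)
algorithm, using estimates `v(a)` and `v_X` of the expected marginal contributions and a
guess `v*` of `OPT`, discards a constant fraction of elements: `|X'| < |X|/(1 + ε/3)`. -/
theorem stmt10 {α : Type*} [Fintype α] [DecidableEq α]
    (f : Finset α → ℝ)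
    (hmono : ∀ A B : Finset α, A ⊆ B → f A ≤ f B)
    (hsub : ∀ A B : Finset α, A ⊆ B → ∀ a ∉ B,
      f (insert a B) - f B ≤ f (insert a A) - f A)
    (k r : ℕ) (hk1 : 1 ≤ k) (hkn : k ≤ Fintype.card α) (hr : 1 ≤ r) (hrk : r ∣ k)
    (OPT : ℝ) (hOPTub : ∀ T : Finset α, T.card ≤ k → f T ≤ OPT)
    (hOPTmem : ∃ T : Finset α, T.card ≤ k ∧ f T = OPT)
    (ε : ℝ) (hε0 : 0 < ε) (hε1 : ε < 1 / 2)
    (vstar : ℝ) (hv1 : (1 - ε / 20) * OPT ≤ vstar) (hv2 : vstar ≤ OPT)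
    (S : Finset α) (hS : f S < vstar)
    (X : Finset α) (hX : k / r ≤ X.card)
    (v : α → ℝ)
    (hv : ∀ a ∈ X,
      |v a - expUnif X (k / r)
          (fun R => f (insert a (S ∪ R.erase a)) - f (S ∪ R.erase a))| ≤
        (ε / (20 * k)) * (1 + ε / 2) * (1 - ε) * (vstar - f S))
    (vX : ℝ)
    (hvX1 : |vX - expUnif X (k / r) (fun R => marg f S R)| ≤
      (ε / (20 * r)) * (1 - ε) * (vstar - f S))
    (hvX2 : vX < ((1 - ε) / r) * (vstar - f S))
    (X' : Finset α)
    (hX' : ∀ a : α, a ∈ X' ↔ a ∈ X ∧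
      (1 + ε / 2) * (1 - ε) * (vstar - f S) / k ≤ v a) :
    (X'.card : ℝ) < (X.card : ℝ) / (1 + ε / 3) := by
  classical
  -- basic numeric facts
  have hrk' : r ≤ k := Nat.le_of_dvd hk1 hrk
  have htk : k / r * r = k := Nat.div_mul_cancel hrk
  set t := k / r with htdef
  have ht1 : 1 ≤ t := by
    rw [htdef, Nat.one_le_div_iff (by omega)]; exact hrk'
  obtain ⟨s, hs⟩ : ∃ s, t = s + 1 := ⟨t - 1, by omega⟩
  have hst : s + 1 ≤ X.card := hs ▸ hX
  have hΔ : (0:ℝ) < vstar - f S := by linarith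
  have hX'X : X' ⊆ X := fun a ha => ((hX' a).1 ha).1
  -- cast facts
  have hkR : (k : ℝ) = (t : ℝ) * (r : ℝ) := by
    rw [← htk]; push_cast; ring
  have hrR : (1:ℝ) ≤ (r:ℝ) := by exact_mod_cast hr
  have htR : (1:ℝ) ≤ (t:ℝ) := by exact_mod_cast ht1
  have hkR0 : (0:ℝ) < (k:ℝ) := by exact_mod_cast hk1
  have hmR : (0:ℝ) < (X.card : ℝ) := by
    have : 1 ≤ X.card := le_trans (by omega) hst
    exact_mod_cast this
  -- the common denominator C
  obtain ⟨C, hCdef⟩ : ∃ C : ℝ, C = ((X.powersetCard t).card : ℝ) := ⟨_, rfl⟩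
  have hC : (0:ℝ) < C := by
    rw [hCdef]
    have : (X.powersetCard t).Nonempty := powersetCard_nonempty.2 (by omega)
    exact_mod_cast card_pos.2 this
  -- notation for the sums
  obtain ⟨SA, hSAdef⟩ : ∃ SA : ℝ, SA = ∑ a ∈ X', ∑ R ∈ X.powersetCard t,
      (f (insert a (S ∪ R.erase a)) - f (S ∪ R.erase a)) := ⟨_, rfl⟩
  obtain ⟨SM, hSMdef⟩ : ∃ SM : ℝ, SM = ∑ R ∈ X.powersetCard t, marg f S R := ⟨_, rfl⟩
  -- the combinatorial core
  have hcore : (t : ℝ) * SA ≤ (X.card : ℝ) * SM := by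
    have := main_sum_aux (S := S) hmono hsub hX'X hst
    rw [hSAdef, hSMdef]
    simp only [marg]
    rw [hs]
    exact_mod_cast this
  -- lower bound on each estimate for a ∈ X'
  obtain ⟨L, hLdef⟩ : ∃ L : ℝ, L = (1 + ε / 2) * (1 - ε) * (vstar - f S) / k
      - (ε / (20 * k)) * (1 + ε / 2) * (1 - ε) * (vstar - f S) := ⟨_, rfl⟩
  have hEa : ∀ a ∈ X', L * C ≤ ∑ R ∈ X.powersetCard t,
      (f (insert a (S ∪ R.erase a)) - f (S ∪ R.erase a)) := by
    intro a ha
    have h1 := hv a (hX'X ha)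
    have h2 := ((hX' a).1 ha).2
    have h3 : expUnif X t (fun R => f (insert a (S ∪ R.erase a)) - f (S ∪ R.erase a)) ≥ L := by
      have := abs_le.1 h1
      rw [hLdef]; linarith [this.1, this.2]
    have h4 : expUnif X t (fun R => f (insert a (S ∪ R.erase a)) - f (S ∪ R.erase a))
        = (∑ R ∈ X.powersetCard t, (f (insert a (S ∪ R.erase a)) - f (S ∪ R.erase a))) / C := by
      simp only [expUnif, hCdef]
    rw [h4] at h3
    calc L * C ≤ ((∑ R ∈ X.powersetCard t,
          (f (insert a (S ∪ R.erase a)) - f (S ∪ R.erase a))) / C) * C :=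
        mul_le_mul_of_nonneg_right h3 hC.le
      _ = _ := by field_simp
  have hAL : (X'.card : ℝ) * (L * C) ≤ SA := by
    rw [hSAdef]
    calc (X'.card : ℝ) * (L * C) = X'.card • (L * C) := by rw [nsmul_eq_mul]
      _ ≤ _ := Finset.card_nsmul_le_sum _ _ _ hEa
  -- upper bound on the expected marginal of a random set
  obtain ⟨B, hBdef⟩ : ∃ B : ℝ, B = ((1 - ε) / r) * (vstar - f S)
      + (ε / (20 * r)) * (1 - ε) * (vstar - f S) := ⟨_, rfl⟩
  have hEM : SM < B * C := by
    have h1 := abs_le.1 hvX1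
    have h2 : expUnif X t (fun R => marg f S R) < B := by rw [hBdef]; linarith [h1.1]
    have h3 : expUnif X t (fun R => marg f S R) = SM / C := by
      simp only [expUnif, hSMdef, hCdef]
    rw [h3] at h2
    calc SM = (SM / C) * C := by field_simp
      _ < B * C := mul_lt_mul_of_pos_right h2 hC
  -- combine everything
  have hbig : (t : ℝ) * ((X'.card : ℝ) * (L * C)) < (X.card : ℝ) * (B * C) := by
    calc (t : ℝ) * ((X'.card : ℝ) * (L * C)) ≤ (t : ℝ) * SA :=
        mul_le_mul_of_nonneg_left hAL (by linarith)
      _ ≤ (X.card : ℝ) * SM := hcore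
      _ < (X.card : ℝ) * (B * C) := mul_lt_mul_of_pos_left hEM hmR
  have hkey0 : (t : ℝ) * ((X'.card : ℝ) * L) < (X.card : ℝ) * B := by
    have h' : ((t : ℝ) * ((X'.card : ℝ) * L)) * C < ((X.card : ℝ) * B) * C := by
      linear_combination hbig
    exact lt_of_mul_lt_mul_right h' hC.le
  -- now pure arithmetic
  have hr0 : (0:ℝ) < (r:ℝ) := by linarith
  have hL' : L * (k:ℝ) = (1 + ε/2) * (1 - ε) * (vstar - f S) * (1 - ε/20) := by
    rw [hLdef]; field_simp
  have hB' : B * (r:ℝ) = (1 - ε) * (vstar - f S) * (1 + ε/20) := by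
    rw [hBdef]; field_simp
  have hkey1 : ((X'.card : ℝ) * ((1 + ε / 2) * (1 - ε/20))) * ((1 - ε) * (vstar - f S))
      < ((X.card : ℝ) * (1 + ε/20)) * ((1 - ε) * (vstar - f S)) := by
    have h := mul_lt_mul_of_pos_right hkey0 hr0
    calc ((X'.card : ℝ) * ((1 + ε / 2) * (1 - ε/20))) * ((1 - ε) * (vstar - f S))
        = (X'.card : ℝ) * (L * (k:ℝ)) := by rw [hL']; ring
      _ = ((t : ℝ) * ((X'.card : ℝ) * L)) * (r:ℝ) := by rw [hkR]; ring
      _ < ((X.card : ℝ) * B) * (r:ℝ) := h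
      _ = (X.card : ℝ) * (B * (r:ℝ)) := by ring
      _ = ((X.card : ℝ) * (1 + ε/20)) * ((1 - ε) * (vstar - f S)) := by rw [hB']; ring
  have hD : (0:ℝ) < (1 - ε) * (vstar - f S) :=
    mul_pos (by linarith : (0:ℝ) < 1 - ε) hΔ
  have hkey : (X'.card : ℝ) * ((1 + ε / 2) * (1 - ε/20)) < (X.card : ℝ) * (1 + ε/20) :=
    lt_of_mul_lt_mul_right hkey1 hD.le
  rw [lt_div_iff₀ (by linarith : (0:ℝ) < 1 + ε/3)]
  exact arith_final_aux (Nat.cast_nonneg _) hε0 hε1 hkey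
end

section
/- Let f : 2^N → ℝ be a monotone submodular function, let ε ∈ (0,1/2), let ρ, r be positive integers with r ≥ 20ρ/ε and r dividing k, and let v* be a real number with (1 − ε/20)·OPT ≤ v* ≤ OPT. Let S ⊆ S_1 ⊆ ⋯ ⊆ S_ρ ⊆ S⁺ be subsets of N with f(S) ≤ v* and f(S⁺) − f(S) ≤ (ε/20)·(OPT − f(S)). Let X_1 = N and let X_2, …, X_{ρ+1} ⊆ N satisfy, for every i ∈ {1,…,ρ}: (a) |X_i| ≥ k/r; (b) there is a real number v_i with |v_i − E_{R∼U(X_i)}[f_{S_i}(R)]| ≤ (ε/(20ρ))·(v* − f(S)) and v_i < ((1−ε)/r)·(v* − f(S)); and (c) for each a ∈ X_i there is a real number v_i(a) with |v_i(a) − E_{R∼U(X_i)}[f_{S_i∪(R\{a})}(a)]| ≤ (ε/(20k))·(1+ε/2)(1−ε)·(OPT − f(S)), and {a ∈ X_i : v_i(a) ≥ (1+ε/2)(1−ε)(v* − f(S))/k} ⊆ X_{i+1} ⊆ X_i. Then f_{S⁺}(X_{ρ+1}) ≥ (ε/4)·(1−ε)·(v* − f(S)). -/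
open Finset

section Aux

variable {α : Type*} [DecidableEq α] {f : Finset α → ℝ}

lemma marg_aux0 (hmono : ∀ A B : Finset α, A ⊆ B → f A ≤ f B)
    (hsub : ∀ A B : Finset α, A ⊆ B → ∀ a ∉ B,
      f (insert a B) - f B ≤ f (insert a A) - f A)
    {C A : Finset α} (h : C ⊆ A) (a : α) :
    f (insert a A) - f A ≤ f (insert a C) - f C := by
  by_cases ha : a ∈ A
  · have h1 : insert a A = A := insert_eq_self.mpr ha
    have h2 : f C ≤ f (insert a C) := hmono _ _ (subset_insert a C)
    rw [h1]; linarith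
  · exact hsub C A h a ha

lemma marg_aux1 (hmono : ∀ A B : Finset α, A ⊆ B → f A ≤ f B)
    (hsub : ∀ A B : Finset α, A ⊆ B → ∀ a ∉ B,
      f (insert a B) - f B ≤ f (insert a A) - f A)
    (B : Finset α) :
    ∀ C A : Finset α, C ⊆ A → f (A ∪ B) - f A ≤ f (C ∪ B) - f C := by
  classical
  induction B using Finset.induction_on with
  | empty => intro C A h; simp
  | @insert b B hb ih =>
    intro C A h
    rw [union_insert, union_insert]
    have h1 := marg_aux0 hmono hsub (union_subset_union h (Finset.Subset.refl B)) b
    have h2 := ih C A h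
    linarith

lemma marg_aux2 (hmono : ∀ A B : Finset α, A ⊆ B → f A ≤ f B)
    (hsub : ∀ A B : Finset α, A ⊆ B → ∀ a ∉ B,
      f (insert a B) - f B ≤ f (insert a A) - f A)
    (B : Finset α) (A : Finset α) :
    f (A ∪ B) - f A ≤ ∑ a ∈ B, (f (insert a A) - f A) := by
  classical
  induction B using Finset.induction_on with
  | empty => simp
  | @insert b B hb ih =>
    rw [union_insert, sum_insert hb]
    have h1 := marg_aux0 hmono hsub (subset_union_left : A ⊆ A ∪ B) b
    linarith

lemma arith_aux {e d s : ℝ} (he0 : 0 < e) (he1 : e < 1/2) (hd : 0 ≤ d) (hs : 0 ≤ s) :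
    e/4*(1-e)*d ≤ (d+s) - e/20*(d+s) - (e/20*((1-e)*d) + e/20*d) -
      ((1+e/2)*(1-e)*d + e/20*((1+e/2)*(1-e)*(d+s))) := by
  nlinarith [mul_nonneg hd he0.le, mul_nonneg hs he0.le,
    mul_nonneg (mul_nonneg hd he0.le) he0.le,
    mul_nonneg (mul_nonneg hs he0.le) he0.le,
    mul_nonneg (mul_nonneg (mul_nonneg hd he0.le) he0.le) he0.le,
    mul_nonneg (mul_nonneg (mul_nonneg hs he0.le) he0.le) he0.le]

end Aux

/-- Lemma 10 of the paper: the elements `X_{ρ+1}` surviving `ρ` filtering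
iterations during an epoch of the full (sampled) algorithm satisfy
`f_{S⁺}(X_{ρ+1}) ≥ (ε/4)(1-ε)(v* - f(S))`. -/
theorem stmt12 {α : Type*} [Fintype α] [DecidableEq α]
    (f : Finset α → ℝ)
    (hmono : ∀ A B : Finset α, A ⊆ B → f A ≤ f B)
    (hsub : ∀ A B : Finset α, A ⊆ B → ∀ a ∉ B,
      f (insert a B) - f B ≤ f (insert a A) - f A)
    (k r : ℕ) (hk1 : 1 ≤ k) (hkn : k ≤ Fintype.card α) (hr : 1 ≤ r) (hrk : r ∣ k)
    (OPT : ℝ) (hOPTub : ∀ T : Finset α, T.card ≤ k → f T ≤ OPT)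
    (hOPTmem : ∃ T : Finset α, T.card ≤ k ∧ f T = OPT)
    (ε : ℝ) (hε0 : 0 < ε) (hε1 : ε < 1 / 2)
    (ρ : ℕ) (hρ : 1 ≤ ρ) (hr20 : (20 : ℝ) * ρ / ε ≤ r)
    (vstar : ℝ) (hv1 : (1 - ε / 20) * OPT ≤ vstar) (hv2 : vstar ≤ OPT)
    (S Splus : Finset α) (Sc : ℕ → Finset α)
    (hSc0 : Sc 0 = S) (hSc1 : S ⊆ Sc 1)
    (hScchain : ∀ i, 1 ≤ i → i < ρ → Sc i ⊆ Sc (i + 1)) (hSclast : Sc ρ ⊆ Splus)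
    (hS : f S ≤ vstar)
    (hepoch : f Splus - f S ≤ (ε / 20) * (OPT - f S))
    (X : ℕ → Finset α) (hX1 : X 1 = Finset.univ)
    (ha : ∀ i, 1 ≤ i → i ≤ ρ → k / r ≤ (X i).card)
    (v : ℕ → ℝ)
    (hbest : ∀ i, 1 ≤ i → i ≤ ρ →
      |v i - expUnif (X i) (min (k / r) (X i).card) (fun R => marg f (Sc i) R)| ≤
        (ε / (20 * ρ)) * (vstar - f S))
    (hblow : ∀ i, 1 ≤ i → i ≤ ρ → v i < ((1 - ε) / r) * (vstar - f S))
    (va : ℕ → α → ℝ)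
    (hcest : ∀ i, 1 ≤ i → i ≤ ρ → ∀ a ∈ X i,
      |va i a - expUnif (X i) (min (k / r) (X i).card)
          (fun R => f (insert a (Sc i ∪ R.erase a)) - f (Sc i ∪ R.erase a))| ≤
        (ε / (20 * k)) * (1 + ε / 2) * (1 - ε) * (OPT - f S))
    (hc1 : ∀ i, 1 ≤ i → i ≤ ρ → ∀ a ∈ X i,
      (1 + ε / 2) * (1 - ε) * (vstar - f S) / k ≤ va i a → a ∈ X (i + 1))
    (hc2 : ∀ i, 1 ≤ i → i ≤ ρ → X (i + 1) ⊆ X i) :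
    (ε / 4) * (1 - ε) * (vstar - f S) ≤ marg f Splus (X (ρ + 1)) := by
  classical
  obtain ⟨O, hOcard, hOval⟩ := hOPTmem
  -- basic positivity facts
  have hε1' : ε < 1 := by linarith
  have hΔ0 : (0:ℝ) ≤ vstar - f S := by linarith
  have hD0 : (0:ℝ) ≤ OPT - f S := by linarith
  have hs0 : (0:ℝ) ≤ OPT - vstar := by linarith
  have hk0 : (0:ℝ) < k := by exact_mod_cast hk1
  have hr0 : (0:ℝ) < r := by exact_mod_cast hr
  have hρ0 : (0:ℝ) < ρ := by exact_mod_cast hρ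
  obtain ⟨Eb, hEbdef⟩ : ∃ x : ℝ,
      x = (1 - ε) / r * (vstar - f S) + ε / (20 * (ρ:ℝ)) * (vstar - f S) := ⟨_, rfl⟩
  obtain ⟨cb, hcbdef⟩ : ∃ x : ℝ,
      x = (1 + ε / 2) * (1 - ε) * (vstar - f S) / k +
        ε / (20 * (k:ℝ)) * (1 + ε / 2) * (1 - ε) * (OPT - f S) := ⟨_, rfl⟩
  have hcb0 : 0 ≤ cb := by
    have h1 : (0:ℝ) ≤ (1 + ε / 2) * (1 - ε) * (vstar - f S) := by
      apply mul_nonneg (mul_nonneg (by linarith) (by linarith)) hΔ0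
    have h2 : (0:ℝ) ≤ ε / (20 * (k:ℝ)) * (1 + ε / 2) * (1 - ε) * (OPT - f S) := by
      apply mul_nonneg (mul_nonneg (mul_nonneg _ (by linarith)) (by linarith)) hD0
      positivity
    have h3 : (0:ℝ) ≤ (1 + ε / 2) * (1 - ε) * (vstar - f S) / k := div_nonneg h1 hk0.le
    rw [hcbdef]; linarith
  -- the key per-iteration inequality
  have key : ∀ i, 1 ≤ i → i ≤ ρ →
      f (Sc i ∪ (O ∩ X i)) ≤ f (Sc i ∪ (O ∩ X (i + 1))) +
        (Eb + (((O ∩ X i) \ (O ∩ X (i + 1))).card : ℝ) * cb) := by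
    intro i hi1 hi2
    set t := min (k / r) (X i).card with htdef
    have hne : (Finset.powersetCard t (X i)).Nonempty :=
      Finset.powersetCard_nonempty.mpr (min_le_right _ _)
    have hPpos : (0:ℝ) < ((Finset.powersetCard t (X i)).card : ℝ) := by
      exact_mod_cast Finset.card_pos.mpr hne
    set Bi := (O ∩ X i) \ (O ∩ X (i + 1)) with hBidef
    -- pointwise inequality for every sample R
    have hpt : ∀ R ∈ Finset.powersetCard t (X i),
        f (Sc i ∪ (O ∩ X i)) - f (Sc i ∪ (O ∩ X (i + 1))) ≤
          marg f (Sc i) R +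
            ∑ a ∈ Bi, (f (insert a (Sc i ∪ R.erase a)) - f (Sc i ∪ R.erase a)) := by
      intro R hR
      have hRX : R ⊆ X i := (Finset.mem_powersetCard.mp hR).1
      set A := Sc i ∪ R ∪ (O ∩ X (i + 1)) with hAdef
      have h1 : f (Sc i ∪ (O ∩ X i)) ≤ f (A ∪ Bi) := by
        apply hmono
        intro x hx
        rw [Finset.mem_union] at hx
        rcases hx with hx | hx
        · exact Finset.mem_union_left _ (Finset.mem_union_left _ (Finset.mem_union_left _ hx))
        · by_cases hx2 : x ∈ O ∩ X (i + 1)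
          · exact Finset.mem_union_left _ (Finset.mem_union_right _ hx2)
          · exact Finset.mem_union_right _ (Finset.mem_sdiff.mpr ⟨hx, hx2⟩)
      have h2 : f (A ∪ Bi) - f A ≤ ∑ a ∈ Bi, (f (insert a A) - f A) :=
        marg_aux2 hmono hsub Bi A
      have h3 : ∀ a ∈ Bi, f (insert a A) - f A ≤
          f (insert a (Sc i ∪ R.erase a)) - f (Sc i ∪ R.erase a) := by
        intro a _
        apply marg_aux0 hmono hsub
        apply Finset.union_subset
        · exact (Finset.subset_union_left).trans Finset.subset_union_left
        · exact ((Finset.erase_subset _ _).trans Finset.subset_union_right).trans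
            Finset.subset_union_left
      have h4 : f A - f (Sc i ∪ (O ∩ X (i + 1))) ≤ marg f (Sc i) R := by
        have hAeq : A = (Sc i ∪ (O ∩ X (i + 1))) ∪ R := by
          rw [hAdef, Finset.union_right_comm]
        rw [hAeq, marg]
        exact marg_aux1 hmono hsub R (Sc i) (Sc i ∪ (O ∩ X (i + 1)))
          Finset.subset_union_left
      have h5 := Finset.sum_le_sum h3
      linarith
    -- average the pointwise inequality
    have havg : f (Sc i ∪ (O ∩ X i)) - f (Sc i ∪ (O ∩ X (i + 1))) ≤
        expUnif (X i) t (fun R => marg f (Sc i) R) +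
          ∑ a ∈ Bi, expUnif (X i) t
            (fun R => f (insert a (Sc i ∪ R.erase a)) - f (Sc i ∪ R.erase a)) := by
      have hdecomp : expUnif (X i) t (fun R => marg f (Sc i) R) +
          ∑ a ∈ Bi, expUnif (X i) t
            (fun R => f (insert a (Sc i ∪ R.erase a)) - f (Sc i ∪ R.erase a)) =
          (∑ R ∈ Finset.powersetCard t (X i), (marg f (Sc i) R +
            ∑ a ∈ Bi, (f (insert a (Sc i ∪ R.erase a)) - f (Sc i ∪ R.erase a)))) /
            ((Finset.powersetCard t (X i)).card : ℝ) := by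
        simp only [expUnif]
        rw [Finset.sum_add_distrib, add_div]
        congr 1
        rw [← Finset.sum_div, Finset.sum_comm]
      rw [hdecomp, le_div_iff₀ hPpos]
      calc (f (Sc i ∪ (O ∩ X i)) - f (Sc i ∪ (O ∩ X (i + 1)))) *
            ((Finset.powersetCard t (X i)).card : ℝ)
          = ∑ _R ∈ Finset.powersetCard t (X i),
              (f (Sc i ∪ (O ∩ X i)) - f (Sc i ∪ (O ∩ X (i + 1)))) := by
            rw [Finset.sum_const, nsmul_eq_mul, mul_comm]
        _ ≤ _ := Finset.sum_le_sum hpt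
    -- bound the two expectation terms
    have hE : expUnif (X i) t (fun R => marg f (Sc i) R) ≤ Eb := by
      have hb := hbest i hi1 hi2
      have hbl := hblow i hi1 hi2
      rw [abs_le] at hb
      rw [hEbdef]
      have : ε / (20 * (ρ:ℝ)) = ε / (20 * ρ) := rfl
      linarith [hb.1]
    have hg : ∀ a ∈ Bi, expUnif (X i) t
        (fun R => f (insert a (Sc i ∪ R.erase a)) - f (Sc i ∪ R.erase a)) ≤ cb := by
      intro a haBi
      rw [hBidef, Finset.mem_sdiff, Finset.mem_inter] at haBi
      obtain ⟨⟨haO, haXi⟩, haX1⟩ := haBi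
      have hva : va i a < (1 + ε / 2) * (1 - ε) * (vstar - f S) / k := by
        by_contra hcon
        push_neg at hcon
        exact haX1 (Finset.mem_inter.mpr ⟨haO, hc1 i hi1 hi2 a haXi hcon⟩)
      have hce := hcest i hi1 hi2 a haXi
      rw [abs_le] at hce
      rw [hcbdef]
      have h20k : ε / (20 * (k:ℝ)) * (1 + ε / 2) * (1 - ε) * (OPT - f S) =
          ε / (20 * k) * (1 + ε / 2) * (1 - ε) * (OPT - f S) := rfl
      linarith [hce.1]
    have hsumg := Finset.sum_le_sum hg
    rw [Finset.sum_const, nsmul_eq_mul] at hsumg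
    linarith
  -- telescoping over the iterations of the epoch
  have chain : ∀ j, 1 ≤ j → j ≤ ρ →
      f (Sc 1 ∪ (O ∩ X 1)) ≤ f (Sc j ∪ (O ∩ X (j + 1))) +
        ∑ i ∈ Finset.Icc 1 j, (Eb + (((O ∩ X i) \ (O ∩ X (i + 1))).card : ℝ) * cb) := by
    intro j hj1
    induction j, hj1 using Nat.le_induction with
    | base =>
      intro h1ρ
      have := key 1 le_rfl h1ρ
      simpa using this
    | succ j hj ih =>
      intro hjρ
      have hjρ' : j ≤ ρ := by omega
      have hjρ'' : j < ρ := by omega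
      have h1 := ih hjρ'
      have h2 : f (Sc j ∪ (O ∩ X (j + 1))) ≤ f (Sc (j + 1) ∪ (O ∩ X (j + 1))) :=
        hmono _ _ (Finset.union_subset_union_left (hScchain j hj hjρ''))
      have h3 := key (j + 1) (by omega) hjρ
      rw [Finset.sum_Icc_succ_top (by omega : 1 ≤ j + 1)]
      linarith
  have hmain := chain ρ hρ le_rfl
  -- the left end of the chain is at least OPT
  have hOPTle : OPT ≤ f (Sc 1 ∪ (O ∩ X 1)) := by
    rw [hX1, Finset.inter_univ, ← hOval]
    exact hmono _ _ Finset.subset_union_right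
  -- the right end of the chain
  have hlast : f (Sc ρ ∪ (O ∩ X (ρ + 1))) ≤ f (Splus ∪ X (ρ + 1)) :=
    hmono _ _ (Finset.union_subset_union hSclast Finset.inter_subset_right)
  -- bound the sum of per-iteration losses
  have hsplit : ∑ i ∈ Finset.Icc 1 ρ, (Eb + (((O ∩ X i) \ (O ∩ X (i + 1))).card : ℝ) * cb) =
      (ρ:ℝ) * Eb + (∑ i ∈ Finset.Icc 1 ρ, (((O ∩ X i) \ (O ∩ X (i + 1))).card : ℝ)) * cb := by
    rw [Finset.sum_add_distrib, Finset.sum_const, nsmul_eq_mul, Finset.sum_mul, Nat.card_Icc]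
    norm_num
  have hcards : ∑ i ∈ Finset.Icc 1 ρ, (((O ∩ X i) \ (O ∩ X (i + 1))).card : ℝ) ≤ (k:ℝ) := by
    have hsub' : ∀ i, 1 ≤ i → i ≤ ρ → (O ∩ X (i + 1)) ⊆ (O ∩ X i) := fun i h1 h2 =>
      Finset.inter_subset_inter (Finset.Subset.refl O) (hc2 i h1 h2)
    have hrw : ∀ i ∈ Finset.Icc 1 ρ, (((O ∩ X i) \ (O ∩ X (i + 1))).card : ℝ) =
        ((O ∩ X i).card : ℝ) - ((O ∩ X (i + 1)).card : ℝ) := by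
      intro i hi
      rw [Finset.mem_Icc] at hi
      rw [Finset.card_sdiff_of_subset (hsub' i hi.1 hi.2)]
      have := Finset.card_le_card (hsub' i hi.1 hi.2)
      push_cast [Nat.cast_sub this]
      ring
    rw [Finset.sum_congr rfl hrw]
    have htel : ∑ i ∈ Finset.Icc 1 ρ,
        (((O ∩ X i).card : ℝ) - ((O ∩ X (i + 1)).card : ℝ)) =
        ((O ∩ X 1).card : ℝ) - ((O ∩ X (ρ + 1)).card : ℝ) := by
      rw [← Finset.Ico_add_one_right_eq_Icc, Finset.sum_Ico_eq_sum_range]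
      have h := Finset.sum_range_sub' (fun m => ((O ∩ X (m + 1)).card : ℝ)) ρ
      have h2 : ∀ n, n = ρ → ∑ j ∈ Finset.range n,
          (((O ∩ X (1 + j)).card : ℝ) - ((O ∩ X (1 + j + 1)).card : ℝ)) =
          ((O ∩ X 1).card : ℝ) - ((O ∩ X (ρ + 1)).card : ℝ) := by
        intro n hn
        subst hn
        have h3 : ∑ j ∈ Finset.range n,
            (((O ∩ X (1 + j)).card : ℝ) - ((O ∩ X (1 + j + 1)).card : ℝ)) =
            ∑ j ∈ Finset.range n,
            (((O ∩ X (j + 1)).card : ℝ) - ((O ∩ X (j + 1 + 1)).card : ℝ)) := by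
          apply Finset.sum_congr rfl
          intro j _
          rw [Nat.add_comm 1 j]
        rw [h3]
        simpa using h
      exact h2 _ (by omega)
    rw [htel]
    have h1 : ((O ∩ X 1).card : ℝ) ≤ (k:ℝ) := by
      rw [hX1, Finset.inter_univ]; exact_mod_cast hOcard
    have h2 : (0:ℝ) ≤ ((O ∩ X (ρ + 1)).card : ℝ) := by positivity
    linarith
  -- assemble
  have hfinal : OPT ≤ f (Splus ∪ X (ρ + 1)) + (ρ:ℝ) * Eb + (k:ℝ) * cb := by
    have h1 : (∑ i ∈ Finset.Icc 1 ρ, (((O ∩ X i) \ (O ∩ X (i + 1))).card : ℝ)) * cb ≤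
        (k:ℝ) * cb := mul_le_mul_of_nonneg_right hcards hcb0
    rw [hsplit] at hmain
    linarith
  -- arithmetic conclusion
  have hEbρ : (ρ:ℝ) * Eb ≤ ε / 20 * ((1 - ε) * (vstar - f S)) + ε / 20 * (vstar - f S) := by
    have h20 : 20 * (ρ:ℝ) ≤ ε * r := by
      rw [div_le_iff₀ hε0] at hr20; linarith
    have hI : (ρ:ℝ) * (ε / (20 * (ρ:ℝ)) * (vstar - f S)) = ε / 20 * (vstar - f S) := by
      field_simp
    have hΔε : 0 ≤ (1 - ε) * (vstar - f S) := mul_nonneg (by linarith) hΔ0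
    have hrρ : (ρ:ℝ) / r ≤ ε / 20 := by
      rw [div_le_div_iff₀ hr0 (by norm_num : (0:ℝ) < 20)]
      linarith
    have hII : (ρ:ℝ) * ((1 - ε) / r * (vstar - f S)) ≤ ε / 20 * ((1 - ε) * (vstar - f S)) := by
      calc (ρ:ℝ) * ((1 - ε) / r * (vstar - f S))
          = (ρ:ℝ) / r * ((1 - ε) * (vstar - f S)) := by ring
        _ ≤ ε / 20 * ((1 - ε) * (vstar - f S)) := mul_le_mul_of_nonneg_right hrρ hΔε
    rw [hEbdef]
    rw [mul_add]
    linarith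
  have hkcb : (k:ℝ) * cb = (1 + ε / 2) * (1 - ε) * (vstar - f S) +
      ε / 20 * ((1 + ε / 2) * (1 - ε) * (OPT - f S)) := by
    rw [hcbdef]
    field_simp
  rw [marg]
  -- final arithmetic: with d = vstar - f S ≥ 0 and s = OPT - vstar ≥ 0
  have harith := arith_aux hε0 hε1 hΔ0 hs0
  have hsplit2 : OPT - f S = (vstar - f S) + (OPT - vstar) := by ring
  rw [← hsplit2] at harith
  have h9 : OPT - f S - ε / 20 * (OPT - f S) - (ρ:ℝ) * Eb - (k:ℝ) * cb ≤
      f (Splus ∪ X (ρ + 1)) - f Splus := by linarith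
  have h10 : (ρ:ℝ) * Eb + (k:ℝ) * cb ≤
      (ε / 20 * ((1 - ε) * (vstar - f S)) + ε / 20 * (vstar - f S)) +
      ((1 + ε / 2) * (1 - ε) * (vstar - f S) + ε / 20 * ((1 + ε / 2) * (1 - ε) * (OPT - f S))) := by
    linarith
  linarith
end
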